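/- arXiv:1610.07088 — 7 statements merged into one kernel-verified Lean document; each statement's English description precedes it below -/
import Mathlib

section
/- Let Ω ⊆ ℝ^m be a domain, let w be an everywhere positive continuous function on Ω, let W be an admissible function for w on Ω × Ω, and let f : Ω → ℝ^n be continuously differentiable. If either the w-Bloch seminorm ‖f‖_w^b = sup_{ζ∈Ω} w(ζ)‖Df(ζ)‖ or the W-Lipschitz seminorm ‖f‖_W^l = sup_{ζ,η∈Ω, ζ≠η} W(ζ,η)|f(ζ)−f(η)|/|ζ−η| is finite, then both are finite and they are equal. -/
open Set Filter

/-- A piecewise smooth curve in `Ω` joining `ζ` to `η`, parameterized on `[0,1]`: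
a continuous curve which is smooth on each subinterval of some finite partition of `[0,1]`. -/
structure PiecewiseSmoothCurve {m : ℕ} (Ω : Set (EuclideanSpace ℝ (Fin m)))
    (ζ η : EuclideanSpace ℝ (Fin m)) where
  toFun : ℝ → EuclideanSpace ℝ (Fin m)
  continuousOn : ContinuousOn toFun (Icc 0 1)
  num : ℕ
  part : Fin (num + 1) → ℝ
  mono : Monotone part
  part_zero : part 0 = 0
  part_last : part (Fin.last num) = 1
  smoothOn : ∀ i : Fin num, ContDiffOn ℝ (⊤ : ℕ∞) toFun (Icc (part i.castSucc) (part i.succ))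
  maps_into : ∀ t ∈ Icc (0:ℝ) 1, toFun t ∈ Ω
  source : toFun 0 = ζ
  target : toFun 1 = η

/-- The `w`-length `∫_γ |dω| / w(ω)` of a piecewise smooth curve `γ`. -/
noncomputable def PiecewiseSmoothCurve.wLength {m : ℕ} {Ω : Set (EuclideanSpace ℝ (Fin m))}
    {ζ η : EuclideanSpace ℝ (Fin m)} (w : EuclideanSpace ℝ (Fin m) → ℝ)
    (γ : PiecewiseSmoothCurve Ω ζ η) : ℝ :=
  ∫ t in (0:ℝ)..1, ‖derivWithin γ.toFun (Icc 0 1) t‖ / w (γ.toFun t)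

/-- The `w`-distance `d_w(ζ,η)`: the infimum of `w`-lengths of piecewise smooth curves
in `Ω` joining `ζ` and `η`. -/
noncomputable def wDist {m : ℕ} (Ω : Set (EuclideanSpace ℝ (Fin m)))
    (w : EuclideanSpace ℝ (Fin m) → ℝ) (ζ η : EuclideanSpace ℝ (Fin m)) : ℝ :=
  sInf {L : ℝ | ∃ γ : PiecewiseSmoothCurve Ω ζ η, L = γ.wLength w}

open MeasureTheory intervalIntegral

private lemma piece_bound {m n : ℕ} {Ω : Set (EuclideanSpace ℝ (Fin m))} (hΩ : IsOpen Ω)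
    {w : EuclideanSpace ℝ (Fin m) → ℝ} (hw_pos : ∀ ζ ∈ Ω, 0 < w ζ)
    (hw_cont : ContinuousOn w Ω)
    {f : EuclideanSpace ℝ (Fin m) → EuclideanSpace ℝ (Fin n)} (hf : ContDiffOn ℝ 1 f Ω)
    {B : ℝ} (hB : ∀ x ∈ Ω, w x * ‖fderiv ℝ f x‖ ≤ B)
    {ζ η : EuclideanSpace ℝ (Fin m)} (γ : PiecewiseSmoothCurve Ω ζ η) (i : Fin γ.num) :
    ‖f (γ.toFun (γ.part i.succ)) - f (γ.toFun (γ.part i.castSucc))‖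
      ≤ B * ∫ t in (γ.part i.castSucc)..(γ.part i.succ),
          ‖derivWithin γ.toFun (Icc 0 1) t‖ / w (γ.toFun t) ∧
    IntervalIntegrable (fun t => ‖derivWithin γ.toFun (Icc 0 1) t‖ / w (γ.toFun t))
      volume (γ.part i.castSucc) (γ.part i.succ) := by
  set a := γ.part i.castSucc with ha_def
  set b := γ.part i.succ with hb_def
  have hab : a ≤ b := γ.mono i.castSucc_lt_succ.le
  have ha0 : 0 ≤ a := γ.part_zero ▸ γ.mono (Fin.zero_le _)
  have hb1 : b ≤ 1 := γ.part_last ▸ γ.mono (Fin.le_last _)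
  rcases eq_or_lt_of_le hab with heq | hlt
  · exact ⟨by rw [heq]; simp, heq ▸ IntervalIntegrable.refl⟩
  have hsm := γ.smoothOn i
  have hU : UniqueDiffOn ℝ (Icc a b) := uniqueDiffOn_Icc hlt
  set v : ℝ → EuclideanSpace ℝ (Fin m) := derivWithin γ.toFun (Icc a b) with hv_def
  have hγd : ∀ t ∈ Icc a b, HasDerivWithinAt γ.toFun (v t) (Icc a b) t := fun t ht =>
    ((hsm.differentiableOn (by simp)) t ht).hasDerivWithinAt
  have hγc : ContinuousOn γ.toFun (Icc a b) := hsm.continuousOn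
  have hmem : ∀ t ∈ Icc a b, γ.toFun t ∈ Ω := fun t ht =>
    γ.maps_into t ⟨le_trans ha0 ht.1, le_trans ht.2 hb1⟩
  have hfd : ∀ t ∈ Icc a b, HasFDerivAt f (fderiv ℝ f (γ.toFun t)) (γ.toFun t) := fun t ht =>
    ((hf.contDiffAt (hΩ.mem_nhds (hmem t ht))).differentiableAt one_ne_zero).hasFDerivAt
  set g' : ℝ → EuclideanSpace ℝ (Fin n) := fun t => fderiv ℝ f (γ.toFun t) (v t) with hg'_def
  have hg : ∀ t ∈ Icc a b, HasDerivWithinAt (fun s => f (γ.toFun s)) (g' t) (Icc a b) t :=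
    fun t ht => (hfd t ht).comp_hasDerivWithinAt t (hγd t ht)
  have hvc : ContinuousOn v (Icc a b) := hsm.continuousOn_derivWithin hU (by simp)
  have hDc : ContinuousOn (fun t => fderiv ℝ f (γ.toFun t)) (Icc a b) :=
    (hf.continuousOn_fderiv_of_isOpen hΩ le_rfl).comp hγc hmem
  have hg'c : ContinuousOn g' (Icc a b) := hDc.clm_apply hvc
  have hg'i : IntervalIntegrable g' volume a b := hg'c.intervalIntegrable_of_Icc hab
  have hFTC : ∫ t in a..b, g' t = f (γ.toFun b) - f (γ.toFun a) :=
    integral_eq_sub_of_hasDeriv_right_of_le hab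
      (hf.continuousOn.comp hγc hmem)
      (fun t ht => ((hg t (Ioo_subset_Icc_self ht)).hasDerivAt
        (Icc_mem_nhds ht.1 ht.2)).hasDerivWithinAt) hg'i
  set φ : ℝ → ℝ := fun t => B * (‖v t‖ / w (γ.toFun t)) with hφ_def
  have hwγ : ∀ t ∈ Icc a b, 0 < w (γ.toFun t) := fun t ht => hw_pos _ (hmem t ht)
  have hφle : ∀ t ∈ Icc a b, ‖g' t‖ ≤ φ t := by
    intro t ht
    have h1 : ‖g' t‖ ≤ ‖fderiv ℝ f (γ.toFun t)‖ * ‖v t‖ :=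
      (fderiv ℝ f (γ.toFun t)).le_opNorm (v t)
    have h2 : ‖fderiv ℝ f (γ.toFun t)‖ ≤ B / w (γ.toFun t) := by
      rw [le_div_iff₀ (hwγ t ht)]
      have := hB _ (hmem t ht)
      linarith [this]
    calc ‖g' t‖ ≤ ‖fderiv ℝ f (γ.toFun t)‖ * ‖v t‖ := h1
      _ ≤ (B / w (γ.toFun t)) * ‖v t‖ := by
          exact mul_le_mul_of_nonneg_right h2 (norm_nonneg _)
      _ = φ t := by rw [hφ_def]; ring
  have hφc : ContinuousOn φ (Icc a b) :=
    continuousOn_const.mul (hvc.norm.div (hw_cont.comp hγc hmem)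
      (fun t ht => (hwγ t ht).ne'))
  have hφi : IntervalIntegrable φ volume a b := hφc.intervalIntegrable_of_Icc hab
  -- a.e. equality with the wLength integrand (times B)
  have hne : ∀ᵐ (t : ℝ), t ≠ b := by
    have : (volume : Measure ℝ) {b} = 0 := measure_singleton b
    rw [ae_iff]
    simpa using this
  have hae_eq : ∀ᵐ t ∂(volume : Measure ℝ), t ∈ Set.uIoc a b →
      ‖derivWithin γ.toFun (Icc 0 1) t‖ / w (γ.toFun t) = ‖v t‖ / w (γ.toFun t) := by
    filter_upwards [hne] with t htb ht
    rw [uIoc_of_le hab] at ht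
    have hIoo : t ∈ Ioo a b := ⟨ht.1, lt_of_le_of_ne ht.2 htb⟩
    have h01 : Icc (0:ℝ) 1 ∈ nhds t :=
      Icc_mem_nhds (lt_of_le_of_lt ha0 hIoo.1) (lt_of_lt_of_le hIoo.2 hb1)
    have hab' : Icc a b ∈ nhds t := Icc_mem_nhds hIoo.1 hIoo.2
    rw [hv_def, derivWithin_of_mem_nhds h01, derivWithin_of_mem_nhds hab']
  have hInt : IntervalIntegrable (fun t => ‖derivWithin γ.toFun (Icc 0 1) t‖ / w (γ.toFun t))
      volume a b := by
    refine ((hvc.norm.div (hw_cont.comp hγc hmem)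
      (fun t ht => (hwγ t ht).ne')).intervalIntegrable_of_Icc hab).congr_ae ?_
    rw [Filter.EventuallyEq, ae_restrict_iff' measurableSet_uIoc]
    filter_upwards [hae_eq] with t h ht
    exact (h ht).symm
  refine ⟨?_, hInt⟩
  have hcongr : ∫ t in a..b, ‖derivWithin γ.toFun (Icc 0 1) t‖ / w (γ.toFun t)
      = ∫ t in a..b, ‖v t‖ / w (γ.toFun t) := integral_congr_ae hae_eq
  calc ‖f (γ.toFun b) - f (γ.toFun a)‖ = ‖∫ t in a..b, g' t‖ := by rw [hFTC]
    _ ≤ ∫ t in a..b, ‖g' t‖ := norm_integral_le_integral_norm hab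
    _ ≤ ∫ t in a..b, φ t := integral_mono_on hab hg'i.norm hφi hφle
    _ = B * ∫ t in a..b, ‖v t‖ / w (γ.toFun t) := by
        rw [hφ_def, intervalIntegral.integral_const_mul]
    _ = B * ∫ t in a..b, ‖derivWithin γ.toFun (Icc 0 1) t‖ / w (γ.toFun t) := by
        rw [hcongr]

lemma curve_bound {m n : ℕ} {Ω : Set (EuclideanSpace ℝ (Fin m))} (hΩ : IsOpen Ω)
    {w : EuclideanSpace ℝ (Fin m) → ℝ} (hw_pos : ∀ ζ ∈ Ω, 0 < w ζ)
    (hw_cont : ContinuousOn w Ω)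
    {f : EuclideanSpace ℝ (Fin m) → EuclideanSpace ℝ (Fin n)} (hf : ContDiffOn ℝ 1 f Ω)
    {B : ℝ} (hB : ∀ x ∈ Ω, w x * ‖fderiv ℝ f x‖ ≤ B)
    {ζ η : EuclideanSpace ℝ (Fin m)} (γ : PiecewiseSmoothCurve Ω ζ η) :
    ‖f η - f ζ‖ ≤ B * γ.wLength w := by
  set h : ℝ → ℝ := fun t => ‖derivWithin γ.toFun (Icc 0 1) t‖ / w (γ.toFun t) with hh_def
  set q : ℕ → ℝ := fun k => γ.part ⟨min k γ.num, by omega⟩ with hq_def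
  have hq0 : q 0 = 0 := by
    rw [hq_def]
    simpa using γ.part_zero
  have hqN : q γ.num = 1 := by
    rw [hq_def]
    simp only [min_self]
    exact γ.part_last
  have hpiece : ∀ k < γ.num,
      ‖f (γ.toFun (q (k+1))) - f (γ.toFun (q k))‖ ≤ B * ∫ t in (q k)..(q (k+1)), h t ∧
      IntervalIntegrable h volume (q k) (q (k+1)) := by
    intro k hk
    have h1 : q k = γ.part (Fin.castSucc ⟨k, hk⟩) := by
      rw [hq_def]; congr 1; simp [Fin.castSucc_mk, Fin.ext_iff, min_eq_left hk.le]
    have h2 : q (k+1) = γ.part (Fin.succ ⟨k, hk⟩) := by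
      rw [hq_def]; congr 1; simp [Fin.succ_mk, Fin.ext_iff, min_eq_left (Nat.succ_le_of_lt hk)]
    rw [h1, h2]
    exact piece_bound hΩ hw_pos hw_cont hf hB γ ⟨k, hk⟩
  have hsum : ∑ k ∈ Finset.range γ.num, ∫ t in (q k)..(q (k+1)), h t
      = ∫ t in (q 0)..(q γ.num), h t :=
    intervalIntegral.sum_integral_adjacent_intervals (fun k hk => (hpiece k hk).2)
  calc ‖f η - f ζ‖ = dist (f (γ.toFun (q 0))) (f (γ.toFun (q γ.num))) := by
        rw [hq0, hqN, γ.source, γ.target, dist_eq_norm, norm_sub_rev]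
    _ ≤ ∑ k ∈ Finset.range γ.num, dist (f (γ.toFun (q k))) (f (γ.toFun (q (k+1)))) :=
        dist_le_range_sum_dist (fun k => f (γ.toFun (q k))) γ.num
    _ ≤ ∑ k ∈ Finset.range γ.num, B * ∫ t in (q k)..(q (k+1)), h t := by
        refine Finset.sum_le_sum fun k hk => ?_
        rw [dist_eq_norm, norm_sub_rev]
        exact (hpiece k (Finset.mem_range.mp hk)).1
    _ = B * ∑ k ∈ Finset.range γ.num, ∫ t in (q k)..(q (k+1)), h t := by
        rw [Finset.mul_sum]
    _ = B * γ.wLength w := by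
        rw [hsum, hq0, hqN, PiecewiseSmoothCurve.wLength]

lemma glue_closed {α : Type*} [TopologicalSpace α] {X : Type*} [TopologicalSpace X]
    {f : α → X} {s t : Set α} (hs : IsClosed s) (ht : IsClosed t)
    (hfs : ContinuousOn f s) (hft : ContinuousOn f t) : ContinuousOn f (s ∪ t) := by
  intro x hx
  have hcs : ContinuousWithinAt f s x := by
    by_cases h : x ∈ s
    · exact hfs x h
    · exact continuousWithinAt_of_notMem_closure (by rwa [hs.closure_eq])
  have hct : ContinuousWithinAt f t x := by
    by_cases h : x ∈ t
    · exact hft x h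
    · exact continuousWithinAt_of_notMem_closure (by rwa [ht.closure_eq])
  exact hcs.union hct

/-- Construct a piecewise linear curve from a chain of points whose consecutive
segments lie in `Ω`. -/
lemma chain_curve {m : ℕ} {Ω : Set (EuclideanSpace ℝ (Fin m))}
    {ζ η : EuclideanSpace ℝ (Fin m)} (k : ℕ) (hk : 1 ≤ k) (p : ℕ → EuclideanSpace ℝ (Fin m))
    (hp0 : p 0 = ζ) (hpk : p k = η)
    (hseg : ∀ i < k, segment ℝ (p i) (p (i+1)) ⊆ Ω) :
    Nonempty (PiecewiseSmoothCurve Ω ζ η) := by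
  have hkpos : (0:ℝ) < k := by exact_mod_cast hk
  set c : ℕ → ℝ → EuclideanSpace ℝ (Fin m) := fun i s => p i + s • (p (i+1) - p i) with hc
  set idx : ℝ → ℕ := fun t => min ⌊t * k⌋₊ (k - 1) with hidx
  set γ : ℝ → EuclideanSpace ℝ (Fin m) := fun t => c (idx t) (t * k - idx t) with hγ
  -- on each piece, γ agrees with the affine map
  have hpiece : ∀ i < k, ∀ t ∈ Icc ((i:ℝ)/k) ((i+1:ℕ)/k), γ t = c i (t * k - i) := by
    intro i hi t ht
    have h1 : (i:ℝ) ≤ t * k := by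
      have := ht.1
      rw [div_le_iff₀ hkpos] at this; exact this
    have h2 : t * k ≤ (i:ℝ) + 1 := by
      have := ht.2
      rw [le_div_iff₀ hkpos] at this
      push_cast at this
      linarith
    rcases lt_or_eq_of_le h2 with hlt | heqc
    · have hfl : ⌊t * k⌋₊ = i := by
        rw [Nat.floor_eq_iff (le_trans (by positivity) h1)]
        constructor <;> push_cast <;> [exact h1; exact hlt]
      have hidxt : idx t = i := by
        rw [hidx]; simp only [hfl]; omega
      rw [hγ]; simp only [hidxt]
    · -- t * k = i + 1
      have hcast : t * k = ((i+1:ℕ):ℝ) := by push_cast; linarith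
      have hfl : ⌊t * k⌋₊ = i + 1 := by rw [hcast, Nat.floor_natCast]
      by_cases hik : i + 1 ≤ k - 1
      · have hidxt : idx t = i + 1 := by rw [hidx]; simp only [hfl]; omega
        rw [hγ]; simp only [hidxt, hc]
        have e1 : t * (k:ℝ) - ((i+1:ℕ):ℝ) = 0 := by rw [hcast]; ring
        have e2 : t * (k:ℝ) - (i:ℝ) = 1 := by rw [hcast]; push_cast; ring
        rw [e1, e2]
        simp
      · have hieq : i = k - 1 := by omega
        have hidxt : idx t = i := by rw [hidx]; simp only [hfl]; omega
        rw [hγ]; simp only [hidxt]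
  -- continue
  have hsmooth : ∀ i < k, ContDiffOn ℝ (⊤ : ℕ∞) γ (Icc ((i:ℝ)/k) ((i+1:ℕ)/k)) := by
    intro i hi
    have haff : ContDiff ℝ (⊤ : ℕ∞) (fun t : ℝ => c i (t * k - i)) := by
      rw [hc]
      exact contDiff_const.add (((contDiff_id.mul contDiff_const).sub contDiff_const).smul
        contDiff_const)
    exact haff.contDiffOn.congr (fun t ht => hpiece i hi t ht)
  have hmaps : ∀ t ∈ Icc (0:ℝ) 1, γ t ∈ Ω := by
    intro t ht
    have htk0 : 0 ≤ t * k := mul_nonneg ht.1 hkpos.le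
    have hjk : idx t < k := by simp only [hidx]; omega
    have hs0 : (0:ℝ) ≤ t * k - idx t := by
      have h1 : ((idx t : ℕ) : ℝ) ≤ ⌊t * k⌋₊ := by
        exact_mod_cast (min_le_left _ _ : idx t ≤ ⌊t * k⌋₊)
      linarith [Nat.floor_le htk0]
    have hs1 : t * k - idx t ≤ 1 := by
      by_cases hfl : ⌊t * k⌋₊ ≤ k - 1
      · have hidxt : idx t = ⌊t * k⌋₊ := by simp only [hidx]; omega
        have := Nat.lt_floor_add_one (t * k)
        rw [hidxt]
        push_cast
        linarith
      · have hidxt : idx t = k - 1 := by simp only [hidx]; omega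
        have hcast : ((k - 1 : ℕ) : ℝ) = (k : ℝ) - 1 := by
          push_cast [Nat.cast_sub hk]; ring
        have : t * k ≤ k := by
          calc t * k ≤ 1 * k := by nlinarith [ht.2]
            _ = k := one_mul _
        rw [hidxt, hcast]
        linarith
    have hmem : γ t ∈ segment ℝ (p (idx t)) (p (idx t + 1)) := by
      rw [segment_eq_image']
      exact ⟨t * k - idx t, ⟨hs0, hs1⟩, rfl⟩
    exact hseg (idx t) hjk hmem
  have hcont : ∀ N ≤ k, ContinuousOn γ (Icc 0 ((N:ℝ)/k)) := by
    intro N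
    induction N with
    | zero =>
      intro _
      simp only [Nat.cast_zero, zero_div, Icc_self]
      exact continuousOn_singleton _ _
    | succ N ih =>
      intro hNk
      have hN : N < k := hNk
      have h1 : (0:ℝ) ≤ (N:ℝ)/k := by positivity
      have h2 : (N:ℝ)/k ≤ ((N+1:ℕ):ℝ)/k := by
        rw [div_le_div_iff_of_pos_right hkpos]
        push_cast; linarith
      rw [← Icc_union_Icc_eq_Icc h1 h2]
      exact glue_closed isClosed_Icc isClosed_Icc (ih hN.le) (hsmooth N hN).continuousOn
  refine ⟨⟨γ, ?_, k, fun j => (j:ℝ)/k, ?_, ?_, ?_, ?_, hmaps, ?_, ?_⟩⟩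
  · have := hcont k le_rfl
    rwa [div_self hkpos.ne'] at this
  · intro a b hab
    rw [div_le_div_iff_of_pos_right hkpos]
    exact_mod_cast hab
  · simp
  · simp only [Fin.val_last]
    exact div_self hkpos.ne'
  · intro i
    have := hsmooth i i.isLt
    simpa using this
  · -- source : γ 0 = ζ
    have h0 : (0:ℝ) ∈ Icc (((0:ℕ):ℝ)/k) (((0+1:ℕ):ℝ)/k) := by
      constructor
      · simp
      · positivity
    have heq := hpiece 0 hk 0 h0
    rw [heq, hc]
    simp [hp0]
  · -- target : γ 1 = η
    have hk1 : k - 1 < k := by omega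
    have hcast : ((k-1:ℕ):ℝ) = (k:ℝ) - 1 := by
      rw [Nat.cast_sub hk]; simp
    have hmem : (1:ℝ) ∈ Icc (((k-1:ℕ):ℝ)/k) (((k-1+1:ℕ):ℝ)/k) := by
      constructor
      · rw [div_le_one hkpos, hcast]; linarith
      · rw [Nat.sub_add_cancel hk, le_div_iff₀ hkpos]; linarith
    have heq := hpiece (k-1) hk1 1 hmem
    have e : 1 * (k:ℝ) - ((k-1:ℕ):ℝ) = 1 := by rw [hcast]; ring
    rw [heq, e, hc]
    simp [Nat.sub_add_cancel hk, hpk]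

lemma exists_curve {m : ℕ} {Ω : Set (EuclideanSpace ℝ (Fin m))} (hΩ_open : IsOpen Ω)
    (hΩ_conn : IsConnected Ω) {ζ η : EuclideanSpace ℝ (Fin m)} (hζ : ζ ∈ Ω) (hη : η ∈ Ω) :
    Nonempty (PiecewiseSmoothCurve Ω ζ η) := by
  set R : EuclideanSpace ℝ (Fin m) → Prop := fun x => ∃ k, 1 ≤ k ∧ ∃ p : ℕ → EuclideanSpace ℝ (Fin m),
    p 0 = ζ ∧ p k = x ∧ ∀ i < k, segment ℝ (p i) (p (i+1)) ⊆ Ω with hR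
  have hext : ∀ x y, R x → segment ℝ x y ⊆ Ω → R y := by
    rintro x y ⟨k, hk, p, hp0, hpk, hseg⟩ hxy
    refine ⟨k+1, by omega, fun i => if i ≤ k then p i else y, by simp [hp0], by simp, ?_⟩
    intro i hi
    rcases lt_or_eq_of_le (Nat.lt_succ_iff.mp hi) with h | h
    · simpa [Nat.le_of_lt h, Nat.succ_le_of_lt h] using hseg i h
    · subst h
      simpa [hpk] using hxy
  have hRζ : R ζ := by
    refine ⟨1, le_rfl, fun _ => ζ, rfl, rfl, ?_⟩
    intro i _
    rw [segment_same]
    exact singleton_subset_iff.mpr hζ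
  set u : Set (EuclideanSpace ℝ (Fin m)) :=
    ⋃ x, ⋃ (_ : R x), ⋃ r, ⋃ (_ : 0 < r ∧ Metric.ball x r ⊆ Ω), Metric.ball x r with hu_def
  set v : Set (EuclideanSpace ℝ (Fin m)) :=
    ⋃ x, ⋃ (_ : ¬ R x), ⋃ r, ⋃ (_ : 0 < r ∧ Metric.ball x r ⊆ Ω), Metric.ball x r with hv_def
  have hu_open : IsOpen u := isOpen_iUnion fun _ => isOpen_iUnion fun _ =>
    isOpen_iUnion fun _ => isOpen_iUnion fun _ => Metric.isOpen_ball
  have hv_open : IsOpen v := isOpen_iUnion fun _ => isOpen_iUnion fun _ =>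
    isOpen_iUnion fun _ => isOpen_iUnion fun _ => Metric.isOpen_ball
  have hukey : ∀ y ∈ u, R y := by
    intro y hy
    simp only [hu_def, mem_iUnion] at hy
    obtain ⟨x, hRx, r, ⟨hr, hball⟩, hyb⟩ := hy
    exact hext x y hRx (fun z hz =>
      hball ((convex_ball x r).segment_subset (Metric.mem_ball_self hr) hyb hz))
  have hvkey : ∀ y ∈ v, ¬ R y := by
    intro y hy hRy
    simp only [hv_def, mem_iUnion] at hy
    obtain ⟨x, hRx, r, ⟨hr, hball⟩, hyb⟩ := hy
    exact hRx (hext y x hRy (fun z hz =>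
      hball ((convex_ball x r).segment_subset hyb (Metric.mem_ball_self hr) hz)))
  have hcover : Ω ⊆ u ∪ v := by
    intro x hx
    obtain ⟨r, hr, hball⟩ := Metric.isOpen_iff.mp hΩ_open x hx
    by_cases hRx : R x
    · left
      simp only [hu_def, mem_iUnion]
      exact ⟨x, hRx, r, ⟨hr, hball⟩, Metric.mem_ball_self hr⟩
    · right
      simp only [hv_def, mem_iUnion]
      exact ⟨x, hRx, r, ⟨hr, hball⟩, Metric.mem_ball_self hr⟩
  have hRη : R η := by
    by_contra hnR
    have hune : (Ω ∩ u).Nonempty := by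
      obtain ⟨r, hr, hball⟩ := Metric.isOpen_iff.mp hΩ_open ζ hζ
      refine ⟨ζ, hζ, ?_⟩
      simp only [hu_def, mem_iUnion]
      exact ⟨ζ, hRζ, r, ⟨hr, hball⟩, Metric.mem_ball_self hr⟩
    have hvne : (Ω ∩ v).Nonempty := by
      obtain ⟨r, hr, hball⟩ := Metric.isOpen_iff.mp hΩ_open η hη
      refine ⟨η, hη, ?_⟩
      simp only [hv_def, mem_iUnion]
      exact ⟨η, hnR, r, ⟨hr, hball⟩, Metric.mem_ball_self hr⟩
    obtain ⟨z, _, hzu, hzv⟩ := hΩ_conn.isPreconnected u v hu_open hv_open hcover hune hvne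
    exact hvkey z hzv (hukey z hzu)
  obtain ⟨k, hk, p, hp0, hpk, hseg⟩ := hRη
  exact chain_curve k hk p hp0 hpk hseg

lemma lip_le_bloch {m n : ℕ} {Ω : Set (EuclideanSpace ℝ (Fin m))}
    (hΩ_open : IsOpen Ω) (hΩ_conn : IsConnected Ω)
    {w : EuclideanSpace ℝ (Fin m) → ℝ} (hw_pos : ∀ ζ ∈ Ω, 0 < w ζ)
    (hw_cont : ContinuousOn w Ω)
    {W : EuclideanSpace ℝ (Fin m) → EuclideanSpace ℝ (Fin m) → ℝ}
    (hW_pos : ∀ ζ ∈ Ω, ∀ η ∈ Ω, 0 < W ζ η)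
    (hW4 : ∀ ζ ∈ Ω, ∀ η ∈ Ω, wDist Ω w ζ η * W ζ η ≤ ‖ζ - η‖)
    {f : EuclideanSpace ℝ (Fin m) → EuclideanSpace ℝ (Fin n)} (hf : ContDiffOn ℝ 1 f Ω) :
    (⨆ ζ ∈ Ω, ⨆ η ∈ Ω, ⨆ _ : ζ ≠ η, ENNReal.ofReal (W ζ η * ‖f ζ - f η‖ / ‖ζ - η‖))
      ≤ ⨆ ζ ∈ Ω, ENNReal.ofReal (w ζ * ‖fderiv ℝ f ζ‖) := by
  set A := ⨆ ζ ∈ Ω, ENNReal.ofReal (w ζ * ‖fderiv ℝ f ζ‖) with hA_def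
  by_cases hA : A = ⊤
  · rw [hA]; exact le_top
  set B := A.toReal with hB_def
  have hB0 : 0 ≤ B := ENNReal.toReal_nonneg
  have hB : ∀ x ∈ Ω, w x * ‖fderiv ℝ f x‖ ≤ B := by
    intro x hx
    have h1 : ENNReal.ofReal (w x * ‖fderiv ℝ f x‖) ≤ A := le_iSup₂ (f := fun ζ _ =>
      ENNReal.ofReal (w ζ * ‖fderiv ℝ f ζ‖)) x hx
    have h2 := ENNReal.toReal_mono hA h1
    rwa [ENNReal.toReal_ofReal (mul_nonneg (hw_pos x hx).le (norm_nonneg _))] at h2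
  refine iSup₂_le fun ζ hζ => iSup₂_le fun η hη => iSup_le fun hne => ?_
  rw [← ENNReal.ofReal_toReal hA]
  apply ENNReal.ofReal_le_ofReal
  have hnorm : 0 < ‖ζ - η‖ := by
    rw [norm_pos_iff]
    exact sub_ne_zero_of_ne hne
  rw [div_le_iff₀ hnorm]
  obtain ⟨γ₀⟩ := exists_curve hΩ_open hΩ_conn hζ hη
  have hWp := hW_pos ζ hζ η hη
  rcases eq_or_lt_of_le hB0 with hB0' | hBpos
  · have h0 := curve_bound hΩ_open hw_pos hw_cont hf hB γ₀
    rw [← hB0', zero_mul] at h0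
    have : ‖f ζ - f η‖ = 0 := le_antisymm (by rwa [norm_sub_rev]) (norm_nonneg _)
    rw [this, mul_zero]
    positivity
  · have hd : ‖f η - f ζ‖ / B ≤ wDist Ω w ζ η := by
      refine le_csInf ⟨γ₀.wLength w, γ₀, rfl⟩ ?_
      rintro L ⟨γ, rfl⟩
      rw [div_le_iff₀ hBpos, mul_comm]
      exact curve_bound hΩ_open hw_pos hw_cont hf hB γ
    have hd' : ‖f η - f ζ‖ ≤ B * wDist Ω w ζ η := by
      rw [mul_comm, ← div_le_iff₀ hBpos]
      exact hd
    calc W ζ η * ‖f ζ - f η‖ = W ζ η * ‖f η - f ζ‖ := by rw [norm_sub_rev]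
      _ ≤ W ζ η * (B * wDist Ω w ζ η) := mul_le_mul_of_nonneg_left hd' hWp.le
      _ = B * (wDist Ω w ζ η * W ζ η) := by ring
      _ ≤ B * ‖ζ - η‖ := mul_le_mul_of_nonneg_left (hW4 ζ hζ η hη) hB0

lemma bloch_le_lip {m n : ℕ} {Ω : Set (EuclideanSpace ℝ (Fin m))}
    (hΩ_open : IsOpen Ω)
    {w : EuclideanSpace ℝ (Fin m) → ℝ} (hw_pos : ∀ ζ ∈ Ω, 0 < w ζ)
    {W : EuclideanSpace ℝ (Fin m) → EuclideanSpace ℝ (Fin m) → ℝ}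
    (hW_pos : ∀ ζ ∈ Ω, ∀ η ∈ Ω, 0 < W ζ η)
    (hW3 : ∀ ζ ∈ Ω, w ζ ≤ liminf (fun η => W ζ η) (nhdsWithin ζ (Ω \ {ζ})))
    {f : EuclideanSpace ℝ (Fin m) → EuclideanSpace ℝ (Fin n)} (hf : ContDiffOn ℝ 1 f Ω) :
    (⨆ ζ ∈ Ω, ENNReal.ofReal (w ζ * ‖fderiv ℝ f ζ‖))
      ≤ ⨆ ζ ∈ Ω, ⨆ η ∈ Ω, ⨆ _ : ζ ≠ η, ENNReal.ofReal (W ζ η * ‖f ζ - f η‖ / ‖ζ - η‖) := by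
  set Λ := ⨆ ζ ∈ Ω, ⨆ η ∈ Ω, ⨆ _ : ζ ≠ η,
    ENNReal.ofReal (W ζ η * ‖f ζ - f η‖ / ‖ζ - η‖) with hΛ_def
  by_cases hΛ : Λ = ⊤
  · rw [hΛ]; exact le_top
  set L := Λ.toReal with hL_def
  have hL0 : 0 ≤ L := ENNReal.toReal_nonneg
  have hL : ∀ ζ ∈ Ω, ∀ η ∈ Ω, ζ ≠ η → W ζ η * ‖f ζ - f η‖ / ‖ζ - η‖ ≤ L := by
    intro ζ hζ η hη hne
    have h1 : ENNReal.ofReal (W ζ η * ‖f ζ - f η‖ / ‖ζ - η‖)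
        ≤ ⨆ η' ∈ Ω, ⨆ _ : ζ ≠ η', ENNReal.ofReal (W ζ η' * ‖f ζ - f η'‖ / ‖ζ - η'‖) := by
      refine le_trans (le_iSup (fun _ : ζ ≠ η =>
        ENNReal.ofReal (W ζ η * ‖f ζ - f η‖ / ‖ζ - η‖)) hne) ?_
      exact le_iSup₂ (f := fun η' (_ : η' ∈ Ω) => ⨆ _ : ζ ≠ η',
        ENNReal.ofReal (W ζ η' * ‖f ζ - f η'‖ / ‖ζ - η'‖)) η hη
    have h2 : ENNReal.ofReal (W ζ η * ‖f ζ - f η‖ / ‖ζ - η‖) ≤ Λ :=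
      h1.trans (le_iSup₂ (f := fun ζ' (_ : ζ' ∈ Ω) => ⨆ η' ∈ Ω, ⨆ _ : ζ' ≠ η',
        ENNReal.ofReal (W ζ' η' * ‖f ζ' - f η'‖ / ‖ζ' - η'‖)) ζ hζ)
    have h3 := ENNReal.toReal_mono hΛ h2
    rwa [ENNReal.toReal_ofReal (div_nonneg (mul_nonneg (hW_pos ζ hζ η hη).le (norm_nonneg _))
      (norm_nonneg _))] at h3
  refine iSup₂_le fun ζ hζ => ?_
  rw [← ENNReal.ofReal_toReal hΛ]
  apply ENNReal.ofReal_le_ofReal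
  have hwζ := hw_pos ζ hζ
  have hfd : HasFDerivAt f (fderiv ℝ f ζ) ζ :=
    ((hf.contDiffAt (hΩ_open.mem_nhds hζ)).differentiableAt one_ne_zero).hasFDerivAt
  set D := fderiv ℝ f ζ with hD_def
  have hkey : ∀ u : EuclideanSpace ℝ (Fin m), w ζ * ‖D u‖ ≤ L * ‖u‖ := by
    intro u
    by_cases hu : u = 0
    · simp [hu]
    have hun : 0 < ‖u‖ := norm_pos_iff.mpr hu
    set φ : ℝ → EuclideanSpace ℝ (Fin m) := fun t => ζ + t • u with hφ_def
    have hφc : Continuous φ := by fun_prop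
    have hφ0 : φ 0 = ζ := by simp [hφ_def]
    have hφt : Tendsto φ (nhdsWithin 0 (Ioi 0)) (nhds ζ) :=
      ((hφc.tendsto 0).mono_left nhdsWithin_le_nhds).congr' (by simp [hφ0]) |>.mono_right
        (by rw [hφ0])
    have hev_mem : ∀ᶠ t in nhdsWithin 0 (Ioi 0), φ t ∈ Ω := hφt (hΩ_open.mem_nhds hζ)
    have hev_ne : ∀ᶠ t in nhdsWithin 0 (Ioi 0), φ t ≠ ζ := by
      refine eventually_mem_nhdsWithin.mono fun t ht => ?_
      simp only [hφ_def]
      intro hcon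
      have : t • u = 0 := by
        have := congrArg (fun z => z - ζ) hcon
        simpa using this
      exact hu ((smul_eq_zero.mp this).resolve_left (ne_of_gt ht))
    have hφt' : Tendsto φ (nhdsWithin 0 (Ioi 0)) (nhdsWithin ζ (Ω \ {ζ})) := by
      rw [tendsto_nhdsWithin_iff]
      refine ⟨hφt, ?_⟩
      filter_upwards [hev_mem, hev_ne] with t h1 h2
      exact ⟨h1, h2⟩
    -- the directional derivative of f along u at ζ
    have hφd : HasDerivAt φ u 0 := by
      have h1 : HasDerivAt (fun t : ℝ => t • u) ((1:ℝ) • u) 0 := (hasDerivAt_id 0).smul_const u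
      rw [one_smul] at h1
      exact h1.const_add ζ
    have hcomp : HasDerivAt (fun t => f (φ t)) (D u) 0 := by
      have h' : HasFDerivAt f D (φ 0) := by rw [hφ0]; exact hfd
      exact h'.comp_hasDerivAt 0 hφd
    have hslope : Tendsto (fun t => ‖f (φ t) - f ζ‖ / t) (nhdsWithin 0 (Ioi 0)) (nhds ‖D u‖) := by
      have h1 := hasDerivAt_iff_tendsto_slope.mp hcomp
      have h2 : Tendsto (slope (fun t => f (φ t)) 0) (nhdsWithin 0 (Ioi 0)) (nhds (D u)) :=
        h1.mono_left (nhdsWithin_mono 0 (fun t ht => ne_of_gt ht))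
      refine h2.norm.congr' ?_
      filter_upwards [self_mem_nhdsWithin] with t (ht : 0 < t)
      rw [slope_def_module]
      rw [hφ0, norm_smul, sub_zero, norm_inv, Real.norm_of_nonneg ht.le, inv_mul_eq_div]
    -- key estimate for fixed small ε
    have hstep : ∀ ε ∈ Ioo (0:ℝ) (w ζ), (w ζ - ε) * (‖D u‖ / ‖u‖) ≤ L := by
      intro ε hε
      -- eventual lower bound on W from (W3)
      have hWlb : ∀ᶠ η' in nhdsWithin ζ (Ω \ {ζ}), w ζ - ε < W ζ η' := by
        have hlim := hW3 ζ hζ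
        rw [Filter.liminf_eq] at hlim
        set S := {a : ℝ | ∀ᶠ η' in nhdsWithin ζ (Ω \ {ζ}), a ≤ W ζ η'} with hS_def
        have hSne : S.Nonempty := by
          rcases eq_empty_or_nonempty S with h | h
          · rw [h, Real.sSup_empty] at hlim
            linarith
          · exact h
        have hlt2 : w ζ - ε < sSup S :=
          lt_of_lt_of_le (by linarith [hε.1] : w ζ - ε < w ζ) hlim
        obtain ⟨a, ha, hlt⟩ := exists_lt_of_lt_csSup hSne hlt2
        filter_upwards [ha] with η' hη'
        linarith
      have hW' : ∀ᶠ t in nhdsWithin 0 (Ioi 0), w ζ - ε < W ζ (φ t) := hφt'.eventually hWlb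
      have hG : Tendsto (fun t => (w ζ - ε) * (‖f (φ t) - f ζ‖ / t / ‖u‖))
          (nhdsWithin 0 (Ioi 0)) (nhds ((w ζ - ε) * (‖D u‖ / ‖u‖))) :=
        tendsto_const_nhds.mul (hslope.div_const ‖u‖)
      have hGle : ∀ᶠ t in nhdsWithin 0 (Ioi 0),
          (w ζ - ε) * (‖f (φ t) - f ζ‖ / t / ‖u‖) ≤ L := by
        filter_upwards [hW', hev_mem, hev_ne, self_mem_nhdsWithin]
          with t hWt hmem hne (ht : 0 < t)
        have hnz : ‖ζ - φ t‖ = t * ‖u‖ := by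
          simp only [hφ_def]
          rw [show ζ - (ζ + t • u) = -(t • u) by abel, norm_neg, norm_smul,
            Real.norm_of_nonneg ht.le]
        have happ := hL ζ hζ (φ t) hmem (fun h => hne h.symm)
        have hrw : ‖f (φ t) - f ζ‖ / t / ‖u‖ = ‖f ζ - f (φ t)‖ / ‖ζ - φ t‖ := by
          rw [norm_sub_rev, hnz, div_div]
        rw [hrw]
        calc (w ζ - ε) * (‖f ζ - f (φ t)‖ / ‖ζ - φ t‖)
            ≤ W ζ (φ t) * (‖f ζ - f (φ t)‖ / ‖ζ - φ t‖) :=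
              mul_le_mul_of_nonneg_right hWt.le (div_nonneg (norm_nonneg _) (norm_nonneg _))
          _ = W ζ (φ t) * ‖f ζ - f (φ t)‖ / ‖ζ - φ t‖ := by rw [mul_div_assoc]
          _ ≤ L := happ
      exact le_of_tendsto hG hGle
    -- let ε → 0
    have hεlim : Tendsto (fun ε : ℝ => (w ζ - ε) * (‖D u‖ / ‖u‖)) (nhdsWithin 0 (Ioi 0))
        (nhds (w ζ * (‖D u‖ / ‖u‖))) := by
      have : Continuous (fun ε : ℝ => (w ζ - ε) * (‖D u‖ / ‖u‖)) := by fun_prop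
      have h0 := (this.tendsto 0).mono_left (nhdsWithin_le_nhds (s := Ioi (0:ℝ)))
      simpa using h0
    have hfinal : w ζ * (‖D u‖ / ‖u‖) ≤ L := by
      refine le_of_tendsto hεlim ?_
      filter_upwards [Ioo_mem_nhdsGT_of_mem (by constructor <;> [exact le_rfl; exact hwζ] :
        (0:ℝ) ∈ Ico 0 (w ζ))] with ε hε
      exact hstep ε hε
    calc w ζ * ‖D u‖ = (w ζ * (‖D u‖ / ‖u‖)) * ‖u‖ := by
          field_simp
        _ ≤ L * ‖u‖ := mul_le_mul_of_nonneg_right hfinal (norm_nonneg _)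
  -- conclude with operator norm
  have hop : ‖D‖ ≤ L / w ζ := by
    refine ContinuousLinearMap.opNorm_le_bound _ (div_nonneg hL0 hwζ.le) fun u => ?_
    rw [div_mul_eq_mul_div, le_div_iff₀ hwζ]
    calc ‖D u‖ * w ζ = w ζ * ‖D u‖ := by ring
      _ ≤ L * ‖u‖ := hkey u
  calc w ζ * ‖D‖ ≤ w ζ * (L / w ζ) := mul_le_mul_of_nonneg_left hop hwζ.le
    _ = L := by field_simp

/-- `W : Ω × Ω → ℝ` is admissible for the weight `w` on `Ω`:
(W1) symmetry, (W2) `W(ζ,ζ) = w(ζ)`, (W3) `liminf_{η→ζ} W(ζ,η) ≥ w(ζ)`,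
(W4) `d_w(ζ,η)·W(ζ,η) ≤ |ζ−η|`. -/
def IsAdmissible {m : ℕ} (Ω : Set (EuclideanSpace ℝ (Fin m)))
    (w : EuclideanSpace ℝ (Fin m) → ℝ)
    (W : EuclideanSpace ℝ (Fin m) → EuclideanSpace ℝ (Fin m) → ℝ) : Prop :=
  (∀ ζ ∈ Ω, ∀ η ∈ Ω, W ζ η = W η ζ) ∧
  (∀ ζ ∈ Ω, W ζ ζ = w ζ) ∧
  (∀ ζ ∈ Ω, w ζ ≤ liminf (fun η => W ζ η) (nhdsWithin ζ (Ω \ {ζ}))) ∧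
  (∀ ζ ∈ Ω, ∀ η ∈ Ω, wDist Ω w ζ η * W ζ η ≤ ‖ζ - η‖)

/-- If one of the `w`-Bloch and `W`-Lipschitz seminorms of a `C¹` mapping
`f : Ω → ℝⁿ` is finite, then both are finite and they are equal. -/
theorem stmt0 {m n : ℕ} (Ω : Set (EuclideanSpace ℝ (Fin m)))
    (hΩ_open : IsOpen Ω) (hΩ_conn : IsConnected Ω)
    (w : EuclideanSpace ℝ (Fin m) → ℝ) (hw_pos : ∀ ζ ∈ Ω, 0 < w ζ) (hw_cont : ContinuousOn w Ω)
    (W : EuclideanSpace ℝ (Fin m) → EuclideanSpace ℝ (Fin m) → ℝ) (hW_pos : ∀ ζ ∈ Ω, ∀ η ∈ Ω, 0 < W ζ η)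
    (hW_adm : IsAdmissible Ω w W)
    (f : EuclideanSpace ℝ (Fin m) → EuclideanSpace ℝ (Fin n)) (hf : ContDiffOn ℝ 1 f Ω)
    (hfin : (⨆ ζ ∈ Ω, ENNReal.ofReal (w ζ * ‖fderiv ℝ f ζ‖)) ≠ ⊤ ∨
      (⨆ ζ ∈ Ω, ⨆ η ∈ Ω, ⨆ _ : ζ ≠ η,
        ENNReal.ofReal (W ζ η * ‖f ζ - f η‖ / ‖ζ - η‖)) ≠ ⊤) :
    (⨆ ζ ∈ Ω, ENNReal.ofReal (w ζ * ‖fderiv ℝ f ζ‖)) ≠ ⊤ ∧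
    (⨆ ζ ∈ Ω, ⨆ η ∈ Ω, ⨆ _ : ζ ≠ η,
      ENNReal.ofReal (W ζ η * ‖f ζ - f η‖ / ‖ζ - η‖)) ≠ ⊤ ∧
    (⨆ ζ ∈ Ω, ENNReal.ofReal (w ζ * ‖fderiv ℝ f ζ‖)) =
      (⨆ ζ ∈ Ω, ⨆ η ∈ Ω, ⨆ _ : ζ ≠ η,
        ENNReal.ofReal (W ζ η * ‖f ζ - f η‖ / ‖ζ - η‖)) := by
  have hA_le := bloch_le_lip hΩ_open hw_pos hW_pos hW_adm.2.2.1 hf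
  have hL_le := lip_le_bloch hΩ_open hΩ_conn hw_pos hw_cont hW_pos hW_adm.2.2.2 hf
  have heq := le_antisymm hA_le hL_le
  have h1 : (⨆ ζ ∈ Ω, ENNReal.ofReal (w ζ * ‖fderiv ℝ f ζ‖)) ≠ ⊤ := by
    rcases hfin with h | h
    · exact h
    · rw [heq]; exact h
  refine ⟨h1, ?_, heq⟩
  rw [← heq]; exact h1
end

section
/- Let Ω ⊆ ℝ^m be a domain, let w be an everywhere positive continuous function on Ω, and let W be a positive function on Ω × Ω satisfying W(ζ,ζ) = w(ζ) and liminf_{η→ζ} W(ζ,η) ≥ w(ζ) for every ζ ∈ Ω. Then for every continuously differentiable mapping f : Ω → ℝ^n, sup_{ζ∈Ω} w(ζ)‖Df(ζ)‖ ≤ sup_{ζ,η∈Ω, ζ≠η} W(ζ,η)|f(ζ)−f(η)|/|ζ−η|. -/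
open Set Filter
open scoped Topology ENNReal

/-- under conditions (W2) and (W3) on `W`, the `w`-Bloch seminorm is at most
the `W`-Lipschitz seminorm. -/
theorem stmt1 {m n : ℕ} (Ω : Set (EuclideanSpace ℝ (Fin m)))
    (hΩ_open : IsOpen Ω) (hΩ_conn : IsConnected Ω)
    (w : EuclideanSpace ℝ (Fin m) → ℝ) (hw_pos : ∀ ζ ∈ Ω, 0 < w ζ) (hw_cont : ContinuousOn w Ω)
    (W : EuclideanSpace ℝ (Fin m) → EuclideanSpace ℝ (Fin m) → ℝ) (hW_pos : ∀ ζ ∈ Ω, ∀ η ∈ Ω, 0 < W ζ η)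
    (hW_diag : ∀ ζ ∈ Ω, W ζ ζ = w ζ)
    (hW_liminf : ∀ ζ ∈ Ω, w ζ ≤ liminf (fun η => W ζ η) (nhdsWithin ζ (Ω \ {ζ})))
    (f : EuclideanSpace ℝ (Fin m) → EuclideanSpace ℝ (Fin n)) (hf : ContDiffOn ℝ 1 f Ω) :
    (⨆ ζ ∈ Ω, ENNReal.ofReal (w ζ * ‖fderiv ℝ f ζ‖)) ≤
      ⨆ ζ ∈ Ω, ⨆ η ∈ Ω, ⨆ _ : ζ ≠ η,
        ENNReal.ofReal (W ζ η * ‖f ζ - f η‖ / ‖ζ - η‖) := by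

  refine iSup₂_le fun ζ hζ => ?_
  set L := nhdsWithin ζ (Ω \ {ζ}) with hLdef
  refine ENNReal.le_of_forall_nnreal_lt fun r hr => ?_
  rcases eq_or_ne r 0 with rfl | hr0
  · simp
  have hb : (0:ℝ) < (r:ℝ) := by exact_mod_cast hr0.bot_lt
  set b : ℝ := (r:ℝ) with hbdef
  have hwζ : 0 < w ζ := hw_pos ζ hζ
  set A := fderiv ℝ f ζ with hAdef
  set d := ‖A‖ with hddef
  have hbd : b < w ζ * d := by
    by_contra h
    push_neg at h
    have h1 : ENNReal.ofReal (w ζ * d) ≤ ENNReal.ofReal b := ENNReal.ofReal_le_ofReal h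
    have h2 : ENNReal.ofReal b = (r : ENNReal) := ENNReal.ofReal_coe_nnreal
    rw [h2] at h1
    exact absurd hr (not_lt.mpr h1)
  have hd : 0 < d := by nlinarith
  obtain ⟨a₁, ha₁l, ha₁r⟩ := exists_between ((div_lt_iff₀ hd).mpr hbd)
  have ha₁pos : 0 < a₁ := lt_trans (div_pos hb hd) ha₁l
  set a₂ : ℝ := b / a₁ with ha₂def
  have ha₂pos : 0 < a₂ := div_pos hb ha₁pos
  have ha₂d : a₂ < d := (div_lt_iff₀ ha₁pos).mpr (by nlinarith [(div_lt_iff₀ hd).mp ha₁l])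
  -- eventual lower bound on W near ζ
  have hWa : ∃ a, a₁ < a ∧ ∀ᶠ η in L, a ≤ W ζ η := by
    by_contra h
    push_neg at h
    have h0 : (0:ℝ) ∈ {a : ℝ | ∀ᶠ η in L, a ≤ W ζ η} := by
      filter_upwards [self_mem_nhdsWithin] with η hη
      exact (hW_pos ζ hζ η hη.1).le
    have hsup : liminf (fun η => W ζ η) L ≤ a₁ := by
      rw [Filter.liminf_eq]
      refine csSup_le ⟨0, h0⟩ fun a ha => ?_
      by_contra hlt
      push_neg at hlt
      exact (h a hlt) (Filter.Eventually.mono ha fun x hx => not_lt.mpr hx)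
    have := hW_liminf ζ hζ
    rw [← hLdef] at this
    linarith
  obtain ⟨v, hv1, hv2⟩ := A.exists_lt_apply_of_lt_opNorm ha₂d
  have hvne : v ≠ 0 := by
    rintro rfl
    simp only [map_zero, norm_zero] at hv2
    linarith
  have hvpos : 0 < ‖v‖ := norm_pos_iff.mpr hvne
  have hc : Continuous fun t : ℝ => ζ + t • v :=
    continuous_const.add (continuous_id.smul continuous_const)
  have hct : Tendsto (fun t : ℝ => ζ + t • v) (𝓝 0) (𝓝 ζ) := hc.tendsto' 0 ζ (by simp)
  have hφ : Tendsto (fun t : ℝ => ζ + t • v) (𝓝[>] (0:ℝ)) L := by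
    apply tendsto_nhdsWithin_of_tendsto_nhds_of_eventually_within
    · exact hct.mono_left nhdsWithin_le_nhds
    · have hmem : ∀ᶠ t in 𝓝 (0:ℝ), ζ + t • v ∈ Ω := hct.eventually (hΩ_open.eventually_mem hζ)
      filter_upwards [hmem.filter_mono nhdsWithin_le_nhds, self_mem_nhdsWithin] with t htΩ htpos
      refine ⟨htΩ, ?_⟩
      simp only [mem_singleton_iff]
      intro hEq
      have : t • v = 0 := by
        have := hEq
        rwa [add_eq_left] at this
      rcases smul_eq_zero.mp this with h | h
      · exact (mem_Ioi.mp htpos).ne' h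
      · exact hvne h
  have hfd : DifferentiableAt ℝ f ζ :=
    (hf.contDiffAt (hΩ_open.mem_nhds hζ)).differentiableAt one_ne_zero
  have hline : HasDerivAt (fun t : ℝ => ζ + t • v) v 0 := by
    simpa using ((hasDerivAt_id (0:ℝ)).smul_const v).const_add ζ
  have hFA : HasFDerivAt f A (ζ + (0:ℝ) • v) := by simpa using hfd.hasFDerivAt
  have hg : HasDerivAt (fun t : ℝ => f (ζ + t • v)) (A v) 0 := hFA.comp_hasDerivAt 0 hline
  rw [hasDerivAt_iff_tendsto_slope] at hg
  have hslope : Tendsto (fun t => ‖slope (fun s : ℝ => f (ζ + s • v)) 0 t‖) (𝓝[>] (0:ℝ))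
      (𝓝 ‖A v‖) := by
    refine ((continuous_norm.tendsto _).comp hg).mono_left (nhdsWithin_mono _ ?_)
    intro t ht
    simpa using (mem_Ioi.mp ht).ne'
  have hev2 : ∀ᶠ t in 𝓝[>] (0:ℝ), a₂ < ‖slope (fun s : ℝ => f (ζ + s • v)) 0 t‖ :=
    hslope.eventually (eventually_gt_nhds hv2)
  obtain ⟨a, ha, haW⟩ := hWa
  have hev1 : ∀ᶠ t in 𝓝[>] (0:ℝ), a ≤ W ζ (ζ + t • v) := hφ.eventually haW
  have hevm : ∀ᶠ t in 𝓝[>] (0:ℝ), (ζ + t • v) ∈ Ω \ {ζ} :=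
    hφ.eventually (eventually_mem_nhdsWithin)
  have hevt : ∀ᶠ t in 𝓝[>] (0:ℝ), 0 < t := eventually_mem_nhdsWithin
  obtain ⟨t, h1, h2, hm, ht⟩ := (hev1.and (hev2.and (hevm.and hevt))).exists
  set η : EuclideanSpace ℝ (Fin m) := ζ + t • v with hηdef
  have hη : η ∈ Ω := hm.1
  have hne : ζ ≠ η := fun hEq => hm.2 (mem_singleton_iff.mpr hEq.symm)
  have hζη : ‖ζ - η‖ = t * ‖v‖ := by
    rw [show ζ - η = -(t • v) by rw [hηdef]; abel, norm_neg, norm_smul, Real.norm_eq_abs,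
      abs_of_pos ht]
  have hsl : ‖slope (fun s : ℝ => f (ζ + s • v)) 0 t‖ = ‖f ζ - f η‖ / t := by
    rw [show slope (fun s : ℝ => f (ζ + s • v)) 0 t = (t - 0)⁻¹ • (f (ζ + t • v) - f (ζ + (0:ℝ) • v)) from rfl]
    rw [norm_smul, Real.norm_eq_abs, sub_zero, abs_of_pos (inv_pos.mpr ht)]
    rw [show f (ζ + (0:ℝ) • v) = f ζ by norm_num]
    rw [norm_sub_rev, div_eq_inv_mul, ← hηdef]
  have hratio : a₂ < ‖f ζ - f η‖ / ‖ζ - η‖ := by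
    rw [hsl] at h2
    have h4 : ‖f ζ - f η‖ / t ≤ ‖f ζ - f η‖ / (t * ‖v‖) := by
      apply div_le_div_of_nonneg_left (norm_nonneg _) (mul_pos ht hvpos)
      nlinarith
    rw [hζη]
    linarith
  have hterm : b < W ζ η * ‖f ζ - f η‖ / ‖ζ - η‖ := by
    rw [mul_div_assoc]
    have hab : b = a₁ * a₂ := by
      rw [ha₂def, mul_div_cancel₀ _ (ne_of_gt ha₁pos)]
    rw [hab]
    have hW : a₁ < W ζ η := lt_of_lt_of_le ha h1
    exact mul_lt_mul hW hratio.le ha₂pos (by linarith)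
  calc (r : ENNReal) = ENNReal.ofReal b := (ENNReal.ofReal_coe_nnreal).symm
    _ ≤ ENNReal.ofReal (W ζ η * ‖f ζ - f η‖ / ‖ζ - η‖) := ENNReal.ofReal_le_ofReal hterm.le
    _ ≤ _ := by
        refine le_iSup₂_of_le ζ hζ ?_
        refine le_iSup₂_of_le η hη ?_
        exact le_iSup_of_le hne le_rfl
end

section
/- Let f : B^m → ℂ be a continuously differentiable complex-valued function on the unit ball B^m ⊆ ℝ^m. Then sup_{ζ∈B^m} (1−|ζ|²)‖Df(ζ)‖ is finite if and only if sup_{ζ,η∈B^m, ζ≠η} √(1−|ζ|²)·√(1−|η|²)·|f(ζ)−f(η)|/|ζ−η| is finite; moreover these two suprema are equal. -/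
open Set Filter

set_option maxHeartbeats 1000000

section Aux

lemma two_log_le {u : ℝ} (hu : 1 ≤ u) : 2 * Real.log u ≤ u - u⁻¹ := by
  have key : ∀ x ∈ Ici (1:ℝ), HasDerivAt (fun y => y - y⁻¹ - 2 * Real.log y)
      ((1 - x⁻¹)^2) x := by
    intro x hx
    have hx0 : x ≠ 0 := by simp only [mem_Ici] at hx; positivity
    have h1 : HasDerivAt (fun y : ℝ => y - y⁻¹ - 2 * Real.log y)
        (1 - (-(x^2)⁻¹) - 2 * x⁻¹) x := by
      exact ((hasDerivAt_id x).sub (hasDerivAt_inv hx0)).sub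
        ((Real.hasDerivAt_log hx0).const_mul 2)
    convert h1 using 1
    rw [sub_sq, inv_pow]
    ring
  have hsub : Ici (1:ℝ) ⊆ {0}ᶜ := by
    intro x hx; simp only [mem_Ici] at hx
    simp only [mem_compl_iff, mem_singleton_iff]
    intro h; rw [h] at hx; linarith
  have hmono : MonotoneOn (fun y : ℝ => y - y⁻¹ - 2 * Real.log y) (Ici 1) := by
    apply monotoneOn_of_deriv_nonneg (convex_Ici 1)
    · intro x hx
      exact (key x hx).continuousAt.continuousWithinAt
    · intro x hx
      exact ((key x (interior_subset hx)).differentiableAt).differentiableWithinAt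
    · intro x hx
      rw [interior_Ici] at hx
      rw [(key x (mem_Ici.2 (le_of_lt hx))).deriv]
      positivity
  have h := hmono (mem_Ici.2 le_rfl) (mem_Ici.2 hu) hu
  simp at h
  linarith

lemma log_sub_log_le {A C : ℝ} (hA : 0 < A) (hAC : A ≤ C) :
    Real.log C - Real.log A ≤ (C - A) / Real.sqrt (A * C) := by
  have hC : 0 < C := lt_of_lt_of_le hA hAC
  set a := Real.sqrt A with ha
  set c := Real.sqrt C with hc
  have ha0 : 0 < a := Real.sqrt_pos.2 hA
  have hc0 : 0 < c := Real.sqrt_pos.2 hC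
  have hac : a ≤ c := Real.sqrt_le_sqrt hAC
  have hu : 1 ≤ c / a := (one_le_div ha0).2 hac
  have h := two_log_le hu
  have hlog : Real.log (c / a) = Real.log c - Real.log a := Real.log_div hc0.ne' ha0.ne'
  have hA2 : A = a ^ 2 := (Real.sq_sqrt hA.le).symm
  have hC2 : C = c ^ 2 := (Real.sq_sqrt hC.le).symm
  have hlogA : Real.log A = 2 * Real.log a := by rw [hA2, Real.log_pow]; push_cast; ring
  have hlogC : Real.log C = 2 * Real.log c := by rw [hC2, Real.log_pow]; push_cast; ring
  have hs : Real.sqrt (A * C) = a * c := Real.sqrt_mul hA.le C ▸ rfl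
  rw [hlog] at h
  have heq : c / a - (c / a)⁻¹ = (c ^ 2 - a ^ 2) / (a * c) := by
    field_simp
  rw [hlogA, hlogC, hs, hA2, hC2]
  rw [heq] at h
  linarith

lemma ratio_le {A C : ℝ} (hA : 0 < A) (hC : 0 < C) (hne : A ≠ C) :
    (Real.log C - Real.log A) / (C - A) ≤ (Real.sqrt (A * C))⁻¹ := by
  have hs : 0 < Real.sqrt (A * C) := Real.sqrt_pos.2 (by positivity)
  rcases lt_or_gt_of_ne hne with h | h
  · rw [div_le_iff₀ (by linarith : (0:ℝ) < C - A)]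
    calc Real.log C - Real.log A ≤ (C - A) / Real.sqrt (A * C) := log_sub_log_le hA h.le
      _ = (Real.sqrt (A * C))⁻¹ * (C - A) := by ring
  · have heq : (Real.log C - Real.log A) / (C - A)
        = (Real.log A - Real.log C) / (A - C) := by
      rw [div_eq_div_iff (by linarith) (by linarith)]; ring
    rw [heq, div_le_iff₀ (by linarith : (0:ℝ) < A - C)]
    calc Real.log A - Real.log C ≤ (A - C) / Real.sqrt (C * A) := log_sub_log_le hC h.le
      _ = (Real.sqrt (A * C))⁻¹ * (A - C) := by rw [mul_comm C A]; ring

lemma integral_inv_linear {A C : ℝ} (hA : 0 < A) (hC : 0 < C) :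
    ∫ t in (0:ℝ)..1, (A + t * (C - A))⁻¹ ≤ (Real.sqrt (A * C))⁻¹ := by
  have hpos : ∀ t ∈ Icc (0:ℝ) 1, 0 < A + t * (C - A) := by
    intro t ht
    rcases ht with ⟨h0, h1⟩
    rcases le_total A C with h | h
    · nlinarith [mul_nonneg h0 (sub_nonneg.2 h)]
    · nlinarith [mul_le_mul_of_nonneg_right h1 (sub_nonneg.2 h)]
  rcases eq_or_ne A C with rfl | hne
  · simp only [sub_self, mul_zero, add_zero, intervalIntegral.integral_const, smul_eq_mul,
      sub_zero, one_mul]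
    rw [Real.sqrt_mul_self hA.le]
  · have hCA : C - A ≠ 0 := sub_ne_zero.2 (Ne.symm hne)
    have hderiv : ∀ t ∈ uIcc (0:ℝ) 1,
        HasDerivAt (fun s => Real.log (A + s * (C - A)) / (C - A)) ((A + t * (C - A))⁻¹) t := by
      intro t ht
      rw [uIcc_of_le zero_le_one] at ht
      have hL : HasDerivAt (fun s : ℝ => A + s * (C - A)) (C - A) t := by
        simpa [mul_comm] using ((hasDerivAt_id t).const_mul (C - A)).const_add A
      have := (Real.hasDerivAt_log (hpos t ht).ne').comp t hL
      have h2 := this.div_const (C - A)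
      have e : (A + t * (C - A))⁻¹ * (C - A) / (C - A) = (A + t * (C - A))⁻¹ := by
        rw [mul_div_assoc, div_self hCA, mul_one]
      rw [e] at h2; exact h2
    have hcont : ContinuousOn (fun t => (A + t * (C - A))⁻¹) (uIcc (0:ℝ) 1) := by
      rw [uIcc_of_le zero_le_one]
      exact ContinuousOn.inv₀ (by fun_prop) (fun t ht => (hpos t ht).ne')
    have hint : IntervalIntegrable (fun t => (A + t * (C - A))⁻¹) MeasureTheory.volume 0 1 :=
      (hcont.mono (by rw [uIcc_of_le zero_le_one])).intervalIntegrable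
    rw [intervalIntegral.integral_eq_sub_of_hasDerivAt hderiv hint]
    have : Real.log (A + 1 * (C - A)) / (C - A) - Real.log (A + 0 * (C - A)) / (C - A)
        = (Real.log C - Real.log A) / (C - A) := by
      rw [div_sub_div_same]; ring_nf
    rw [this]
    exact ratio_le hA hC hne

variable {m : ℕ}

local notation "E" => EuclideanSpace ℝ (Fin m)

lemma sq_lt_one_of_mem_ball {ζ : E} (hζ : ζ ∈ Metric.ball (0:E) 1) : ‖ζ‖ ^ 2 < 1 := by
  rw [mem_ball_zero_iff] at hζ
  nlinarith [norm_nonneg ζ]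

lemma HW_bound (f : E → ℂ) (hf : ContDiffOn ℝ 1 f (Metric.ball (0:E) 1)) (M : ℝ)
    (hM : ∀ ζ ∈ Metric.ball (0:E) 1, (1 - ‖ζ‖ ^ 2) * ‖fderiv ℝ f ζ‖ ≤ M)
    {ζ η : E} (hζ : ζ ∈ Metric.ball (0:E) 1) (hη : η ∈ Metric.ball (0:E) 1) :
    ‖f η - f ζ‖ ≤ M * ‖η - ζ‖ * (Real.sqrt ((1 - ‖ζ‖ ^ 2) * (1 - ‖η‖ ^ 2)))⁻¹ := by
  set A := 1 - ‖ζ‖ ^ 2 with hA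
  set C := 1 - ‖η‖ ^ 2 with hC
  have hA0 : 0 < A := by have := sq_lt_one_of_mem_ball hζ; linarith
  have hC0 : 0 < C := by have := sq_lt_one_of_mem_ball hη; linarith
  have hM0 : 0 ≤ M := le_trans (by positivity) (hM ζ hζ)
  set γ : ℝ → E := fun t => ζ + t • (η - ζ) with hγ
  have hmem : ∀ t ∈ Icc (0:ℝ) 1, γ t ∈ Metric.ball (0:E) 1 := by
    intro t ht
    have h := (convex_ball (0:E) 1) hζ hη (by linarith [ht.2] : (0:ℝ) ≤ 1 - t) ht.1
      (by ring)
    have heq : (1 - t) • ζ + t • η = γ t := by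
      simp only [hγ, smul_sub, sub_smul, one_smul]; abel
    rwa [heq] at h
  have hlow : ∀ t ∈ Icc (0:ℝ) 1, A + t * (C - A) ≤ 1 - ‖γ t‖ ^ 2 := by
    intro t ht
    have heq : γ t = (1 - t) • ζ + t • η := by
      simp only [hγ, smul_sub, sub_smul, one_smul]; abel
    have hnorm : ‖γ t‖ ≤ (1 - t) * ‖ζ‖ + t * ‖η‖ := by
      rw [heq]
      calc ‖(1 - t) • ζ + t • η‖ ≤ ‖(1 - t) • ζ‖ + ‖t • η‖ := norm_add_le _ _
        _ = (1 - t) * ‖ζ‖ + t * ‖η‖ := by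
          rw [norm_smul, norm_smul, Real.norm_eq_abs, Real.norm_eq_abs,
            abs_of_nonneg (by linarith [ht.2]), abs_of_nonneg ht.1]
    have h2 : ‖γ t‖ ^ 2 ≤ ((1 - t) * ‖ζ‖ + t * ‖η‖) ^ 2 := by
      apply sq_le_sq' _ hnorm
      have := norm_nonneg (γ t); linarith [norm_nonneg (γ t)]
    have h3 : ((1 - t) * ‖ζ‖ + t * ‖η‖) ^ 2 ≤ (1 - t) * ‖ζ‖ ^ 2 + t * ‖η‖ ^ 2 := by
      nlinarith [sq_nonneg (‖ζ‖ - ‖η‖), ht.1, ht.2, mul_nonneg ht.1 (by linarith [ht.2] : (0:ℝ) ≤ 1 - t)]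
    simp only [hA, hC]
    nlinarith
  have hdiff : ∀ t ∈ Icc (0:ℝ) 1, HasDerivAt (fun s => f (γ s)) (fderiv ℝ f (γ t) (η - ζ)) t := by
    intro t ht
    have hF : HasFDerivAt f (fderiv ℝ f (γ t)) (γ t) := by
      have : DifferentiableAt ℝ f (γ t) :=
        (hf.differentiableOn one_ne_zero).differentiableAt (Metric.isOpen_ball.mem_nhds (hmem t ht))
      exact this.hasFDerivAt
    have hγd : HasDerivAt γ (η - ζ) t := by
      simpa [hγ] using ((hasDerivAt_id t).smul_const (η - ζ)).const_add ζ
    exact hF.comp_hasDerivAt t hγd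
  have hγcont : Continuous γ := by fun_prop
  have hfdcont : ContinuousOn (fun t => fderiv ℝ f (γ t) (η - ζ)) (Icc (0:ℝ) 1) := by
    have h1 : ContinuousOn (fderiv ℝ f) (Metric.ball (0:E) 1) :=
      hf.continuousOn_fderiv_of_isOpen Metric.isOpen_ball le_rfl
    exact (h1.comp hγcont.continuousOn hmem).clm_apply continuousOn_const
  have hint : IntervalIntegrable (fun t => fderiv ℝ f (γ t) (η - ζ))
      MeasureTheory.volume 0 1 :=
    (hfdcont.mono (by rw [uIcc_of_le zero_le_one])).intervalIntegrable
  have hFTC : f η - f ζ = ∫ t in (0:ℝ)..1, fderiv ℝ f (γ t) (η - ζ) := by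
    have := intervalIntegral.integral_eq_sub_of_hasDerivAt
      (fun t ht => hdiff t (by rwa [uIcc_of_le zero_le_one] at ht)) hint
    rw [this]
    congr 1 <;> simp [hγ]
  have hposall : ∀ t ∈ Icc (0:ℝ) 1, 0 < A + t * (C - A) := by
    intro t ht
    rcases le_total A C with h | h
    · nlinarith [mul_nonneg ht.1 (sub_nonneg.2 h)]
    · nlinarith [mul_le_mul_of_nonneg_right ht.2 (sub_nonneg.2 h)]
  have hbound : ∀ t ∈ Icc (0:ℝ) 1,
      ‖fderiv ℝ f (γ t) (η - ζ)‖ ≤ (M * ‖η - ζ‖) * (A + t * (C - A))⁻¹ := by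
    intro t ht
    have hpos : 0 < A + t * (C - A) := hposall t ht
    have hγpos : 0 < 1 - ‖γ t‖ ^ 2 := lt_of_lt_of_le hpos (hlow t ht)
    have hop : ‖fderiv ℝ f (γ t)‖ ≤ M / (1 - ‖γ t‖ ^ 2) := by
      rw [le_div_iff₀ hγpos, mul_comm]
      exact hM (γ t) (hmem t ht)
    calc ‖fderiv ℝ f (γ t) (η - ζ)‖ ≤ ‖fderiv ℝ f (γ t)‖ * ‖η - ζ‖ :=
        ContinuousLinearMap.le_opNorm _ _
      _ ≤ (M / (1 - ‖γ t‖ ^ 2)) * ‖η - ζ‖ :=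
        mul_le_mul_of_nonneg_right hop (norm_nonneg _)
      _ ≤ (M / (A + t * (C - A))) * ‖η - ζ‖ := by
        apply mul_le_mul_of_nonneg_right _ (norm_nonneg _)
        exact div_le_div_of_nonneg_left hM0 hpos (hlow t ht)
      _ = (M * ‖η - ζ‖) * (A + t * (C - A))⁻¹ := by ring
  calc ‖f η - f ζ‖ = ‖∫ t in (0:ℝ)..1, fderiv ℝ f (γ t) (η - ζ)‖ := by rw [hFTC]
    _ ≤ ∫ t in (0:ℝ)..1, ‖fderiv ℝ f (γ t) (η - ζ)‖ :=
      intervalIntegral.norm_integral_le_integral_norm zero_le_one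
    _ ≤ ∫ t in (0:ℝ)..1, (M * ‖η - ζ‖) * (A + t * (C - A))⁻¹ := by
      apply intervalIntegral.integral_mono_on zero_le_one
      · exact hint.norm
      · apply ContinuousOn.intervalIntegrable
        rw [uIcc_of_le zero_le_one]
        exact continuousOn_const.mul (ContinuousOn.inv₀ (by fun_prop)
          (fun t ht => (hposall t ht).ne'))
      · exact hbound
    _ = (M * ‖η - ζ‖) * ∫ t in (0:ℝ)..1, (A + t * (C - A))⁻¹ := by
      rw [intervalIntegral.integral_const_mul]
    _ ≤ (M * ‖η - ζ‖) * (Real.sqrt (A * C))⁻¹ := by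
      apply mul_le_mul_of_nonneg_left (integral_inv_linear hA0 hC0) (by positivity)
    _ = M * ‖η - ζ‖ * (Real.sqrt (A * C))⁻¹ := by ring

lemma sq_lt_one_of_mem_ball' {ζ : E} (hζ : ζ ∈ Metric.ball (0:E) 1) : ‖ζ‖ ^ 2 < 1 := by
  rw [mem_ball_zero_iff] at hζ
  nlinarith [norm_nonneg ζ]

lemma bloch_le (f : E → ℂ) (hf : ContDiffOn ℝ 1 f (Metric.ball (0:E) 1)) (M : ℝ) (hM0 : 0 ≤ M)
    (hM : ∀ ζ ∈ Metric.ball (0:E) 1, ∀ η ∈ Metric.ball (0:E) 1, ζ ≠ η →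
      Real.sqrt (1 - ‖ζ‖ ^ 2) * Real.sqrt (1 - ‖η‖ ^ 2) * ‖f ζ - f η‖ / ‖ζ - η‖ ≤ M)
    {ζ : E} (hζ : ζ ∈ Metric.ball (0:E) 1) :
    (1 - ‖ζ‖ ^ 2) * ‖fderiv ℝ f ζ‖ ≤ M := by
  set A := 1 - ‖ζ‖ ^ 2 with hA
  have hA0 : 0 < A := by have := sq_lt_one_of_mem_ball' hζ; linarith
  have hop : ‖fderiv ℝ f ζ‖ ≤ M / A := by
    apply ContinuousLinearMap.opNorm_le_bound _ (by positivity)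
    intro v
    rcases eq_or_ne v 0 with rfl | hv
    · simp
    have hv0 : 0 < ‖v‖ := norm_pos_iff.2 hv
    set g : ℝ → ℂ := fun t => f (ζ + t • v) with hg
    have hd : HasDerivAt g (fderiv ℝ f ζ v) 0 := by
      have hF : HasFDerivAt f (fderiv ℝ f ζ) ζ :=
        ((hf.differentiableOn one_ne_zero).differentiableAt
          (Metric.isOpen_ball.mem_nhds hζ)).hasFDerivAt
      have hc : HasDerivAt (fun t : ℝ => ζ + t • v) v 0 := by
        simpa using ((hasDerivAt_id (0:ℝ)).smul_const v).const_add ζ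
      have hF' : HasFDerivAt f (fderiv ℝ f ζ) (ζ + (0:ℝ) • v) := by simpa using hF
      exact hF'.comp_hasDerivAt 0 hc
    have hslope : Tendsto (fun t => ‖slope g 0 t‖) (nhdsWithin 0 (Ioi 0))
        (nhds ‖fderiv ℝ f ζ v‖) := by
      have h1 : Tendsto (slope g 0) (nhdsWithin 0 {(0:ℝ)}ᶜ) (nhds (fderiv ℝ f ζ v)) :=
        hasDerivAt_iff_tendsto_slope.1 hd
      have h2 : Tendsto (slope g 0) (nhdsWithin 0 (Ioi 0)) (nhds (fderiv ℝ f ζ v)) :=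
        h1.mono_left (nhdsWithin_mono 0 (fun t ht => ne_of_gt ht))
      exact (continuous_norm.tendsto _).comp h2
    have hbnd : Tendsto (fun t : ℝ => M * ‖v‖ / (Real.sqrt (1 - ‖ζ + t • v‖ ^ 2) * Real.sqrt A))
        (nhdsWithin 0 (Ioi 0)) (nhds (M * ‖v‖ / A)) := by
      have hden : Tendsto (fun t : ℝ => Real.sqrt (1 - ‖ζ + t • v‖ ^ 2) * Real.sqrt A)
          (nhdsWithin 0 (Ioi 0)) (nhds (Real.sqrt A * Real.sqrt A)) := by
        apply Tendsto.mono_left _ nhdsWithin_le_nhds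
        have : Continuous (fun t : ℝ => Real.sqrt (1 - ‖ζ + t • v‖ ^ 2) * Real.sqrt A) := by
          fun_prop
        have h0 := this.tendsto 0
        simpa [hA] using h0
      have hAA : Real.sqrt A * Real.sqrt A = A := Real.mul_self_sqrt hA0.le
      have : Tendsto (fun t : ℝ => M * ‖v‖ / (Real.sqrt (1 - ‖ζ + t • v‖ ^ 2) * Real.sqrt A))
          (nhdsWithin 0 (Ioi 0)) (nhds (M * ‖v‖ / (Real.sqrt A * Real.sqrt A))) :=
        tendsto_const_nhds.div hden (by rw [hAA]; exact hA0.ne')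
      rwa [hAA] at this
    have hev : ∀ᶠ t in nhdsWithin (0:ℝ) (Ioi 0),
        ‖slope g 0 t‖ ≤ M * ‖v‖ / (Real.sqrt (1 - ‖ζ + t • v‖ ^ 2) * Real.sqrt A) := by
      have hmem : ∀ᶠ t in nhdsWithin (0:ℝ) (Ioi 0), ζ + t • v ∈ Metric.ball (0:E) 1 := by
        apply eventually_nhdsWithin_of_eventually_nhds
        have hc : ContinuousAt (fun t : ℝ => ζ + t • v) 0 := by fun_prop
        have h00 : ζ + (0:ℝ) • v ∈ Metric.ball (0:E) 1 := by simpa using hζ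
        exact hc.eventually_mem (Metric.isOpen_ball.mem_nhds h00)
      filter_upwards [hmem, self_mem_nhdsWithin] with t hmem' (ht : 0 < t)
      have hne : ζ ≠ ζ + t • v := by
        intro h
        apply hv
        have : t • v = 0 := by
          have := congrArg (fun x => x - ζ) h
          simpa using this.symm
        simpa [ht.ne'] using smul_eq_zero.1 this
      have hAt0 : 0 < Real.sqrt (1 - ‖ζ + t • v‖ ^ 2) :=
        Real.sqrt_pos.2 (by have := sq_lt_one_of_mem_ball' hmem'; linarith)
      have hsA : 0 < Real.sqrt A := Real.sqrt_pos.2 hA0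
      have hkey := hM ζ hζ (ζ + t • v) hmem' hne
      have hnorm : ‖ζ - (ζ + t • v)‖ = t * ‖v‖ := by
        rw [sub_add_cancel_left, norm_neg, norm_smul, Real.norm_eq_abs, abs_of_pos ht]
      rw [hnorm, div_le_iff₀ (by positivity)] at hkey
      have hslope_eq : ‖slope g 0 t‖ = ‖f (ζ + t • v) - f ζ‖ / t := by
        rw [slope_def_module]
        simp only [sub_zero, hg, zero_smul, add_zero]
        rw [norm_smul, Real.norm_eq_abs, abs_inv, abs_of_pos ht]
        ring
      rw [hslope_eq, div_le_div_iff₀ ht (by positivity)]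
      rw [norm_sub_rev] at hkey
      calc ‖f (ζ + t • v) - f ζ‖ * (Real.sqrt (1 - ‖ζ + t • v‖ ^ 2) * Real.sqrt A)
          = Real.sqrt A * Real.sqrt (1 - ‖ζ + t • v‖ ^ 2) * ‖f (ζ + t • v) - f ζ‖ := by ring
        _ ≤ M * (t * ‖v‖) := hkey
        _ = M * ‖v‖ * t := by ring
    have hle : ‖fderiv ℝ f ζ v‖ ≤ M * ‖v‖ / A :=
      le_of_tendsto_of_tendsto hslope hbnd hev
    calc ‖fderiv ℝ f ζ v‖ ≤ M * ‖v‖ / A := hle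
      _ = M / A * ‖v‖ := by ring
  calc A * ‖fderiv ℝ f ζ‖ ≤ A * (M / A) := mul_le_mul_of_nonneg_left hop hA0.le
    _ = M := by field_simp

end Aux

/-- Pavlović: for a `C¹` function `f : 𝔹^m → ℂ`, the Bloch seminorm
`sup (1−|ζ|²)‖Df(ζ)‖` is finite iff the Holland–Walsh quantity
`sup √(1−|ζ|²)√(1−|η|²)|f(ζ)−f(η)|/|ζ−η|` is finite, and the two suprema are equal. -/
theorem stmt4 {m : ℕ} (f : EuclideanSpace ℝ (Fin m) → ℂ)
    (hf : ContDiffOn ℝ 1 f (Metric.ball (0 : EuclideanSpace ℝ (Fin m)) 1)) :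
    ((⨆ ζ ∈ Metric.ball (0 : EuclideanSpace ℝ (Fin m)) 1,
        ENNReal.ofReal ((1 - ‖ζ‖ ^ 2) * ‖fderiv ℝ f ζ‖)) ≠ ⊤ ↔
      (⨆ ζ ∈ Metric.ball (0 : EuclideanSpace ℝ (Fin m)) 1, ⨆ η ∈ Metric.ball (0 : EuclideanSpace ℝ (Fin m)) 1, ⨆ _ : ζ ≠ η,
        ENNReal.ofReal (Real.sqrt (1 - ‖ζ‖ ^ 2) * Real.sqrt (1 - ‖η‖ ^ 2) *
          ‖f ζ - f η‖ / ‖ζ - η‖)) ≠ ⊤) ∧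
    (⨆ ζ ∈ Metric.ball (0 : EuclideanSpace ℝ (Fin m)) 1,
        ENNReal.ofReal ((1 - ‖ζ‖ ^ 2) * ‖fderiv ℝ f ζ‖)) =
      ⨆ ζ ∈ Metric.ball (0 : EuclideanSpace ℝ (Fin m)) 1, ⨆ η ∈ Metric.ball (0 : EuclideanSpace ℝ (Fin m)) 1, ⨆ _ : ζ ≠ η,
        ENNReal.ofReal (Real.sqrt (1 - ‖ζ‖ ^ 2) * Real.sqrt (1 - ‖η‖ ^ 2) *
          ‖f ζ - f η‖ / ‖ζ - η‖) := by
  classical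
  set b := Metric.ball (0 : EuclideanSpace ℝ (Fin m)) 1 with hb
  set S1 := (⨆ ζ ∈ b, ENNReal.ofReal ((1 - ‖ζ‖ ^ 2) * ‖fderiv ℝ f ζ‖)) with hS1
  set S2 := (⨆ ζ ∈ b, ⨆ η ∈ b, ⨆ _ : ζ ≠ η,
      ENNReal.ofReal (Real.sqrt (1 - ‖ζ‖ ^ 2) * Real.sqrt (1 - ‖η‖ ^ 2) *
        ‖f ζ - f η‖ / ‖ζ - η‖)) with hS2
  have main : S1 = S2 := by
    apply le_antisymm
    · -- S1 ≤ S2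
      apply iSup₂_le
      intro ζ hζ
      rcases eq_or_ne S2 ⊤ with h2 | h2
      · rw [h2]; exact le_top
      set M := S2.toReal with hMdef
      have hM0 : 0 ≤ M := ENNReal.toReal_nonneg
      have hM : ∀ x ∈ b, ∀ y ∈ b, x ≠ y →
          Real.sqrt (1 - ‖x‖ ^ 2) * Real.sqrt (1 - ‖y‖ ^ 2) * ‖f x - f y‖ / ‖x - y‖ ≤ M := by
        intro x hx y hy hne
        have h1 : ENNReal.ofReal (Real.sqrt (1 - ‖x‖ ^ 2) * Real.sqrt (1 - ‖y‖ ^ 2) *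
            ‖f x - f y‖ / ‖x - y‖) ≤ S2 := by
          calc ENNReal.ofReal (Real.sqrt (1 - ‖x‖ ^ 2) * Real.sqrt (1 - ‖y‖ ^ 2) *
                ‖f x - f y‖ / ‖x - y‖)
              ≤ ⨆ _ : x ≠ y, ENNReal.ofReal (Real.sqrt (1 - ‖x‖ ^ 2) * Real.sqrt (1 - ‖y‖ ^ 2) *
                ‖f x - f y‖ / ‖x - y‖) :=
              le_iSup (fun _ : x ≠ y => ENNReal.ofReal (Real.sqrt (1 - ‖x‖ ^ 2) *
                Real.sqrt (1 - ‖y‖ ^ 2) * ‖f x - f y‖ / ‖x - y‖)) hne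
            _ ≤ ⨆ η ∈ b, ⨆ _ : x ≠ η, ENNReal.ofReal (Real.sqrt (1 - ‖x‖ ^ 2) *
                Real.sqrt (1 - ‖η‖ ^ 2) * ‖f x - f η‖ / ‖x - η‖) :=
              le_biSup (fun η => ⨆ _ : x ≠ η, ENNReal.ofReal (Real.sqrt (1 - ‖x‖ ^ 2) *
                Real.sqrt (1 - ‖η‖ ^ 2) * ‖f x - f η‖ / ‖x - η‖)) hy
            _ ≤ S2 := by
              rw [hS2]
              exact le_biSup (fun ζ => ⨆ η ∈ b, ⨆ _ : ζ ≠ η, ENNReal.ofReal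
                (Real.sqrt (1 - ‖ζ‖ ^ 2) * Real.sqrt (1 - ‖η‖ ^ 2) * ‖f ζ - f η‖ / ‖ζ - η‖)) hx
        have hnn : 0 ≤ Real.sqrt (1 - ‖x‖ ^ 2) * Real.sqrt (1 - ‖y‖ ^ 2) *
            ‖f x - f y‖ / ‖x - y‖ := by positivity
        have := ENNReal.toReal_mono h2 h1
        rwa [ENNReal.toReal_ofReal hnn] at this
      have hval : (1 - ‖ζ‖ ^ 2) * ‖fderiv ℝ f ζ‖ ≤ M := bloch_le f hf M hM0 hM hζ
      calc ENNReal.ofReal ((1 - ‖ζ‖ ^ 2) * ‖fderiv ℝ f ζ‖) ≤ ENNReal.ofReal M :=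
          ENNReal.ofReal_le_ofReal hval
        _ = S2 := ENNReal.ofReal_toReal h2
    · -- S2 ≤ S1
      apply iSup₂_le
      intro ζ hζ
      apply iSup₂_le
      intro η hη
      apply iSup_le
      intro hne
      rcases eq_or_ne S1 ⊤ with h1 | h1
      · rw [h1]; exact le_top
      set M := S1.toReal with hMdef
      have hM : ∀ x ∈ b, (1 - ‖x‖ ^ 2) * ‖fderiv ℝ f x‖ ≤ M := by
        intro x hx
        have hle : ENNReal.ofReal ((1 - ‖x‖ ^ 2) * ‖fderiv ℝ f x‖) ≤ S1 := by
          rw [hS1]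
          exact le_biSup (fun ζ => ENNReal.ofReal ((1 - ‖ζ‖ ^ 2) * ‖fderiv ℝ f ζ‖)) hx
        have hnn : 0 ≤ (1 - ‖x‖ ^ 2) * ‖fderiv ℝ f x‖ := by
          have := sq_lt_one_of_mem_ball' hx
          exact mul_nonneg (by linarith) (norm_nonneg _)
        have := ENNReal.toReal_mono h1 hle
        rwa [ENNReal.toReal_ofReal hnn] at this
      have hA0 : 0 < 1 - ‖ζ‖ ^ 2 := by have := sq_lt_one_of_mem_ball' hζ; linarith
      have hC0 : 0 < 1 - ‖η‖ ^ 2 := by have := sq_lt_one_of_mem_ball' hη; linarith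
      have hζη : 0 < ‖ζ - η‖ := by rwa [norm_pos_iff, sub_ne_zero]
      have hb' := HW_bound f hf M hM hζ hη
      rw [Real.sqrt_mul hA0.le] at hb'
      have hval : Real.sqrt (1 - ‖ζ‖ ^ 2) * Real.sqrt (1 - ‖η‖ ^ 2) *
          ‖f ζ - f η‖ / ‖ζ - η‖ ≤ M := by
        rw [div_le_iff₀ hζη]
        have hnorm1 : ‖f ζ - f η‖ = ‖f η - f ζ‖ := norm_sub_rev _ _
        have hnorm2 : ‖ζ - η‖ = ‖η - ζ‖ := norm_sub_rev _ _
        rw [hnorm1, hnorm2]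
        have hs : 0 < Real.sqrt (1 - ‖ζ‖ ^ 2) * Real.sqrt (1 - ‖η‖ ^ 2) := by positivity
        calc Real.sqrt (1 - ‖ζ‖ ^ 2) * Real.sqrt (1 - ‖η‖ ^ 2) * ‖f η - f ζ‖
            ≤ Real.sqrt (1 - ‖ζ‖ ^ 2) * Real.sqrt (1 - ‖η‖ ^ 2) *
              (M * ‖η - ζ‖ * (Real.sqrt (1 - ‖ζ‖ ^ 2) * Real.sqrt (1 - ‖η‖ ^ 2))⁻¹) := by
              apply mul_le_mul_of_nonneg_left hb' hs.le
          _ = M * ‖η - ζ‖ := by field_simp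
      calc ENNReal.ofReal (Real.sqrt (1 - ‖ζ‖ ^ 2) * Real.sqrt (1 - ‖η‖ ^ 2) *
            ‖f ζ - f η‖ / ‖ζ - η‖) ≤ ENNReal.ofReal M := ENNReal.ofReal_le_ofReal hval
        _ = S1 := ENNReal.ofReal_toReal h1
  exact ⟨by rw [main], main⟩
end

section
/- Let Ω ⊆ ℝ^m be a convex domain and let w be an everywhere positive continuous function on Ω that is a decreasing function of |ζ|. Then for every continuously differentiable mapping f : Ω → ℝ^n, sup_{ζ∈Ω} w(ζ)‖Df(ζ)‖ = sup_{ζ,η∈Ω, ζ≠η} min{w(ζ), w(η)}·|f(ζ)−f(η)|/|ζ−η|. -/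
open Set Filter

/-- for a convex domain `Ω` and a positive continuous weight `w` which is
decreasing in `|ζ|`, the `w`-Bloch seminorm equals the Lipschitz seminorm with weight
`min(w(ζ), w(η))`. -/
theorem stmt8 {m n : ℕ} (Ω : Set (EuclideanSpace ℝ (Fin m)))
    (hΩ_open : IsOpen Ω) (hΩ_ne : Ω.Nonempty) (hΩ_conv : Convex ℝ Ω)
    (w : EuclideanSpace ℝ (Fin m) → ℝ) (hw_pos : ∀ ζ ∈ Ω, 0 < w ζ) (hw_cont : ContinuousOn w Ω)
    (hw_dec : ∀ ζ ∈ Ω, ∀ η ∈ Ω, ‖ζ‖ ≤ ‖η‖ → w η ≤ w ζ)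
    (f : EuclideanSpace ℝ (Fin m) → EuclideanSpace ℝ (Fin n)) (hf : ContDiffOn ℝ 1 f Ω) :
    (⨆ ζ ∈ Ω, ENNReal.ofReal (w ζ * ‖fderiv ℝ f ζ‖)) =
      ⨆ ζ ∈ Ω, ⨆ η ∈ Ω, ⨆ _ : ζ ≠ η,
        ENNReal.ofReal (min (w ζ) (w η) * ‖f ζ - f η‖ / ‖ζ - η‖) := by
  set L := fun ζ => fderiv ℝ f ζ with hL
  have hdiff : ∀ x ∈ Ω, DifferentiableAt ℝ f x := fun x hx =>
    (hf.contDiffAt (hΩ_open.mem_nhds hx)).differentiableAt one_ne_zero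
  apply le_antisymm
  · -- LHS ≤ RHS
    set S := ⨆ ζ ∈ Ω, ⨆ η ∈ Ω, ⨆ _ : ζ ≠ η,
        ENNReal.ofReal (min (w ζ) (w η) * ‖f ζ - f η‖ / ‖ζ - η‖) with hS
    refine iSup₂_le fun ζ hζ => ?_
    by_contra hlt
    rw [not_le] at hlt
    have hStop : S ≠ ⊤ := hlt.ne_top
    have hwζ : 0 < w ζ := hw_pos ζ hζ
    have ha : S.toReal < w ζ * ‖L ζ‖ := (ENNReal.lt_ofReal_iff_toReal_lt hStop).mp hlt
    set c := (S.toReal + w ζ * ‖L ζ‖) / 2 with hc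
    have hc1 : S.toReal < c := by simp only [hc]; linarith
    have hc2 : c < w ζ * ‖L ζ‖ := by simp only [hc]; linarith
    have hc0 : 0 ≤ c := le_trans ENNReal.toReal_nonneg hc1.le
    have hcw : c / w ζ < ‖L ζ‖ := (div_lt_iff₀ hwζ).mpr (by linarith [hc2, mul_comm (w ζ) ‖L ζ‖] )
    obtain ⟨u, hu1, hu2⟩ := (L ζ).exists_lt_apply_of_lt_opNorm hcw
    have hLu_pos : 0 < ‖L ζ u‖ := lt_of_le_of_lt (div_nonneg hc0 hwζ.le) hu2
    have hu0 : u ≠ 0 := by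
      intro h; rw [h, map_zero, norm_zero] at hLu_pos; exact lt_irrefl 0 hLu_pos
    have hun : 0 < ‖u‖ := norm_pos_iff.mpr hu0
    -- derivative of t ↦ f (ζ + t • u) at 0
    have hline : HasDerivAt (fun t : ℝ => ζ + t • u) u 0 := by
      have := ((hasDerivAt_id (0:ℝ)).smul_const u).const_add ζ
      simpa using this
    have hg : HasDerivAt (fun t : ℝ => f (ζ + t • u)) (L ζ u) 0 := by
      have hfd : HasFDerivAt f (L ζ) (ζ + (0:ℝ) • u) := by
        simpa using (hdiff ζ hζ).hasFDerivAt
      exact (hfd.comp_hasDerivAt 0 hline)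
    have hslope := hasDerivAt_iff_tendsto_slope.mp hg
    -- w(ζ + t u) → w ζ
    have hwcont : ContinuousAt w ζ := hw_cont.continuousAt (hΩ_open.mem_nhds hζ)
    have hline_cont : Filter.Tendsto (fun t : ℝ => ζ + t • u) (nhds 0) (nhds ζ) := by
      have : Continuous (fun t : ℝ => ζ + t • u) :=
        continuous_const.add (continuous_id.smul continuous_const)
      simpa using this.tendsto 0
    have hwt : Filter.Tendsto (fun t : ℝ => w (ζ + t • u)) (nhds 0) (nhds (w ζ)) :=
      hwcont.tendsto.comp hline_cont
    set ψ := fun t : ℝ => min (w ζ) (w (ζ + t • u)) * ‖slope (fun s : ℝ => f (ζ + s • u)) 0 t‖ / ‖u‖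
      with hψ
    have hψt : Filter.Tendsto ψ (nhdsWithin 0 {(0:ℝ)}ᶜ) (nhds (w ζ * ‖L ζ u‖ / ‖u‖)) := by
      have h0 : Filter.Tendsto (fun t : ℝ => min (w ζ) (w (ζ + t • u)))
          (nhds 0) (nhds (min (w ζ) (w ζ))) := Filter.Tendsto.min tendsto_const_nhds hwt
      rw [min_self] at h0
      have h1 : Filter.Tendsto (fun t : ℝ => min (w ζ) (w (ζ + t • u)))
          (nhdsWithin 0 {(0:ℝ)}ᶜ) (nhds (w ζ)) := h0.mono_left nhdsWithin_le_nhds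
      exact ((h1.mul hslope.norm).div_const ‖u‖)
    have hlim_gt : c < w ζ * ‖L ζ u‖ / ‖u‖ := by
      have h1 : c < w ζ * ‖L ζ u‖ := by
        calc c = (c / w ζ) * w ζ := by field_simp
        _ < ‖L ζ u‖ * w ζ := by exact mul_lt_mul_of_pos_right hu2 hwζ
        _ = w ζ * ‖L ζ u‖ := mul_comm _ _
      calc c < w ζ * ‖L ζ u‖ := h1
      _ ≤ w ζ * ‖L ζ u‖ / ‖u‖ := by
          rw [le_div_iff₀ hun]
          have : w ζ * ‖L ζ u‖ * ‖u‖ ≤ w ζ * ‖L ζ u‖ * 1 :=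
            mul_le_mul_of_nonneg_left hu1.le (by positivity)
          simpa using this
    have hev1 : ∀ᶠ t in nhdsWithin (0:ℝ) {(0:ℝ)}ᶜ, c < ψ t :=
      hψt.eventually_const_lt hlim_gt
    have hev2 : ∀ᶠ t in nhdsWithin (0:ℝ) {(0:ℝ)}ᶜ, ζ + t • u ∈ Ω :=
      (hline_cont.eventually (hΩ_open.eventually_mem hζ)).filter_mono nhdsWithin_le_nhds
    have hev3 : ∀ᶠ t in nhdsWithin (0:ℝ) {(0:ℝ)}ᶜ, t ≠ 0 := by
      have := self_mem_nhdsWithin (a := (0:ℝ)) (s := {(0:ℝ)}ᶜ)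
      filter_upwards [this] with t ht using ht
    obtain ⟨t, htc, htΩ, ht0⟩ := (hev1.and (hev2.and hev3)).exists
    set η := ζ + t • u with hη
    have hne : ζ ≠ η := by
      simp only [hη, ne_eq, left_eq_add, smul_eq_zero]
      push_neg
      exact ⟨ht0, hu0⟩
    -- ψ t equals the quotient term
    have hval : ψ t = min (w ζ) (w η) * ‖f ζ - f η‖ / ‖ζ - η‖ := by
      have hden : ‖ζ - η‖ = |t| * ‖u‖ := by
        simp [hη, norm_smul, Real.norm_eq_abs]
      have hnum : ‖slope (fun s : ℝ => f (ζ + s • u)) 0 t‖ = ‖f ζ - f η‖ / |t| := by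
        rw [slope_def_module]
        simp only [sub_zero, zero_smul, add_zero]
        rw [norm_smul, norm_inv, Real.norm_eq_abs, ← norm_sub_rev (f ζ), div_eq_inv_mul]
      rw [hψ]
      simp only
      rw [hnum, hden]
      have hat : (0:ℝ) < |t| := abs_pos.mpr ht0
      field_simp
      try ring
    have hterm : ENNReal.ofReal (min (w ζ) (w η) * ‖f ζ - f η‖ / ‖ζ - η‖) ≤ S := by
      rw [hS]
      exact le_iSup_of_le ζ (le_iSup_of_le hζ (le_iSup_of_le η (le_iSup_of_le htΩ
        (le_iSup_of_le hne le_rfl))))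
    have hle : min (w ζ) (w η) * ‖f ζ - f η‖ / ‖ζ - η‖ ≤ S.toReal :=
      (ENNReal.ofReal_le_iff_le_toReal hStop).mp hterm
    rw [← hval] at hle
    linarith [htc, hc1]
  · -- RHS ≤ LHS
    set T := ⨆ ζ ∈ Ω, ENNReal.ofReal (w ζ * ‖L ζ‖) with hT
    refine iSup₂_le fun ζ hζ => iSup₂_le fun η hη => iSup_le fun hne => ?_
    by_cases hTtop : T = ⊤
    · rw [hTtop]; exact le_top
    set M := T.toReal with hM
    have hM0 : 0 ≤ M := ENNReal.toReal_nonneg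
    have hbound : ∀ x ∈ Ω, w x * ‖L x‖ ≤ M := by
      intro x hx
      refine (ENNReal.ofReal_le_iff_le_toReal hTtop).mp ?_
      rw [hT]
      exact le_iSup_of_le x (le_iSup_of_le hx le_rfl)
    set μ := min (w ζ) (w η) with hμ
    have hμ0 : 0 < μ := lt_min (hw_pos ζ hζ) (hw_pos η hη)
    have hseg : segment ℝ ζ η ⊆ Ω := hΩ_conv.segment_subset hζ hη
    have hμw : ∀ x ∈ segment ℝ ζ η, μ ≤ w x := by
      intro x hx
      have hxn : ‖x‖ ≤ max ‖ζ‖ ‖η‖ := by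
        have hmem : x ∈ Metric.closedBall (0 : EuclideanSpace ℝ (Fin m)) (max ‖ζ‖ ‖η‖) := by
          refine (convex_closedBall _ _).segment_subset ?_ ?_ hx <;>
            rw [mem_closedBall_zero_iff]
          · exact le_max_left _ _
          · exact le_max_right _ _
        rwa [mem_closedBall_zero_iff] at hmem
      rcases le_total ‖ζ‖ ‖η‖ with h | h
      · have : w η ≤ w x := hw_dec x (hseg hx) η hη (by rwa [max_eq_right h] at hxn)
        exact le_trans (min_le_right _ _) this
      · have : w ζ ≤ w x := hw_dec x (hseg hx) ζ hζ (by rwa [max_eq_left h] at hxn)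
        exact le_trans (min_le_left _ _) this
    have hDbound : ∀ x ∈ segment ℝ ζ η, ‖L x‖ ≤ M / μ := by
      intro x hx
      have hwx : 0 < w x := hw_pos x (hseg hx)
      rw [le_div_iff₀ hμ0]
      calc ‖L x‖ * μ ≤ ‖L x‖ * w x := by
            exact mul_le_mul_of_nonneg_left (hμw x hx) (norm_nonneg _)
      _ = w x * ‖L x‖ := mul_comm _ _
      _ ≤ M := hbound x (hseg hx)
    have hmvt : ‖f ζ - f η‖ ≤ M / μ * ‖ζ - η‖ :=
      (convex_segment ζ η).norm_image_sub_le_of_norm_fderiv_le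
        (fun x hx => hdiff x (hseg hx)) hDbound
        (right_mem_segment ℝ ζ η) (left_mem_segment ℝ ζ η)
    have hnm : 0 < ‖ζ - η‖ := by
      rw [norm_pos_iff, sub_ne_zero]; exact hne
    have hfinal : μ * ‖f ζ - f η‖ / ‖ζ - η‖ ≤ M := by
      rw [div_le_iff₀ hnm]
      calc μ * ‖f ζ - f η‖ ≤ μ * (M / μ * ‖ζ - η‖) :=
            mul_le_mul_of_nonneg_left hmvt hμ0.le
      _ = M * ‖ζ - η‖ := by field_simp
    calc ENNReal.ofReal (μ * ‖f ζ - f η‖ / ‖ζ - η‖) ≤ ENNReal.ofReal M :=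
          ENNReal.ofReal_le_ofReal hfinal
    _ = T := ENNReal.ofReal_toReal hTtop
end

section
/- Let Ω ⊆ ℝ^m be a domain, let w be an everywhere positive continuous function on Ω, and let d_w be the w-distance on Ω. Then for every continuously differentiable mapping f : Ω → ℝ^n, sup_{ζ∈Ω} w(ζ)‖Df(ζ)‖ = sup_{ζ,η∈Ω, ζ≠η} |f(ζ)−f(η)|/d_w(ζ,η). -/
open Set Filter MeasureTheory intervalIntegral
open scoped ENNReal NNReal

namespace Aux

variable {m n : ℕ} {Ω : Set (EuclideanSpace ℝ (Fin m))} {ζ η : EuclideanSpace ℝ (Fin m)}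
  {w : EuclideanSpace ℝ (Fin m) → ℝ}

/-- the integrand of wLength -/
noncomputable def rho (w : EuclideanSpace ℝ (Fin m) → ℝ) (γ : PiecewiseSmoothCurve Ω ζ η)
    (t : ℝ) : ℝ := ‖derivWithin γ.toFun (Icc 0 1) t‖ / w (γ.toFun t)

lemma piece_sub (γ : PiecewiseSmoothCurve Ω ζ η) (i : Fin γ.num) :
    Icc (γ.part i.castSucc) (γ.part i.succ) ⊆ Icc 0 1 := by
  apply Icc_subset_Icc
  · rw [← γ.part_zero]; exact γ.mono (Fin.zero_le _)
  · rw [← γ.part_last]; exact γ.mono (Fin.le_last _)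

lemma piece_deriv (γ : PiecewiseSmoothCurve Ω ζ η) (i : Fin γ.num) {t : ℝ}
    (ht : t ∈ Ioo (γ.part i.castSucc) (γ.part i.succ)) :
    HasDerivAt γ.toFun (derivWithin γ.toFun (Icc 0 1) t) t := by
  have hnhds : Icc (γ.part i.castSucc) (γ.part i.succ) ∈ nhds t := Icc_mem_nhds ht.1 ht.2
  have hd : DifferentiableAt ℝ γ.toFun t :=
    (((γ.smoothOn i).differentiableOn (by simp)) t ⟨ht.1.le, ht.2.le⟩).differentiableAt hnhds
  have ht01 : t ∈ Icc (0:ℝ) 1 := piece_sub γ i ⟨ht.1.le, ht.2.le⟩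
  rw [hd.derivWithin ((uniqueDiffOn_Icc one_pos) t ht01)]
  exact hd.hasDerivAt

lemma rho_integrableOn_piece (hw_pos : ∀ ζ ∈ Ω, 0 < w ζ) (hw_cont : ContinuousOn w Ω)
    (γ : PiecewiseSmoothCurve Ω ζ η) (i : Fin γ.num) :
    IntegrableOn (rho w γ) (Icc (γ.part i.castSucc) (γ.part i.succ)) := by
  set c := γ.part i.castSucc with hc
  set d := γ.part i.succ with hd
  have hcd : c ≤ d := γ.mono (Fin.castSucc_lt_succ (i := i)).le
  rcases eq_or_lt_of_le hcd with h | hlt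
  · rw [← h]
    exact (integrableOn_Icc_iff_integrableOn_Ioc).mpr (by simp [IntegrableOn])
  · -- the comparison function, continuous on the piece
    set F : ℝ → ℝ := fun t => ‖derivWithin γ.toFun (Icc c d) t‖ / w (γ.toFun t) with hF
    have hFcont : ContinuousOn F (Icc c d) := by
      apply ContinuousOn.div
      · exact ((γ.smoothOn i).continuousOn_derivWithin (uniqueDiffOn_Icc hlt) (by simp)).norm
      · exact hw_cont.comp (γ.continuousOn.mono (piece_sub γ i))
          (fun t ht => γ.maps_into t (piece_sub γ i ht))
      · exact fun t ht => (hw_pos _ (γ.maps_into t (piece_sub γ i ht))).ne'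
    have hFint : IntegrableOn F (Icc c d) := hFcont.integrableOn_Icc
    have heq : ∀ t ∈ Ioo c d, F t = rho w γ t := by
      intro t ht
      have hdd : HasDerivAt γ.toFun (derivWithin γ.toFun (Icc 0 1) t) t := piece_deriv γ i ht
      have h2 : derivWithin γ.toFun (Icc c d) t = derivWithin γ.toFun (Icc 0 1) t := by
        rw [hdd.differentiableAt.derivWithin ((uniqueDiffOn_Icc hlt) t (Ioo_subset_Icc_self ht)),
          hdd.deriv]
      simp only [hF, rho, h2]
    have hIoo : IntegrableOn (rho w γ) (Ioo c d) := by
      apply (hFint.mono_set Ioo_subset_Icc_self).congr_fun heq measurableSet_Ioo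
    rw [IntegrableOn, ← Measure.restrict_congr_set (Ioo_ae_eq_Icc (μ := volume) (a := c) (b := d))]
    exact hIoo

lemma exists_partition (γ : PiecewiseSmoothCurve Ω ζ η) :
    ∃ a : ℕ → ℝ, a 0 = 0 ∧ a γ.num = 1 ∧
      ∀ k, ∀ hk : k < γ.num, a k = γ.part (⟨k, hk⟩ : Fin γ.num).castSucc ∧
        a (k+1) = γ.part (⟨k, hk⟩ : Fin γ.num).succ := by
  refine ⟨fun k => γ.part ⟨min k γ.num, Nat.lt_succ_of_le (min_le_right _ _)⟩, ?_, ?_, ?_⟩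
  · have : (⟨min 0 γ.num, Nat.lt_succ_of_le (min_le_right _ _)⟩ : Fin (γ.num+1)) = 0 := by
      ext; simp
    simp only [this]; exact γ.part_zero
  · have : (⟨min γ.num γ.num, Nat.lt_succ_of_le (min_le_right _ _)⟩ : Fin (γ.num+1))
        = Fin.last γ.num := by ext; simp
    simp only [this]; exact γ.part_last
  · intro k hk
    constructor
    · have efin : (⟨min k γ.num, Nat.lt_succ_of_le (min_le_right _ _)⟩ : Fin (γ.num+1))
          = (⟨k, hk⟩ : Fin γ.num).castSucc := Fin.ext (by simp [Nat.min_eq_left hk.le])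
      simp only [efin]
    · have efin : (⟨min (k+1) γ.num, Nat.lt_succ_of_le (min_le_right _ _)⟩ : Fin (γ.num+1))
          = (⟨k, hk⟩ : Fin γ.num).succ := Fin.ext (by simp [Nat.min_eq_left hk])
      simp only [efin]

lemma rho_intervalIntegrable (hw_pos : ∀ ζ ∈ Ω, 0 < w ζ) (hw_cont : ContinuousOn w Ω)
    (γ : PiecewiseSmoothCurve Ω ζ η) :
    IntervalIntegrable (rho w γ) MeasureTheory.volume 0 1 := by
  obtain ⟨a, h0, hlast, hab⟩ := exists_partition γ
  have key : ∀ k < γ.num, IntervalIntegrable (rho w γ) volume (a k) (a (k+1)) := by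
    intro k hk
    obtain ⟨e1, e2⟩ := hab k hk
    rw [e1, e2]
    apply MeasureTheory.IntegrableOn.intervalIntegrable
    rw [uIcc_of_le (γ.mono (Fin.castSucc_lt_succ (i := _)).le)]
    exact rho_integrableOn_piece hw_pos hw_cont γ _
  have := IntervalIntegrable.trans_iterate key
  rwa [h0, hlast] at this

/-- master FTC estimate along a curve -/
lemma curve_bound (hw_pos : ∀ ζ ∈ Ω, 0 < w ζ) (hw_cont : ContinuousOn w Ω)
    (γ : PiecewiseSmoothCurve Ω ζ η) (g G' : ℝ → ℝ) (K : ℝ)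
    (hg_cont : ContinuousOn g (Icc 0 1))
    (hg' : ∀ t ∈ Ioo (0:ℝ) 1, HasDerivAt γ.toFun (derivWithin γ.toFun (Icc 0 1) t) t →
      HasDerivWithinAt g (G' t) (Ioi t) t ∧ G' t ≤ K * rho w γ t) :
    g 1 - g 0 ≤ K * γ.wLength w := by
  obtain ⟨a, h0, hlast, hab⟩ := exists_partition γ
  have hpieceInt : ∀ i : Fin γ.num,
      IntegrableOn (fun t => K * rho w γ t) (Icc (γ.part i.castSucc) (γ.part i.succ)) :=
    fun i => (rho_integrableOn_piece hw_pos hw_cont γ i).const_mul K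
  have hpiece : ∀ i : Fin γ.num, g (γ.part i.succ) - g (γ.part i.castSucc) ≤
      ∫ t in (γ.part i.castSucc)..(γ.part i.succ), K * rho w γ t := by
    intro i
    set c := γ.part i.castSucc
    set d := γ.part i.succ
    have hcd : c ≤ d := γ.mono (Fin.castSucc_lt_succ (i := i)).le
    have hc0 : (0:ℝ) ≤ c := by
      rw [← γ.part_zero]; exact γ.mono (Fin.zero_le _)
    have hd1 : d ≤ 1 := by
      rw [← γ.part_last]; exact γ.mono (Fin.le_last _)
    apply sub_le_integral_of_hasDeriv_right_of_le hcd (hg_cont.mono (piece_sub γ i))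
      _ (hpieceInt i)
    · intro x hx
      exact (hg' x ⟨lt_of_le_of_lt hc0 hx.1, lt_of_lt_of_le hx.2 hd1⟩ (piece_deriv γ i hx)).2
    · intro x hx
      exact (hg' x ⟨lt_of_le_of_lt hc0 hx.1, lt_of_lt_of_le hx.2 hd1⟩ (piece_deriv γ i hx)).1
  have keyInt : ∀ k < γ.num, IntervalIntegrable (fun t => K * rho w γ t) volume (a k) (a (k+1)) := by
    intro k hk
    obtain ⟨e1, e2⟩ := hab k hk
    rw [e1, e2]
    apply MeasureTheory.IntegrableOn.intervalIntegrable
    rw [uIcc_of_le (γ.mono (Fin.castSucc_lt_succ (i := _)).le)]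
    exact hpieceInt _
  have tele : g 1 - g 0 = ∑ k ∈ Finset.range γ.num, (g (a (k+1)) - g (a k)) := by
    rw [Finset.sum_range_sub (fun k => g (a k)), h0, hlast]
  have hsum : ∑ k ∈ Finset.range γ.num, ∫ t in (a k)..(a (k+1)), K * rho w γ t
      = ∫ t in (0:ℝ)..1, K * rho w γ t := by
    have := intervalIntegral.sum_integral_adjacent_intervals keyInt
    rwa [h0, hlast] at this
  calc g 1 - g 0 = ∑ k ∈ Finset.range γ.num, (g (a (k+1)) - g (a k)) := tele
    _ ≤ ∑ k ∈ Finset.range γ.num, ∫ t in (a k)..(a (k+1)), K * rho w γ t := by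
        apply Finset.sum_le_sum
        intro k hk
        obtain ⟨e1, e2⟩ := hab k (Finset.mem_range.mp hk)
        rw [e1, e2]; exact hpiece _
    _ = ∫ t in (0:ℝ)..1, K * rho w γ t := hsum
    _ = K * γ.wLength w := by
        rw [intervalIntegral.integral_const_mul]; rfl

lemma wLength_nonneg (hw_pos : ∀ ζ ∈ Ω, 0 < w ζ) (γ : PiecewiseSmoothCurve Ω ζ η) :
    0 ≤ γ.wLength w := by
  apply intervalIntegral.integral_nonneg zero_le_one
  intro u hu
  exact div_nonneg (norm_nonneg _) (hw_pos _ (γ.maps_into u hu)).le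


lemma wDist_nonneg (hw_pos : ∀ ζ ∈ Ω, 0 < w ζ) (ζ η : EuclideanSpace ℝ (Fin m)) :
    0 ≤ wDist Ω w ζ η :=
  Real.sInf_nonneg (fun _ hL => by obtain ⟨γ, rfl⟩ := hL; exact wLength_nonneg hw_pos γ)

lemma exists_segment {ζc η : EuclideanSpace ℝ (Fin m)} {r : ℝ}
    (hball : Metric.ball ζc r ⊆ Ω) (hη : ‖η - ζc‖ < r) :
    ∃ γ : PiecewiseSmoothCurve Ω ζc η, ∀ t ∈ Icc (0:ℝ) 1,
      derivWithin γ.toFun (Icc 0 1) t = η - ζc ∧ γ.toFun t = ζc + t • (η - ζc) := by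
  have hr : 0 < r := lt_of_le_of_lt (norm_nonneg _) hη
  have hd : ∀ t : ℝ, HasDerivAt (fun u : ℝ => ζc + u • (η - ζc)) (η - ζc) t := by
    intro t
    have := ((hasDerivAt_id t).smul_const (η - ζc)).const_add ζc
    simpa using this
  refine ⟨⟨fun t => ζc + t • (η - ζc), ?_, 1, fun i => (i : ℕ), ?_, ?_, ?_, ?_, ?_, ?_, ?_⟩, ?_⟩
  · exact (continuous_const.add (continuous_id.smul continuous_const)).continuousOn
  · intro a b hab
    exact_mod_cast Nat.cast_le.mpr hab
  · simp
  · simp [Fin.last]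
  · intro i
    exact ((contDiff_const.add (contDiff_id.smul contDiff_const)).contDiffOn)
  · intro t ht
    apply hball
    rw [Metric.mem_ball, dist_eq_norm]
    have : ζc + t • (η - ζc) - ζc = t • (η - ζc) := by abel
    rw [this, norm_smul]
    calc ‖t‖ * ‖η - ζc‖ ≤ 1 * ‖η - ζc‖ := by
          apply mul_le_mul_of_nonneg_right _ (norm_nonneg _)
          rw [Real.norm_eq_abs, abs_le]; constructor <;> linarith [ht.1, ht.2]
      _ < r := by rwa [one_mul]
  · simp
  · simp
  · intro t ht
    refine ⟨?_, rfl⟩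
    exact ((hd t).hasDerivWithinAt.derivWithin ((uniqueDiffOn_Icc one_pos) t ht))

lemma wDist_le_seg {ζc η : EuclideanSpace ℝ (Fin m)} {r b : ℝ}
    (hw_pos : ∀ ζ ∈ Ω, 0 < w ζ) (hw_cont : ContinuousOn w Ω)
    (hball : Metric.ball ζc r ⊆ Ω) (hη : ‖η - ζc‖ < r)
    (hb : 0 < b) (hlow : ∀ x ∈ Metric.ball ζc r, b ≤ w x) :
    wDist Ω w ζc η ≤ ‖η - ζc‖ / b := by
  obtain ⟨γ, hγ⟩ := exists_segment (Ω := Ω) hball hη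
  have hmem : ∀ t ∈ Icc (0:ℝ) 1, γ.toFun t ∈ Metric.ball ζc r := by
    intro t ht
    rw [(hγ t ht).2, Metric.mem_ball, dist_eq_norm]
    have : ζc + t • (η - ζc) - ζc = t • (η - ζc) := by abel
    rw [this, norm_smul]
    calc ‖t‖ * ‖η - ζc‖ ≤ 1 * ‖η - ζc‖ := by
          apply mul_le_mul_of_nonneg_right _ (norm_nonneg _)
          rw [Real.norm_eq_abs, abs_le]; constructor <;> linarith [ht.1, ht.2]
      _ < r := by rwa [one_mul]
  have hlen : γ.wLength w ≤ ‖η - ζc‖ / b := by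
    have he : ∀ t ∈ Icc (0:ℝ) 1,
        ‖derivWithin γ.toFun (Icc 0 1) t‖ / w (γ.toFun t) = ‖η - ζc‖ / w (γ.toFun t) := by
      intro t ht; rw [(hγ t ht).1]
    have hcongr : γ.wLength w = ∫ t in (0:ℝ)..1, ‖η - ζc‖ / w (γ.toFun t) := by
      apply intervalIntegral.integral_congr
      intro t ht
      rw [uIcc_of_le zero_le_one] at ht
      exact he t ht
    rw [hcongr]
    have hwcont : ContinuousOn (fun t => ‖η - ζc‖ / w (γ.toFun t)) (Icc (0:ℝ) 1) := by
      apply ContinuousOn.div continuousOn_const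
        (hw_cont.comp γ.continuousOn (fun t ht => γ.maps_into t ht))
      exact fun t ht => (hw_pos _ (γ.maps_into t ht)).ne'
    calc (∫ t in (0:ℝ)..1, ‖η - ζc‖ / w (γ.toFun t))
        ≤ ∫ _t in (0:ℝ)..1, ‖η - ζc‖ / b := by
          apply intervalIntegral.integral_mono_on zero_le_one
            (hwcont.intervalIntegrable_of_Icc zero_le_one) intervalIntegrable_const
          intro t ht
          exact div_le_div_of_nonneg_left (norm_nonneg _) hb (hlow _ (hmem t ht))
      _ = ‖η - ζc‖ / b := by simp
  refine le_trans (csInf_le ?_ ⟨γ, rfl⟩) hlen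
  exact ⟨0, fun L hL => by obtain ⟨γ', rfl⟩ := hL; exact wLength_nonneg hw_pos γ'⟩


lemma wLength_ge {ζc η : EuclideanSpace ℝ (Fin m)} {r C : ℝ}
    (hw_pos : ∀ ζ ∈ Ω, 0 < w ζ) (hw_cont : ContinuousOn w Ω)
    (hball : Metric.ball ζc r ⊆ Ω) (hη : ‖η - ζc‖ < r) (hne : η ≠ ζc)
    (hC : 0 < C) (hCb : ∀ x ∈ Metric.ball ζc r, w x ≤ C)
    (γ : PiecewiseSmoothCurve Ω ζc η) :
    ‖η - ζc‖ / 2 ≤ C * γ.wLength w := by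
  set s := ‖η - ζc‖ with hsdef
  have hs : 0 < s := norm_pos_iff.mpr (sub_ne_zero.mpr hne)
  set q : ℝ → ℝ := (fun t => ((inner ℝ (γ.toFun t - ζc) (γ.toFun t - ζc) : ℝ))) with hqdef
  set p : ℝ → ℝ := fun t => Real.sqrt (q t + (s/2)^2) with hpdef
  have hqnn : ∀ t, 0 ≤ q t := fun t => real_inner_self_nonneg
  have hargpos : ∀ t, 0 < q t + (s/2)^2 :=
    fun t => add_pos_of_nonneg_of_pos (hqnn t) (by positivity)
  have hppos : ∀ t, 0 < p t := fun t => Real.sqrt_pos.mpr (hargpos t)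
  have hnorm_le : ∀ t, ‖γ.toFun t - ζc‖ ≤ p t := by
    intro t
    have h1 : ‖γ.toFun t - ζc‖ = Real.sqrt (q t) := by
      rw [hqdef]; simp only [real_inner_self_eq_norm_sq]
      exact (Real.sqrt_sq (norm_nonneg _)).symm
    rw [h1, hpdef]
    exact Real.sqrt_le_sqrt (by nlinarith [sq_nonneg (s/2)])
  set g : ℝ → ℝ := fun t => min (p t) s with hgdef
  set dp : ℝ → ℝ := (fun t =>
    ((inner ℝ (γ.toFun t - ζc) (derivWithin γ.toFun (Icc 0 1) t) : ℝ)) / p t) with hdpdef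
  set G' : ℝ → ℝ := fun t => if p t < s ∨ (p t = s ∧ dp t < 0) then dp t else 0 with hG'def
  have hpcont : ContinuousOn p (Icc 0 1) := by
    apply Real.continuous_sqrt.comp_continuousOn
    exact ((γ.continuousOn.sub continuousOn_const).inner
      (γ.continuousOn.sub continuousOn_const)).add continuousOn_const
  have hgcont : ContinuousOn g (Icc 0 1) := by
    intro x hx
    exact (hpcont x hx).min continuousWithinAt_const
  have hpderiv : ∀ t ∈ Ioo (0:ℝ) 1, HasDerivAt γ.toFun (derivWithin γ.toFun (Icc 0 1) t) t →
      HasDerivAt p (dp t) t ∧ |dp t| ≤ ‖derivWithin γ.toFun (Icc 0 1) t‖ := by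
    intro t _ht hγt
    set v := derivWithin γ.toFun (Icc 0 1) t with hv
    have hsub : HasDerivAt (fun u => γ.toFun u - ζc) v t := hγt.sub_const ζc
    have hq' : HasDerivAt q (((inner ℝ (γ.toFun t - ζc) (v) : ℝ)) + ((inner ℝ (v) (γ.toFun t - ζc) : ℝ))) t :=
      hsub.inner ℝ hsub
    have hq2 : HasDerivAt (fun u => q u + (s/2)^2) (2 * ((inner ℝ (γ.toFun t - ζc) (v) : ℝ))) t := by
      have h3 := hq'.add_const ((s/2)^2)
      refine h3.congr_deriv ?_
      rw [real_inner_comm (γ.toFun t - ζc) v]; ring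
    have hsq : HasDerivAt p
        ((2 * ((inner ℝ (γ.toFun t - ζc) (v) : ℝ))) / (2 * Real.sqrt (q t + (s/2)^2))) t :=
      hq2.sqrt (hargpos t).ne'
    have hpd : HasDerivAt p (dp t) t := by
      convert hsq using 1
      rw [hdpdef]
      show ((inner ℝ (γ.toFun t - ζc) (v) : ℝ)) / p t = _
      rw [hpdef]
      rw [mul_div_mul_left _ _ (two_ne_zero)]
    refine ⟨hpd, ?_⟩
    have habs : |((inner ℝ (γ.toFun t - ζc) (v) : ℝ))| ≤ ‖γ.toFun t - ζc‖ * ‖v‖ := abs_real_inner_le_norm _ _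
    have h1 : |dp t| = |((inner ℝ (γ.toFun t - ζc) (v) : ℝ))| / p t := by
      rw [hdpdef]
      show |((inner ℝ (γ.toFun t - ζc) (v) : ℝ)) / p t| = _
      rw [abs_div, abs_of_pos (hppos t)]
    rw [h1, div_le_iff₀ (hppos t)]
    nlinarith [hnorm_le t, norm_nonneg v, hppos t]
  have hkey : ∀ t ∈ Ioo (0:ℝ) 1, HasDerivAt γ.toFun (derivWithin γ.toFun (Icc 0 1) t) t →
      HasDerivWithinAt g (G' t) (Ioi t) t ∧ G' t ≤ C * rho w γ t := by
    intro t ht hγt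
    obtain ⟨hpd, hbd⟩ := hpderiv t ht hγt
    have hrho : 0 ≤ rho w γ t :=
      div_nonneg (norm_nonneg _) (hw_pos _ (γ.maps_into t ⟨ht.1.le, ht.2.le⟩)).le
    constructor
    · rcases lt_trichotomy (p t) s with hlt | heq | hgt
      · have hGe : G' t = dp t := if_pos (Or.inl hlt)
        rw [hGe]
        have hev : ∀ᶠ u in nhds t, p u < s := hpd.continuousAt (Iio_mem_nhds hlt)
        have heq2 : g =ᶠ[nhds t] p := by
          filter_upwards [hev] with u hu
          exact min_eq_left hu.le
        exact (hpd.congr_of_eventuallyEq heq2).hasDerivWithinAt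
      · have hslope : Tendsto (slope p t) (nhdsWithin t {t}ᶜ) (nhds (dp t)) :=
          hasDerivAt_iff_tendsto_slope.mp hpd
        have hmono : nhdsWithin t (Ioi t) ≤ nhdsWithin t {t}ᶜ :=
          nhdsWithin_mono t (fun u hu => Set.mem_compl_singleton_iff.mpr (ne_of_gt hu))
        have hslope' : Tendsto (slope p t) (nhdsWithin t (Ioi t)) (nhds (dp t)) :=
          hslope.mono_left hmono
        have hslopeeq : ∀ u : ℝ, u ≠ t → p u - p t = slope p t u * (u - t) := by
          intro u hu
          rw [slope_def_field]
          exact (div_mul_cancel₀ _ (sub_ne_zero.mpr hu)).symm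
        rcases lt_trichotomy (dp t) 0 with hneg | hzero | hpos
        · have hGe : G' t = dp t := if_pos (Or.inr ⟨heq, hneg⟩)
          rw [hGe]
          have hev : ∀ᶠ u in nhdsWithin t (Ioi t), slope p t u < 0 :=
            hslope'.eventually_lt_const hneg
          have heqev : g =ᶠ[nhdsWithin t (Ioi t)] p := by
            filter_upwards [hev, self_mem_nhdsWithin] with u hu hu2
            have hut : 0 < u - t := sub_pos.mpr hu2
            have h2 := hslopeeq u (ne_of_gt hu2)
            have : p u < p t := by nlinarith
            exact min_eq_left (le_of_lt (lt_of_lt_of_le this heq.le))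
          have hat : g t = p t := by rw [hgdef]; simp [heq]
          exact hpd.hasDerivWithinAt.congr_of_eventuallyEq heqev hat
        · have hGe : G' t = 0 := by rw [hG'def]; simp [heq, hzero]
          rw [hGe]
          have hlip : ∀ u, |g u - g t| ≤ |p u - p t| := by
            intro u
            have hgt' : g t = s := by rw [hgdef]; simp [heq]
            rcases le_or_gt (p u) s with h | h
            · have h3 : g u = p u := min_eq_left h
              rw [h3, hgt', ← heq]
            · have h3 : g u = s := min_eq_right h.le
              rw [h3, hgt', sub_self, abs_zero]
              exact abs_nonneg _
          have hlittle : HasDerivAt g 0 t := by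
            rw [hasDerivAt_iff_isLittleO]
            have hpo : (fun u => p u - p t) =o[nhds t] (fun u => u - t) := by
              have h4 := hasDerivAt_iff_isLittleO.mp hpd
              rw [hzero] at h4
              simpa using h4
            have hbig : (fun u => g u - g t) =O[nhds t] (fun u => p u - p t) :=
              Asymptotics.isBigO_of_le _ (fun u => by
                rw [Real.norm_eq_abs, Real.norm_eq_abs]; exact hlip u)
            have h5 := hbig.trans_isLittleO hpo
            simpa using h5
          exact hlittle.hasDerivWithinAt
        · have hGe : G' t = 0 := by
            simp only [hG'def]
            rw [if_neg (not_or.mpr ⟨by rw [heq]; exact lt_irrefl s,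
              fun h => absurd h.2 (not_lt.mpr hpos.le)⟩)]
          rw [hGe]
          have hev : ∀ᶠ u in nhdsWithin t (Ioi t), 0 < slope p t u :=
            hslope'.eventually_const_lt hpos
          have heqev : g =ᶠ[nhdsWithin t (Ioi t)] (fun _ => s) := by
            filter_upwards [hev, self_mem_nhdsWithin] with u hu hu2
            have hut : 0 < u - t := sub_pos.mpr hu2
            have h2 := hslopeeq u (ne_of_gt hu2)
            have : s < p u := by rw [← heq]; nlinarith
            exact min_eq_right this.le
          have hat : g t = s := by rw [hgdef]; simp [heq]
          exact (hasDerivWithinAt_const t _ s).congr_of_eventuallyEq heqev hat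
      · have hGe : G' t = 0 := by
          simp only [hG'def]
          rw [if_neg (not_or.mpr ⟨not_lt.mpr hgt.le, fun h => (ne_of_gt hgt) h.1⟩)]
        rw [hGe]
        have hev : ∀ᶠ u in nhds t, s < p u := hpd.continuousAt (Ioi_mem_nhds hgt)
        have heqev : g =ᶠ[nhds t] (fun _ => s) := by
          filter_upwards [hev] with u hu
          exact min_eq_right hu.le
        exact ((hasDerivAt_const t s).congr_of_eventuallyEq heqev).hasDerivWithinAt
    · by_cases hcond : p t < s ∨ (p t = s ∧ dp t < 0)
      · rw [hG'def]
        show (if p t < s ∨ (p t = s ∧ dp t < 0) then dp t else 0) ≤ _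
        rw [if_pos hcond]
        rcases hcond with hlt | ⟨_, hneg⟩
        · have hmem : γ.toFun t ∈ Metric.ball ζc r := by
            rw [Metric.mem_ball, dist_eq_norm]
            calc ‖γ.toFun t - ζc‖ ≤ p t := hnorm_le t
              _ < s := hlt
              _ < r := hη
          have hwle : w (γ.toFun t) ≤ C := hCb _ hmem
          have hwpos : 0 < w (γ.toFun t) := hw_pos _ (γ.maps_into t ⟨ht.1.le, ht.2.le⟩)
          calc dp t ≤ |dp t| := le_abs_self _
            _ ≤ ‖derivWithin γ.toFun (Icc 0 1) t‖ := hbd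
            _ ≤ C * (‖derivWithin γ.toFun (Icc 0 1) t‖ / w (γ.toFun t)) := by
                rw [mul_div_assoc', le_div_iff₀ hwpos]
                nlinarith [norm_nonneg (derivWithin γ.toFun (Icc 0 1) t)]
            _ = C * rho w γ t := rfl
        · exact le_trans hneg.le (mul_nonneg hC.le hrho)
      · rw [hG'def]
        show (if p t < s ∨ (p t = s ∧ dp t < 0) then dp t else 0) ≤ _
        rw [if_neg hcond]
        exact mul_nonneg hC.le hrho
  have hmain := curve_bound hw_pos hw_cont γ g G' C hgcont hkey
  have hg0 : g 0 = s/2 := by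
    have hq0 : q 0 = 0 := by
      rw [hqdef]
      simp [γ.source]
    have hp0 : p 0 = s/2 := by
      rw [hpdef]
      simp only [hq0, zero_add]
      exact Real.sqrt_sq (by positivity)
    rw [hgdef]
    simp only [hp0]
    exact min_eq_left (by linarith)
  have hg1 : g 1 = s := by
    have hq1 : q 1 = s^2 := by
      rw [hqdef]
      simp only [γ.target]
      rw [real_inner_self_eq_norm_sq]
    have hp1 : s ≤ p 1 := by
      rw [hpdef]
      simp only [hq1]
      calc s = Real.sqrt (s^2) := (Real.sqrt_sq hs.le).symm
        _ ≤ _ := Real.sqrt_le_sqrt (by nlinarith)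
    rw [hgdef]
    exact min_eq_right hp1
  rw [hg0, hg1] at hmain
  linarith

lemma wDist_pos (hΩ_open : IsOpen Ω) (hw_pos : ∀ ζ ∈ Ω, 0 < w ζ)
    (hw_cont : ContinuousOn w Ω) {ζc : EuclideanSpace ℝ (Fin m)} (hζ : ζc ∈ Ω) :
    ∃ r > 0, Metric.ball ζc r ⊆ Ω ∧ ∃ C > 0, (∀ x ∈ Metric.ball ζc r, w x ≤ C) ∧
      ∀ η ∈ Metric.ball ζc r, η ≠ ζc → 0 < wDist Ω w ζc η := by
  obtain ⟨r0, hr0, hsub⟩ := Metric.isOpen_iff.mp hΩ_open ζc hζ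
  set r := r0/2 with hrdef
  have hclosed : Metric.closedBall ζc r ⊆ Ω :=
    (Metric.closedBall_subset_ball (by linarith)).trans hsub
  have hballr : Metric.ball ζc r ⊆ Ω := Metric.ball_subset_closedBall.trans hclosed
  obtain ⟨x0, _hx0mem, hx0⟩ := (isCompact_closedBall ζc r).exists_isMaxOn
    ⟨ζc, Metric.mem_closedBall_self (by linarith)⟩ (hw_cont.mono hclosed)
  set C := w x0 with hCdef
  have hCpos : 0 < C :=
    lt_of_lt_of_le (hw_pos ζc hζ) (hx0 (Metric.mem_closedBall_self (by linarith)))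
  refine ⟨r, by linarith, hballr, C, hCpos,
    fun x hx => hx0 (Metric.ball_subset_closedBall hx), ?_⟩
  intro η hη hne
  have hηn : ‖η - ζc‖ < r := by rw [← dist_eq_norm]; exact Metric.mem_ball.mp hη
  have hbound : ∀ γ : PiecewiseSmoothCurve Ω ζc η, ‖η - ζc‖/2 ≤ C * γ.wLength w :=
    fun γ => wLength_ge hw_pos hw_cont hballr hηn hne hCpos
      (fun x hx => hx0 (Metric.ball_subset_closedBall hx)) γ
  have hnpos : 0 < ‖η - ζc‖ := norm_pos_iff.mpr (sub_ne_zero.mpr hne)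
  have hpos : 0 < ‖η - ζc‖ / (2*C) := by positivity
  apply lt_of_lt_of_le hpos
  apply le_csInf
  · obtain ⟨γ, _⟩ := exists_segment hballr hηn
    exact ⟨_, γ, rfl⟩
  · rintro L ⟨γ, rfl⟩
    have h6 := hbound γ
    rw [div_le_iff₀ (by positivity)]
    nlinarith


lemma norm_sub_le_wLength (hΩ_open : IsOpen Ω)
    (hw_pos : ∀ ζ ∈ Ω, 0 < w ζ) (hw_cont : ContinuousOn w Ω)
    {f : EuclideanSpace ℝ (Fin m) → EuclideanSpace ℝ (Fin n)} (hf : ContDiffOn ℝ 1 f Ω)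
    {M : ℝ} (hM0 : 0 ≤ M) (hM : ∀ x ∈ Ω, w x * ‖fderiv ℝ f x‖ ≤ M)
    {ζ η : EuclideanSpace ℝ (Fin m)} (γ : PiecewiseSmoothCurve Ω ζ η) :
    ‖f ζ - f η‖ ≤ M * γ.wLength w := by
  by_cases hfe : f η = f ζ
  · rw [show f ζ - f η = 0 by rw [hfe]; abel, norm_zero]
    exact mul_nonneg hM0 (wLength_nonneg hw_pos γ)
  set u := ‖f η - f ζ‖⁻¹ • (f η - f ζ) with hudef
  have hu : ‖u‖ = 1 := norm_smul_inv_norm (sub_ne_zero.mpr hfe)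
  set g : ℝ → ℝ := (fun t => (inner ℝ u (f (γ.toFun t)) : ℝ)) with hgdef
  set G' : ℝ → ℝ := (fun t =>
    (inner ℝ u (fderiv ℝ f (γ.toFun t) (derivWithin γ.toFun (Icc 0 1) t)) : ℝ)) with hG'def
  have hgcont : ContinuousOn g (Icc 0 1) := by
    apply ContinuousOn.inner continuousOn_const
    exact (hf.continuousOn).comp γ.continuousOn (fun t ht => γ.maps_into t ht)
  have hkey : ∀ t ∈ Ioo (0:ℝ) 1, HasDerivAt γ.toFun (derivWithin γ.toFun (Icc 0 1) t) t →
      HasDerivWithinAt g (G' t) (Ioi t) t ∧ G' t ≤ M * rho w γ t := by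
    intro t ht hγt
    have hmem : γ.toFun t ∈ Ω := γ.maps_into t ⟨ht.1.le, ht.2.le⟩
    have hfd : DifferentiableAt ℝ f (γ.toFun t) :=
      ((hf.differentiableOn one_ne_zero) (γ.toFun t) hmem).differentiableAt
        (hΩ_open.mem_nhds hmem)
    have hcomp : HasDerivAt (fun t' => f (γ.toFun t'))
        (fderiv ℝ f (γ.toFun t) (derivWithin γ.toFun (Icc 0 1) t)) t :=
      hfd.hasFDerivAt.comp_hasDerivAt t hγt
    have hinner : HasDerivAt g (G' t) t := by
      have h2 := (hasDerivAt_const t u).inner ℝ hcomp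
      simpa using h2
    refine ⟨hinner.hasDerivWithinAt, ?_⟩
    have hwpos : 0 < w (γ.toFun t) := hw_pos _ hmem
    have h4 : ‖fderiv ℝ f (γ.toFun t)‖ ≤ M / w (γ.toFun t) := by
      rw [le_div_iff₀ hwpos]
      have h5 := hM _ hmem
      nlinarith [norm_nonneg (fderiv ℝ f (γ.toFun t))]
    calc G' t ≤ ‖u‖ * ‖fderiv ℝ f (γ.toFun t) (derivWithin γ.toFun (Icc 0 1) t)‖ :=
          real_inner_le_norm _ _
      _ = ‖fderiv ℝ f (γ.toFun t) (derivWithin γ.toFun (Icc 0 1) t)‖ := by rw [hu, one_mul]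
      _ ≤ ‖fderiv ℝ f (γ.toFun t)‖ * ‖derivWithin γ.toFun (Icc 0 1) t‖ :=
          ContinuousLinearMap.le_opNorm _ _
      _ ≤ (M / w (γ.toFun t)) * ‖derivWithin γ.toFun (Icc 0 1) t‖ :=
          mul_le_mul_of_nonneg_right h4 (norm_nonneg _)
      _ = M * rho w γ t := by
          show _ = M * (‖derivWithin γ.toFun (Icc 0 1) t‖ / w (γ.toFun t))
          ring
  have hmain := curve_bound hw_pos hw_cont γ g G' M hgcont hkey
  have hg1 : g 1 = (inner ℝ u (f η) : ℝ) := by rw [hgdef]; simp only [γ.target]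
  have hg0 : g 0 = (inner ℝ u (f ζ) : ℝ) := by rw [hgdef]; simp only [γ.source]
  have hdiff : g 1 - g 0 = ‖f η - f ζ‖ := by
    rw [hg1, hg0, ← inner_sub_right, hudef, real_inner_smul_left,
      real_inner_self_eq_norm_sq]
    have hnz : ‖f η - f ζ‖ ≠ 0 := norm_ne_zero_iff.mpr (sub_ne_zero.mpr hfe)
    rw [pow_two, inv_mul_cancel_left₀ hnz]
  rw [norm_sub_rev, ← hdiff]
  exact hmain

end Aux

open Aux

/-- the `w`-Bloch seminorm of a `C¹` mapping equals the Lipschitz seminorm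
with respect to the `w`-distance:
`sup w(ζ)‖Df(ζ)‖ = sup |f(ζ)−f(η)| / d_w(ζ,η)`. -/
theorem stmt10 {m n : ℕ} (Ω : Set (EuclideanSpace ℝ (Fin m)))
    (hΩ_open : IsOpen Ω) (hΩ_conn : IsConnected Ω)
    (w : EuclideanSpace ℝ (Fin m) → ℝ) (hw_pos : ∀ ζ ∈ Ω, 0 < w ζ) (hw_cont : ContinuousOn w Ω)
    (f : EuclideanSpace ℝ (Fin m) → EuclideanSpace ℝ (Fin n)) (hf : ContDiffOn ℝ 1 f Ω) :
    (⨆ ζ ∈ Ω, ENNReal.ofReal (w ζ * ‖fderiv ℝ f ζ‖)) =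
      ⨆ ζ ∈ Ω, ⨆ η ∈ Ω, ⨆ _ : ζ ≠ η,
        ENNReal.ofReal (‖f ζ - f η‖ / wDist Ω w ζ η) := by
  set LHS := ⨆ ζ ∈ Ω, ENNReal.ofReal (w ζ * ‖fderiv ℝ f ζ‖) with hLHS
  set RHS := ⨆ ζ ∈ Ω, ⨆ η ∈ Ω, ⨆ _ : ζ ≠ η,
      ENNReal.ofReal (‖f ζ - f η‖ / wDist Ω w ζ η) with hRHS
  apply le_antisymm
  · -- LHS ≤ RHS
    rw [hLHS]
    apply iSup₂_le
    intro ζ hζ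
    set A := fderiv ℝ f ζ with hA
    apply ENNReal.le_of_forall_pos_le_add
    intro ε hε _hRfin
    set δ : ℝ := (ε : ℝ) / 2 with hδdef
    have hδpos : 0 < δ := by positivity
    have hδε : ENNReal.ofReal δ ≤ (ε : ℝ≥0∞) := by
      rw [← ENNReal.ofReal_coe_nnreal]
      apply ENNReal.ofReal_le_ofReal
      rw [hδdef]
      linarith [(ε : ℝ≥0).coe_nonneg]
    by_cases hsmall : w ζ * ‖A‖ ≤ δ
    · calc ENNReal.ofReal (w ζ * ‖A‖) ≤ ENNReal.ofReal δ := ENNReal.ofReal_le_ofReal hsmall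
        _ ≤ (ε : ℝ≥0∞) := hδε
        _ ≤ RHS + ε := le_add_self
    push_neg at hsmall
    set rr := w ζ * ‖A‖ - δ with hrrdef
    have hrrpos : 0 < rr := by rw [hrrdef]; linarith
    -- find a suitable pair (ζ, η)
    have hwζ : 0 < w ζ := hw_pos ζ hζ
    have hApos : 0 < ‖A‖ := by
      by_contra h
      push_neg at h
      have : ‖A‖ = 0 := le_antisymm h (norm_nonneg _)
      rw [this, mul_zero] at hsmall
      linarith
    have hrrlt : rr < ‖A‖ * w ζ := by rw [hrrdef]; nlinarith
    -- choose ε₁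
    have htends : Tendsto (fun e : ℝ => (‖A‖ - e) * (w ζ - e)) (nhds 0) (nhds (‖A‖ * w ζ)) := by
      have hc : Continuous (fun e : ℝ => (‖A‖ - e) * (w ζ - e)) :=
        (continuous_const.sub continuous_id).mul (continuous_const.sub continuous_id)
      have := hc.tendsto 0
      simpa using this
    have hev1 : ∀ᶠ e in nhdsWithin (0:ℝ) (Ioi 0), rr < (‖A‖ - e) * (w ζ - e) :=
      (htends.mono_left nhdsWithin_le_nhds).eventually_const_lt hrrlt
    have hev2 : Ioo (0:ℝ) (min ‖A‖ (w ζ)) ∈ nhdsWithin (0:ℝ) (Ioi 0) :=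
      Ioo_mem_nhdsGT_of_mem ⟨le_refl 0, lt_min hApos hwζ⟩
    obtain ⟨ε₁, hε₁F, hε₁mem⟩ := (hev1.and hev2).exists
    have hε₁pos : 0 < ε₁ := hε₁mem.1
    have hε₁A : ε₁ < ‖A‖ := lt_of_lt_of_le hε₁mem.2 (min_le_left _ _)
    have hε₁w : ε₁ < w ζ := lt_of_lt_of_le hε₁mem.2 (min_le_right _ _)
    have hb1 : 0 < w ζ - ε₁ := by linarith
    -- choose x
    obtain ⟨x, hx⟩ : ∃ x, (‖A‖ - ε₁) * ‖x‖ < ‖A x‖ := by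
      by_contra h
      push_neg at h
      have : ‖A‖ ≤ ‖A‖ - ε₁ := A.opNorm_le_bound (by linarith) (fun x => h x)
      linarith
    have hx0 : x ≠ 0 := by
      rintro rfl
      simp at hx
    have hxnorm : 0 < ‖x‖ := norm_pos_iff.mpr hx0
    -- choose ε₂
    have hF0 : rr * ‖x‖ < ‖A x‖ * (w ζ - ε₁) := by
      have h1 := mul_lt_mul_of_pos_right hx hb1
      have h3 := mul_lt_mul_of_pos_right hε₁F hxnorm
      have h2 : (‖A‖ - ε₁) * (w ζ - ε₁) * ‖x‖ = (‖A‖ - ε₁) * ‖x‖ * (w ζ - ε₁) := by ring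
      linarith
    have htends2 : Tendsto (fun e : ℝ => (‖A x‖ - e * ‖x‖) * (w ζ - ε₁)) (nhds 0)
        (nhds (‖A x‖ * (w ζ - ε₁))) := by
      have hc : Continuous (fun e : ℝ => (‖A x‖ - e * ‖x‖) * (w ζ - ε₁)) :=
        (continuous_const.sub (continuous_id.mul continuous_const)).mul continuous_const
      have := hc.tendsto 0
      simpa using this
    have hev3 : ∀ᶠ e in nhdsWithin (0:ℝ) (Ioi 0),
        rr * ‖x‖ < (‖A x‖ - e * ‖x‖) * (w ζ - ε₁) :=
      (htends2.mono_left nhdsWithin_le_nhds).eventually_const_lt hF0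
    obtain ⟨ε₂, hε₂F, hε₂pos⟩ := (hev3.and self_mem_nhdsWithin).exists
    -- positivity data around ζ
    obtain ⟨r, hrpos, hballΩ, C, hCpos, hCb, hdpos⟩ := wDist_pos hΩ_open hw_pos hw_cont hζ
    -- w lower bound near ζ
    have hwc : ContinuousAt w ζ := (hw_cont ζ hζ).continuousAt (hΩ_open.mem_nhds hζ)
    have hevw : ∀ᶠ y in nhds ζ, w ζ - ε₁ < w y := hwc.eventually_const_lt (by linarith)
    obtain ⟨r₂, hr₂pos, hr₂⟩ := Metric.eventually_nhds_iff_ball.mp hevw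
    -- derivative estimate near ζ
    have hfd : DifferentiableAt ℝ f ζ :=
      ((hf.differentiableOn one_ne_zero) ζ hζ).differentiableAt (hΩ_open.mem_nhds hζ)
    have hlo := hfd.hasFDerivAt.isLittleO
    have hevf : ∀ᶠ y in nhds ζ, ‖f y - f ζ - A (y - ζ)‖ ≤ ε₂ * ‖y - ζ‖ := hlo.def hε₂pos
    obtain ⟨r₃, hr₃pos, hr₃⟩ := Metric.eventually_nhds_iff_ball.mp hevf
    -- the point η
    set R := min r (min r₂ r₃) with hRdef
    have hRpos : 0 < R := lt_min hrpos (lt_min hr₂pos hr₃pos)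
    set t := R / (2 * ‖x‖) with htdef
    have ht : 0 < t := by positivity
    set η := ζ + t • x with hηdef
    have hηζ : η - ζ = t • x := by rw [hηdef]; abel
    have hηn : ‖η - ζ‖ = t * ‖x‖ := by
      rw [hηζ, norm_smul, Real.norm_eq_abs, abs_of_pos ht]
    have ht2 : t * ‖x‖ = R / 2 := by
      rw [htdef]
      field_simp
    have hηR : ‖η - ζ‖ < R := by
      rw [hηn, ht2]
      linarith only [hRpos]
    have hηr : η ∈ Metric.ball ζ r := by
      rw [Metric.mem_ball, dist_eq_norm]
      exact lt_of_lt_of_le hηR (min_le_left _ _)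
    have hηr₂ : η ∈ Metric.ball ζ r₂ := by
      rw [Metric.mem_ball, dist_eq_norm]
      exact lt_of_lt_of_le hηR ((min_le_right _ _).trans (min_le_left _ _))
    have hηr₃ : η ∈ Metric.ball ζ r₃ := by
      rw [Metric.mem_ball, dist_eq_norm]
      exact lt_of_lt_of_le hηR ((min_le_right _ _).trans (min_le_right _ _))
    have hηne : η ≠ ζ := by
      intro h
      have : η - ζ = 0 := by rw [h]; abel
      rw [hηζ] at this
      exact hx0 (by simpa [smul_eq_zero, ht.ne'] using this)
    have hηΩ : η ∈ Ω := hballΩ hηr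
    -- d > 0
    have hd : 0 < wDist Ω w ζ η := hdpos η hηr hηne
    -- segment upper bound for d
    have hballR : Metric.ball ζ R ⊆ Ω := fun y hy =>
      hballΩ (Metric.ball_subset_ball (min_le_left _ _) hy)
    have hlowR : ∀ y ∈ Metric.ball ζ R, w ζ - ε₁ ≤ w y := by
      intro y hy
      apply (hr₂ (y := y) _).le
      exact lt_of_lt_of_le (Metric.mem_ball.mp hy)
        ((min_le_right _ _).trans (min_le_left _ _))
    have hdU : wDist Ω w ζ η ≤ ‖η - ζ‖ / (w ζ - ε₁) :=
      wDist_le_seg hw_pos hw_cont hballR hηR hb1 hlowR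
    set U := ‖η - ζ‖ / (w ζ - ε₁) with hUdef
    have hUpos : 0 < U := by
      rw [hUdef]
      have : 0 < ‖η - ζ‖ := norm_pos_iff.mpr (sub_ne_zero.mpr hηne)
      positivity
    -- lower bound for ‖f ζ - f η‖
    have hAη : ‖A (η - ζ)‖ = t * ‖A x‖ := by
      rw [hηζ, _root_.map_smul, norm_smul, Real.norm_eq_abs, abs_of_pos ht]
    have hfest : t * (‖A x‖ - ε₂ * ‖x‖) ≤ ‖f ζ - f η‖ := by
      have h4 := hr₃ η hηr₃
      have h2 : ‖A (η - ζ)‖ ≤ ‖f η - f ζ‖ + ‖f η - f ζ - A (η - ζ)‖ := by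
        have h3 : A (η - ζ) = (f η - f ζ) - ((f η - f ζ) - A (η - ζ)) := by abel
        calc ‖A (η - ζ)‖ = ‖(f η - f ζ) - ((f η - f ζ) - A (η - ζ))‖ := by rw [← h3]
          _ ≤ _ := norm_sub_le _ _
      rw [hAη] at h2
      rw [hηn] at h4
      rw [norm_sub_rev]
      have hexp : t * (‖A x‖ - ε₂ * ‖x‖) = t * ‖A x‖ - ε₂ * (t * ‖x‖) := by ring
      rw [hexp]
      linarith only [h2, h4]
    -- combine
    have hterm : rr < ‖f ζ - f η‖ / wDist Ω w ζ η := by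
      have hnum : rr * U < t * (‖A x‖ - ε₂ * ‖x‖) := by
        rw [hUdef, hηn]
        rw [show rr * (t * ‖x‖ / (w ζ - ε₁)) = rr * t * ‖x‖ / (w ζ - ε₁) from by ring,
          div_lt_iff₀ hb1]
        linarith only [mul_lt_mul_of_pos_left hε₂F ht]
      have hstep1 : rr < t * (‖A x‖ - ε₂ * ‖x‖) / U := (lt_div_iff₀ hUpos).mpr hnum
      have hstep2 : t * (‖A x‖ - ε₂ * ‖x‖) / U ≤ ‖f ζ - f η‖ / U := by gcongr
      have hstep3 : ‖f ζ - f η‖ / U ≤ ‖f ζ - f η‖ / wDist Ω w ζ η :=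
        div_le_div_of_nonneg_left (norm_nonneg _) hd hdU
      linarith only [hstep1, hstep2, hstep3]
    have hRHSge : ENNReal.ofReal (‖f ζ - f η‖ / wDist Ω w ζ η) ≤ RHS := by
      rw [hRHS]
      exact le_iSup_of_le ζ (le_iSup_of_le hζ (le_iSup_of_le η (le_iSup_of_le hηΩ
        (le_iSup_of_le (Ne.symm hηne) le_rfl))))
    calc ENNReal.ofReal (w ζ * ‖A‖) = ENNReal.ofReal (rr + δ) := by rw [hrrdef]; ring_nf
      _ ≤ ENNReal.ofReal rr + ENNReal.ofReal δ := ENNReal.ofReal_add_le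
      _ ≤ RHS + (ε : ℝ≥0∞) := by
          apply add_le_add _ hδε
          exact le_trans (ENNReal.ofReal_le_ofReal hterm.le) hRHSge
  · -- RHS ≤ LHS
    by_cases htop : LHS = ⊤
    · rw [htop]; exact le_top
    set M := LHS.toReal with hMdef
    have hM0 : 0 ≤ M := ENNReal.toReal_nonneg
    have hM : ∀ x ∈ Ω, w x * ‖fderiv ℝ f x‖ ≤ M := by
      intro x hx
      have h1 : ENNReal.ofReal (w x * ‖fderiv ℝ f x‖) ≤ LHS := by
        rw [hLHS]
        exact le_iSup_of_le x (le_iSup_of_le hx le_rfl)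
      have h2 := ENNReal.toReal_mono htop h1
      rwa [ENNReal.toReal_ofReal
        (mul_nonneg (hw_pos x hx).le (norm_nonneg _))] at h2
    rw [hRHS]
    apply iSup₂_le
    intro ζ hζ
    apply iSup₂_le
    intro η hη
    apply iSup_le
    intro hne
    by_cases hcurves : {L : ℝ | ∃ γ : PiecewiseSmoothCurve Ω ζ η, L = γ.wLength w}.Nonempty
    · have hle : ∀ γ : PiecewiseSmoothCurve Ω ζ η, ‖f ζ - f η‖ ≤ M * γ.wLength w :=
        fun γ => norm_sub_le_wLength hΩ_open hw_pos hw_cont hf hM0 hM γ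
      have hd0 : 0 ≤ wDist Ω w ζ η := wDist_nonneg hw_pos ζ η
      rcases eq_or_lt_of_le hd0 with hd | hd
      · rw [← hd, div_zero]
        simp
      · have hkey : ‖f ζ - f η‖ ≤ M * wDist Ω w ζ η := by
          rcases eq_or_lt_of_le hM0 with hM0' | hMpos
          · obtain ⟨L, γ, rfl⟩ := hcurves
            have h6 := hle γ
            rw [← hM0', zero_mul] at h6 ⊢
            exact h6
          · have h2 : ‖f ζ - f η‖ / M ≤ wDist Ω w ζ η := by
              apply le_csInf hcurves
              rintro L ⟨γ, rfl⟩
              rw [div_le_iff₀ hMpos]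
              rw [mul_comm]
              exact hle γ
            rw [div_le_iff₀ hMpos] at h2
            rw [mul_comm]
            exact h2
        have h3 : ‖f ζ - f η‖ / wDist Ω w ζ η ≤ M := by
          rw [div_le_iff₀ hd, mul_comm]
          rw [mul_comm] at hkey
          exact hkey
        calc ENNReal.ofReal (‖f ζ - f η‖ / wDist Ω w ζ η) ≤ ENNReal.ofReal M :=
              ENNReal.ofReal_le_ofReal h3
          _ = LHS := ENNReal.ofReal_toReal htop
    · rw [wDist, Set.not_nonempty_iff_eq_empty.mp hcurves, Real.sInf_empty, div_zero]
      simp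
end

section
/- Let Ω ⊆ ℝ^m be a domain, let w be an everywhere positive continuous function on Ω, and let W be an admissible function for w on Ω × Ω. Then sup_{ζ∈Ω} w(ζ) = sup_{ζ,η∈Ω, ζ≠η} W(ζ,η). -/
open Set Filter

namespace PSCAux

variable {m : ℕ} {Ω : Set (EuclideanSpace ℝ (Fin m))}

theorem continuousOn_union_closed {X : Type*} [TopologicalSpace X] {f : ℝ → X} {s t : Set ℝ}
    (hs : IsClosed s) (ht : IsClosed t) (hfs : ContinuousOn f s) (hft : ContinuousOn f t) :
    ContinuousOn f (s ∪ t) := by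
  intro x hx
  have h1 : ContinuousWithinAt f s x := by
    by_cases h : x ∈ s
    · exact hfs x h
    · exact continuousWithinAt_of_notMem_closure (by rwa [hs.closure_eq])
  have h2 : ContinuousWithinAt f t x := by
    by_cases h : x ∈ t
    · exact hft x h
    · exact continuousWithinAt_of_notMem_closure (by rwa [ht.closure_eq])
  exact h1.union h2

/-- The constant curve at a point of `Ω`. -/
def refl {ζ : EuclideanSpace ℝ (Fin m)} (hζ : ζ ∈ Ω) : PiecewiseSmoothCurve Ω ζ ζ where
  toFun := fun _ => ζ
  continuousOn := continuousOn_const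
  num := 1
  part := fun i => (i : ℕ)
  mono := fun i j h => by exact_mod_cast Nat.cast_le.mpr h
  part_zero := by norm_num
  part_last := by norm_num [Fin.last]
  smoothOn := fun _ => contDiffOn_const
  maps_into := fun _ _ => hζ
  source := rfl
  target := rfl

theorem part_mem {ζ η : EuclideanSpace ℝ (Fin m)} (γ : PiecewiseSmoothCurve Ω ζ η)
    (i : Fin (γ.num + 1)) : γ.part i ∈ Icc (0:ℝ) 1 := by
  constructor
  · rw [← γ.part_zero]; exact γ.mono (Fin.zero_le i)
  · rw [← γ.part_last]; exact γ.mono (Fin.le_last i)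

/-- Concatenation of a curve with a straight segment inside `Ω`. -/
theorem concat {ζ η η' : EuclideanSpace ℝ (Fin m)} (γ : PiecewiseSmoothCurve Ω ζ η)
    (hseg : segment ℝ η η' ⊆ Ω) : Nonempty (PiecewiseSmoothCurve Ω ζ η') := by
  set n := γ.num with hn
  set p := γ.part with hp
  set f := γ.toFun with hf
  set F : ℝ → EuclideanSpace ℝ (Fin m) :=
    fun t => if t ≤ 1/2 then f (2*t) else η + (2*t - 1) • (η' - η) with hF
  have hFseg : ∀ t ∈ Icc (1/2 : ℝ) 1, F t = η + (2*t - 1) • (η' - η) := by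
    intro t ht
    by_cases h : t ≤ 1/2
    · have : t = 1/2 := le_antisymm h ht.1
      subst this
      simp only [hF, if_pos le_rfl]
      norm_num
      exact γ.target
    · simp only [hF]; rw [if_neg h]
  have hFcomp : ∀ t ∈ Icc (0:ℝ) (1/2), F t = f (2*t) := by
    intro t ht; simp only [hF]; rw [if_pos ht.2]
  have hcont2 : Continuous (fun t : ℝ => η + (2*t - 1) • (η' - η)) := by
    continuity
  have hc1 : ContinuousOn F (Icc 0 (1/2)) := by
    refine ContinuousOn.congr ?_ hFcomp
    refine γ.continuousOn.comp ((continuous_const.mul continuous_id).continuousOn :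
      ContinuousOn (fun t : ℝ => 2 * t) (Icc 0 (1/2))) ?_
    intro t ht; exact ⟨by linarith [ht.1], by linarith [ht.2]⟩
  have hc2 : ContinuousOn F (Icc (1/2) 1) := hcont2.continuousOn.congr hFseg
  refine ⟨{ toFun := F
            continuousOn := ?_
            num := n + 1
            part := fun i => if h : (i : ℕ) < n + 1 then p ⟨i, h⟩ / 2 else 1
            mono := ?_
            part_zero := ?_
            part_last := ?_
            smoothOn := ?_
            maps_into := ?_
            source := ?_
            target := ?_ }⟩
  · have : Icc (0:ℝ) 1 = Icc 0 (1/2) ∪ Icc (1/2) 1 :=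
      (Set.Icc_union_Icc_eq_Icc (by norm_num) (by norm_num)).symm
    rw [this]
    exact continuousOn_union_closed isClosed_Icc isClosed_Icc hc1 hc2
  · intro i j hij
    have hij' : (i : ℕ) ≤ (j : ℕ) := hij
    by_cases hi : (i : ℕ) < n + 1 <;> by_cases hj : (j : ℕ) < n + 1
    · simp only [dif_pos hi, dif_pos hj]
      have := γ.mono (show (⟨i, hi⟩ : Fin (n+1)) ≤ ⟨j, hj⟩ from hij')
      linarith
    · simp only [dif_pos hi, dif_neg hj]
      have := (part_mem γ ⟨i, hi⟩).2
      linarith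
    · omega
    · simp only [dif_neg hi, dif_neg hj]; exact le_rfl
  · simp only [dif_pos (show ((0 : Fin (n+2)) : ℕ) < n + 1 by simp)]
    have : (⟨((0 : Fin (n+2)) : ℕ), by simp⟩ : Fin (n+1)) = 0 := by ext; simp
    rw [this, hp, γ.part_zero]; norm_num
  · simp only [dif_neg (show ¬ ((Fin.last (n+1) : Fin (n+2)) : ℕ) < n + 1 by simp [Fin.last])]
  · intro i
    by_cases h : (i : ℕ) < n
    · have hcs : ((i.castSucc : Fin (n+2)) : ℕ) < n + 1 := by
        rw [Fin.coe_castSucc]; exact i.isLt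
      have hsu : ((i.succ : Fin (n+2)) : ℕ) < n + 1 := by
        rw [Fin.val_succ]; omega
      simp only [dif_pos hcs, dif_pos hsu]
      set j : Fin n := ⟨i, h⟩ with hj
      have e1 : (⟨((i.castSucc : Fin (n+2)) : ℕ), hcs⟩ : Fin (n+1)) = j.castSucc := by
        ext; simp [hj]
      have e2 : (⟨((i.succ : Fin (n+2)) : ℕ), hsu⟩ : Fin (n+1)) = j.succ := by
        ext; simp [hj]
      rw [e1, e2]
      have hmaps : MapsTo (fun t : ℝ => 2*t)
          (Icc (p j.castSucc / 2) (p j.succ / 2)) (Icc (p j.castSucc) (p j.succ)) := by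
        intro t ht
        simp only [mem_Icc] at ht ⊢
        constructor <;> linarith
      have hsm : ContDiffOn ℝ (⊤ : ℕ∞) (fun t : ℝ => f (2*t))
          (Icc (p j.castSucc / 2) (p j.succ / 2)) :=
        (γ.smoothOn j).comp ((contDiff_const.mul contDiff_id).contDiffOn) hmaps
      refine hsm.congr ?_
      intro t ht
      have h2 : p j.succ ≤ 1 := (part_mem γ j.succ).2
      exact hFcomp t ⟨le_trans (div_nonneg (part_mem γ j.castSucc).1 (by norm_num)) ht.1,
        by linarith [ht.2]⟩
    · have hieq : (i : ℕ) = n := by omega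
      have hcs : ((i.castSucc : Fin (n+2)) : ℕ) < n + 1 := by
        rw [Fin.coe_castSucc]; exact i.isLt
      have hsu : ¬ ((i.succ : Fin (n+2)) : ℕ) < n + 1 := by
        rw [Fin.val_succ]; omega
      simp only [dif_pos hcs, dif_neg hsu]
      have e1 : (⟨((i.castSucc : Fin (n+2)) : ℕ), hcs⟩ : Fin (n+1)) = Fin.last n := by
        ext; simpa using hieq
      rw [e1, hp, γ.part_last]
      have hsm2 : ContDiff ℝ (⊤ : ℕ∞) (fun t : ℝ => η + (2*t - 1) • (η' - η)) :=
        contDiff_const.add (((contDiff_const.mul contDiff_id).sub contDiff_const).smul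
          contDiff_const)
      exact hsm2.contDiffOn.congr hFseg
  · intro t ht
    by_cases h : t ≤ 1/2
    · rw [hFcomp t ⟨ht.1, h⟩]
      exact γ.maps_into _ ⟨by linarith [ht.1], by linarith⟩
    · rw [hFseg t ⟨le_of_not_ge h, ht.2⟩]
      rw [segment_eq_image'] at hseg
      exact hseg ⟨2*t - 1, ⟨by linarith [lt_of_not_ge h], by linarith [ht.2]⟩, rfl⟩
  · rw [hFcomp 0 (by norm_num)]; norm_num; exact γ.source
  · rw [hFseg 1 (by norm_num)]; norm_num

/-- Any two points of an open connected set are joined by a piecewise smooth curve. -/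
theorem nonempty_curve (hΩ_open : IsOpen Ω) (hΩ_conn : IsConnected Ω)
    {ζ η : EuclideanSpace ℝ (Fin m)} (hζ : ζ ∈ Ω) (hη : η ∈ Ω) :
    Nonempty (PiecewiseSmoothCurve Ω ζ η) := by
  set A : Set (EuclideanSpace ℝ (Fin m)) :=
    {x | x ∈ Ω ∧ Nonempty (PiecewiseSmoothCurve Ω ζ x)} with hA
  have hAopen : IsOpen A := by
    rw [Metric.isOpen_iff]
    rintro x ⟨hxΩ, ⟨γ⟩⟩
    obtain ⟨ε, hε, hball⟩ := Metric.isOpen_iff.1 hΩ_open x hxΩ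
    refine ⟨ε, hε, fun y hy => ⟨hball hy, ?_⟩⟩
    exact concat γ (((convex_ball x ε).segment_subset (Metric.mem_ball_self hε) hy).trans hball)
  have hBopen : IsOpen (Ω \ A) := by
    rw [Metric.isOpen_iff]
    rintro x ⟨hxΩ, hxA⟩
    obtain ⟨ε, hε, hball⟩ := Metric.isOpen_iff.1 hΩ_open x hxΩ
    refine ⟨ε, hε, fun y hy => ⟨hball hy, fun hyA => hxA ⟨hxΩ, ?_⟩⟩⟩
    obtain ⟨γ⟩ := hyA.2
    exact concat γ (((convex_ball x ε).segment_subset hy (Metric.mem_ball_self hε)).trans hball)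
  by_contra hcon
  have hηB : η ∈ Ω \ A := ⟨hη, fun h => hcon h.2⟩
  obtain ⟨x, _, hxA, hxB⟩ := hΩ_conn.isPreconnected A (Ω \ A) hAopen hBopen
    (fun x hx => by by_cases h : x ∈ A; exacts [Or.inl h, Or.inr ⟨hx, h⟩])
    ⟨ζ, hζ, hζ, ⟨refl hζ⟩⟩ ⟨η, hη, hηB⟩
  exact hxB.2 hxA

end PSCAux

namespace PSCAux

variable {m : ℕ} {Ω : Set (EuclideanSpace ℝ (Fin m))}

/-- generic integrability helper: `F` agrees on the open interval with a function continuous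
on the closed interval. -/
theorem pieceIntegrable {X : Type*} [NormedAddCommGroup X] {F G : ℝ → X} {a b : ℝ}
    (hab : a ≤ b) (hG : ContinuousOn G (Icc a b)) (heq : ∀ t ∈ Ioo a b, F t = G t) :
    IntervalIntegrable F MeasureTheory.volume a b := by
  rw [intervalIntegrable_iff, uIoc_of_le hab]
  have h1 : MeasureTheory.IntegrableOn G (Ioo a b) :=
    (hG.integrableOn_Icc).mono_set Ioo_subset_Icc_self
  have h2 : MeasureTheory.IntegrableOn F (Ioo a b) :=
    h1.congr_fun (fun t ht => (heq t ht).symm) measurableSet_Ioo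
  exact (integrableOn_Ioc_iff_integrableOn_Ioo).2 h2

theorem wLength_lower_bound {w : EuclideanSpace ℝ (Fin m) → ℝ} {S : ℝ} (hS : 0 < S)
    (hw_pos : ∀ x ∈ Ω, 0 < w x) (hw_cont : ContinuousOn w Ω) (hwS : ∀ x ∈ Ω, w x ≤ S)
    {ζ η : EuclideanSpace ℝ (Fin m)} (γ : PiecewiseSmoothCurve Ω ζ η) :
    ‖ζ - η‖ / S ≤ γ.wLength w := by
  set n := γ.num with hn
  set f := γ.toFun with hf
  set D : ℝ → EuclideanSpace ℝ (Fin m) := fun t => derivWithin f (Icc 0 1) t with hD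
  -- the partition as a function on ℕ
  set q : ℕ → ℝ := fun k => γ.part ⟨min k n, Nat.lt_succ_of_le (min_le_right _ _)⟩ with hq
  have hq0 : q 0 = 0 := by
    have h0 : (⟨min 0 n, Nat.lt_succ_of_le (min_le_right _ _)⟩ : Fin (n+1)) = 0 :=
      Fin.ext (by simp)
    simp only [hq]; rw [h0, γ.part_zero]
  have hqn : q n = 1 := by
    have h0 : (⟨min n n, Nat.lt_succ_of_le (min_le_right _ _)⟩ : Fin (n+1)) = Fin.last n :=
      Fin.ext (by simp [Fin.last])
    simp only [hq]; rw [h0, γ.part_last]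
  have hqmono : Monotone q := by
    intro k l hkl
    exact γ.mono (show (⟨min k n, _⟩ : Fin (n+1)) ≤ ⟨min l n, _⟩ from by
      simp only [Fin.mk_le_mk]; exact min_le_min hkl le_rfl)
  have hq01 : ∀ k, q k ∈ Icc (0:ℝ) 1 := fun k => part_mem γ _
  -- identification of partition points with Fin indices
  have hqcast : ∀ (k : ℕ) (hk : k < n), q k = γ.part (⟨k, hk⟩ : Fin n).castSucc := by
    intro k hk
    have h0 : (⟨min k n, Nat.lt_succ_of_le (min_le_right _ _)⟩ : Fin (n+1)) =
        (⟨k, hk⟩ : Fin n).castSucc := Fin.ext (by simp [min_eq_left hk.le])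
    simp only [hq]; rw [h0]
  have hqsucc : ∀ (k : ℕ) (hk : k < n), q (k+1) = γ.part (⟨k, hk⟩ : Fin n).succ := by
    intro k hk
    have h0 : (⟨min (k+1) n, Nat.lt_succ_of_le (min_le_right _ _)⟩ : Fin (n+1)) =
        (⟨k, hk⟩ : Fin n).succ := Fin.ext (by simp [Fin.val_succ, min_eq_left (show k + 1 ≤ n from hk)])
    simp only [hq]; rw [h0]
  -- key pointwise facts on the interior of each piece
  have hkey : ∀ (k : ℕ) (hk : k < n), ∀ t ∈ Ioo (q k) (q (k+1)),
      DifferentiableAt ℝ f t ∧ D t = deriv f t ∧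
        derivWithin f (Icc (q k) (q (k+1))) t = deriv f t := by
    intro k hk t ht
    have hmem : Icc (q k) (q (k+1)) ∈ nhds t := Icc_mem_nhds ht.1 ht.2
    have hdiff : DifferentiableAt ℝ f t := by
      have h1 : DifferentiableWithinAt ℝ f (Icc (q k) (q (k+1))) t := by
        rw [hqcast k hk, hqsucc k hk]
        exact ((γ.smoothOn ⟨k, hk⟩).differentiableOn (by simp)) t
          ⟨by rw [← hqcast k hk]; exact ht.1.le, by rw [← hqsucc k hk]; exact ht.2.le⟩
      exact h1.differentiableAt hmem
    have ht01 : Icc (0:ℝ) 1 ∈ nhds t :=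
      Icc_mem_nhds (lt_of_le_of_lt (hq01 k).1 ht.1) (lt_of_lt_of_le ht.2 (hq01 (k+1)).2)
    exact ⟨hdiff, derivWithin_of_mem_nhds ht01, derivWithin_of_mem_nhds hmem⟩
  -- continuity of the within-piece derivative
  have hGcont : ∀ (k : ℕ), k < n → q k < q (k+1) →
      ContinuousOn (derivWithin f (Icc (q k) (q (k+1)))) (Icc (q k) (q (k+1))) := by
    intro k hk hlt
    have := (γ.smoothOn ⟨k, hk⟩).continuousOn_derivWithin
      (uniqueDiffOn_Icc (by rw [← hqcast k hk, ← hqsucc k hk]; exact hlt)) (by simp)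
    rw [hqcast k hk, hqsucc k hk]
    exact this
  have hfc : ∀ k : ℕ, ContinuousOn f (Icc (q k) (q (k+1))) := fun k =>
    γ.continuousOn.mono (Icc_subset_Icc (hq01 k).1 (hq01 (k+1)).2)
  -- integrability of each relevant integrand on each piece
  have I1 : ∀ k < n, IntervalIntegrable D MeasureTheory.volume (q k) (q (k+1)) := by
    intro k hk
    rcases eq_or_lt_of_le (hqmono (Nat.le_succ k)) with heq | hlt
    · rw [← heq]
    · exact pieceIntegrable (hqmono (Nat.le_succ k)) (hGcont k hk hlt)
        (fun t ht => ((hkey k hk t ht).2.1).trans ((hkey k hk t ht).2.2).symm)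
  have I2 : ∀ k < n, IntervalIntegrable (fun t => ‖D t‖) MeasureTheory.volume (q k) (q (k+1)) := by
    intro k hk
    rcases eq_or_lt_of_le (hqmono (Nat.le_succ k)) with heq | hlt
    · rw [← heq]
    · exact pieceIntegrable (hqmono (Nat.le_succ k)) ((hGcont k hk hlt).norm)
        (fun t ht => by
          simp only [(hkey k hk t ht).2.1, (hkey k hk t ht).2.2])
  have I3 : ∀ k < n, IntervalIntegrable (fun t => ‖D t‖ / w (f t))
      MeasureTheory.volume (q k) (q (k+1)) := by
    intro k hk
    rcases eq_or_lt_of_le (hqmono (Nat.le_succ k)) with heq | hlt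
    · rw [← heq]
    · refine pieceIntegrable (hqmono (Nat.le_succ k))
        (((hGcont k hk hlt).norm.div ((hw_cont.comp (hfc k) (fun t ht =>
            γ.maps_into t ⟨le_trans (hq01 k).1 ht.1, le_trans ht.2 (hq01 (k+1)).2⟩)))
          (fun t ht => ne_of_gt (hw_pos _ (γ.maps_into t
            ⟨le_trans (hq01 k).1 ht.1, le_trans ht.2 (hq01 (k+1)).2⟩)))) ) ?_
      intro t ht
      simp only [Pi.div_apply, Function.comp_apply, (hkey k hk t ht).2.1,
        (hkey k hk t ht).2.2]
  -- FTC chord bound on each piece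
  have Fbnd : ∀ k < n, ‖f (q (k+1)) - f (q k)‖ ≤ ∫ t in (q k)..(q (k+1)), ‖D t‖ := by
    intro k hk
    rcases eq_or_lt_of_le (hqmono (Nat.le_succ k)) with heq | hlt
    · rw [← heq, sub_self, norm_zero, intervalIntegral.integral_same]
    · have hftc : ∫ t in (q k)..(q (k+1)), D t = f (q (k+1)) - f (q k) := by
        refine intervalIntegral.integral_eq_sub_of_hasDeriv_right_of_le hlt.le (hfc k) ?_ (I1 k hk)
        intro t ht
        obtain ⟨hdiff, hDt, _⟩ := hkey k hk t ht
        rw [hDt]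
        exact hdiff.hasDerivAt.hasDerivWithinAt
      calc ‖f (q (k+1)) - f (q k)‖ = ‖∫ t in (q k)..(q (k+1)), D t‖ := by rw [hftc]
        _ ≤ ∫ t in (q k)..(q (k+1)), ‖D t‖ :=
            intervalIntegral.norm_integral_le_integral_norm hlt.le
  -- glue
  have Itot2 : IntervalIntegrable (fun t => ‖D t‖) MeasureTheory.volume 0 1 := by
    have := IntervalIntegrable.trans_iterate (a := q) (n := n) (fun k hk => I2 k hk)
    rwa [hq0, hqn] at this
  have Itot3 : IntervalIntegrable (fun t => ‖D t‖ / w (f t)) MeasureTheory.volume 0 1 := by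
    have := IntervalIntegrable.trans_iterate (a := q) (n := n) (fun k hk => I3 k hk)
    rwa [hq0, hqn] at this
  have hsum : ∑ k ∈ Finset.range n, ∫ t in (q k)..(q (k+1)), ‖D t‖ = ∫ t in (0:ℝ)..1, ‖D t‖ := by
    have := intervalIntegral.sum_integral_adjacent_intervals (a := q) (n := n)
      (fun k hk => I2 k hk)
    rwa [hq0, hqn] at this
  -- chord ≤ total variation
  have hchord : ‖ζ - η‖ ≤ ∫ t in (0:ℝ)..1, ‖D t‖ := by
    have htel : ∑ k ∈ Finset.range n, (f (q (k+1)) - f (q k)) = η - ζ := by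
      rw [Finset.sum_range_sub (fun k => f (q k)), hq0, hqn]
      rw [hf, γ.source, γ.target]
    calc ‖ζ - η‖ = ‖η - ζ‖ := norm_sub_rev ζ η
      _ = ‖∑ k ∈ Finset.range n, (f (q (k+1)) - f (q k))‖ := by rw [htel]
      _ ≤ ∑ k ∈ Finset.range n, ‖f (q (k+1)) - f (q k)‖ := norm_sum_le _ _
      _ ≤ ∑ k ∈ Finset.range n, ∫ t in (q k)..(q (k+1)), ‖D t‖ :=
          Finset.sum_le_sum (fun k hk => Fbnd k (Finset.mem_range.1 hk))
      _ = ∫ t in (0:ℝ)..1, ‖D t‖ := hsum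
  -- compare the two integrals
  have hmono : ∫ t in (0:ℝ)..1, ‖D t‖ / S ≤ ∫ t in (0:ℝ)..1, ‖D t‖ / w (f t) := by
    refine intervalIntegral.integral_mono_on zero_le_one (Itot2.div_const S) Itot3 ?_
    intro t ht
    have hmem := γ.maps_into t ht
    gcongr
    · exact hw_pos _ hmem
    · exact hwS _ hmem
  have hdiv : ∫ t in (0:ℝ)..1, ‖D t‖ / S = (∫ t in (0:ℝ)..1, ‖D t‖) / S := by
    simp [div_eq_mul_inv, intervalIntegral.integral_mul_const]
  have : ‖ζ - η‖ / S ≤ ∫ t in (0:ℝ)..1, ‖D t‖ / S := by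
    rw [hdiv]; gcongr
  exact this.trans hmono

end PSCAux

namespace PSCAux

variable {m : ℕ} {Ω : Set (EuclideanSpace ℝ (Fin m))}

theorem wDist_lower_bound (hΩ_open : IsOpen Ω) (hΩ_conn : IsConnected Ω)
    {w : EuclideanSpace ℝ (Fin m) → ℝ} {S : ℝ} (hS : 0 < S)
    (hw_pos : ∀ x ∈ Ω, 0 < w x) (hw_cont : ContinuousOn w Ω) (hwS : ∀ x ∈ Ω, w x ≤ S)
    {ζ η : EuclideanSpace ℝ (Fin m)} (hζ : ζ ∈ Ω) (hη : η ∈ Ω) :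
    ‖ζ - η‖ / S ≤ wDist Ω w ζ η := by
  obtain ⟨γ₀⟩ := nonempty_curve hΩ_open hΩ_conn hζ hη
  refine le_csInf ⟨γ₀.wLength w, γ₀, rfl⟩ ?_
  rintro L ⟨γ, rfl⟩
  exact wLength_lower_bound hS hw_pos hw_cont hwS γ

end PSCAux

/-- if `W` is admissible for `w` on a domain `Ω`, then
`sup_{ζ∈Ω} w(ζ) = sup_{ζ≠η} W(ζ,η)`. -/
theorem stmt13 {m : ℕ} (hm : 0 < m) (Ω : Set (EuclideanSpace ℝ (Fin m)))
    (hΩ_open : IsOpen Ω) (hΩ_conn : IsConnected Ω)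
    (w : EuclideanSpace ℝ (Fin m) → ℝ) (hw_pos : ∀ ζ ∈ Ω, 0 < w ζ) (hw_cont : ContinuousOn w Ω)
    (W : EuclideanSpace ℝ (Fin m) → EuclideanSpace ℝ (Fin m) → ℝ) (hW_pos : ∀ ζ ∈ Ω, ∀ η ∈ Ω, 0 < W ζ η)
    (hW_adm : IsAdmissible Ω w W) :
    (⨆ ζ ∈ Ω, ENNReal.ofReal (w ζ)) =
      ⨆ ζ ∈ Ω, ⨆ η ∈ Ω, ⨆ _ : ζ ≠ η, ENNReal.ofReal (W ζ η) := by
  obtain ⟨hW1, hW2, hW3, hW4⟩ := hW_adm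
  haveI : Nontrivial (EuclideanSpace ℝ (Fin m)) := by
    refine nontrivial_of_ne (EuclideanSpace.single ⟨0, hm⟩ 1) 0 ?_
    intro h
    have := congrArg (fun v => v ⟨0, hm⟩) h
    simp [EuclideanSpace.single] at this
  set R : ENNReal := ⨆ ζ ∈ Ω, ⨆ η ∈ Ω, ⨆ _ : ζ ≠ η, ENNReal.ofReal (W ζ η) with hR
  set L : ENNReal := ⨆ ζ ∈ Ω, ENNReal.ofReal (w ζ) with hL
  have hWleR : ∀ ζ ∈ Ω, ∀ η ∈ Ω, ζ ≠ η → ENNReal.ofReal (W ζ η) ≤ R := by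
    intro ζ hζ η hη hne
    calc ENNReal.ofReal (W ζ η) ≤ ⨆ _ : ζ ≠ η, ENNReal.ofReal (W ζ η) :=
          le_iSup (fun _ : ζ ≠ η => ENNReal.ofReal (W ζ η)) hne
      _ ≤ ⨆ η' ∈ Ω, ⨆ _ : ζ ≠ η', ENNReal.ofReal (W ζ η') :=
          le_iSup₂ (f := fun η' (_ : η' ∈ Ω) => ⨆ _ : ζ ≠ η', ENNReal.ofReal (W ζ η')) η hη
      _ ≤ R :=
          le_iSup₂ (f := fun ζ' (_ : ζ' ∈ Ω) =>
            ⨆ η' ∈ Ω, ⨆ _ : ζ' ≠ η', ENNReal.ofReal (W ζ' η')) ζ hζ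
  apply le_antisymm
  · -- L ≤ R, via the liminf condition
    refine iSup₂_le fun ζ hζ => ?_
    -- the punctured filter is nontrivial
    have hfil : nhdsWithin ζ (Ω \ {ζ}) = nhdsWithin ζ ({ζ}ᶜ) := by
      rw [diff_eq, Set.inter_comm, ← nhdsWithin_restrict' _ (hΩ_open.mem_nhds hζ)]
    haveI hne : (nhdsWithin ζ (Ω \ {ζ})).NeBot := by
      rw [hfil]
      exact Module.punctured_nhds_neBot ℝ _ _
    have hmem : ∀ᶠ x in nhdsWithin ζ (Ω \ {ζ}), x ∈ Ω \ {ζ} :=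
      eventually_mem_nhdsWithin
    have hbd : Filter.IsBoundedUnder (· ≥ ·) (nhdsWithin ζ (Ω \ {ζ})) (fun η => W ζ η) :=
      ⟨0, Filter.eventually_map.2 (hmem.mono fun x hx => (hW_pos ζ hζ x hx.1).le)⟩
    refine ENNReal.le_of_forall_pos_le_add fun ε hε _ => ?_
    have hlt : w ζ - ε < liminf (fun η => W ζ η) (nhdsWithin ζ (Ω \ {ζ})) :=
      lt_of_lt_of_le (by linarith [show (0:ℝ) < ε from hε]) (hW3 ζ hζ)
    obtain ⟨x, hx1, hx2⟩ := ((Filter.eventually_lt_of_lt_liminf hlt hbd).and hmem).exists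
    have hxΩ : x ∈ Ω := hx2.1
    have hxne : ζ ≠ x := fun h => hx2.2 h.symm
    have h1 : ENNReal.ofReal (w ζ) ≤ ENNReal.ofReal (W ζ x) + ENNReal.ofReal (ε : ℝ) :=
      le_trans (ENNReal.ofReal_le_ofReal (by linarith [hx1] :
        w ζ ≤ W ζ x + (ε : ℝ))) ENNReal.ofReal_add_le
    calc ENNReal.ofReal (w ζ) ≤ ENNReal.ofReal (W ζ x) + ENNReal.ofReal (ε : ℝ) := h1
      _ ≤ R + ε := by
          gcongr
          · exact hWleR ζ hζ x hxΩ hxne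
          · exact ENNReal.ofReal_coe_nnreal.le
  · -- R ≤ L, via the distance condition
    refine iSup₂_le fun ζ hζ => iSup₂_le fun η hη => iSup_le fun hne => ?_
    by_cases hLtop : L = ⊤
    · rw [hLtop]; exact le_top
    have hwleL : ∀ x ∈ Ω, w x ≤ L.toReal := by
      intro x hx
      have : ENNReal.ofReal (w x) ≤ L :=
        le_iSup₂ (f := fun x' (_ : x' ∈ Ω) => ENNReal.ofReal (w x')) x hx
      exact (ENNReal.ofReal_le_iff_le_toReal hLtop).1 this
    have hSpos : 0 < L.toReal := lt_of_lt_of_le (hw_pos ζ hζ) (hwleL ζ hζ)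
    have hdist : ‖ζ - η‖ / L.toReal ≤ wDist Ω w ζ η :=
      PSCAux.wDist_lower_bound hΩ_open hΩ_conn hSpos hw_pos hw_cont hwleL hζ hη
    have hnorm : (0:ℝ) < ‖ζ - η‖ := by
      rw [norm_pos_iff]
      exact sub_ne_zero_of_ne hne
    have hWle : W ζ η ≤ L.toReal := by
      have h4 := hW4 ζ hζ η hη
      have hWp := hW_pos ζ hζ η hη
      have hd : ‖ζ - η‖ / L.toReal * W ζ η ≤ ‖ζ - η‖ :=
        le_trans (mul_le_mul_of_nonneg_right hdist hWp.le) h4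
      rw [div_mul_eq_mul_div, div_le_iff₀ hSpos] at hd
      nlinarith
    calc ENNReal.ofReal (W ζ η) ≤ ENNReal.ofReal (L.toReal) :=
          ENNReal.ofReal_le_ofReal hWle
      _ = L := ENNReal.ofReal_toReal hLtop
end

section
/- For every continuously differentiable mapping f : B^m → ℝ^n on the unit ball B^m ⊆ ℝ^m, sup_{ζ∈B^m} (1−|ζ|²)‖Df(ζ)‖ = sup_{ζ,η∈B^m, ζ≠η} min{1−|ζ|², 1−|η|²}·|f(ζ)−f(η)|/|ζ−η|. -/
open Set Filter

set_option maxHeartbeats 4000000 in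
/-- for every `C¹` mapping `f : 𝔹^m → ℝⁿ`,
`sup (1−|ζ|²)‖Df(ζ)‖ = sup min(1−|ζ|², 1−|η|²)·|f(ζ)−f(η)|/|ζ−η|`. -/
theorem stmt14 {m n : ℕ} (f : EuclideanSpace ℝ (Fin m) → EuclideanSpace ℝ (Fin n))
    (hf : ContDiffOn ℝ 1 f (Metric.ball (0 : EuclideanSpace ℝ (Fin m)) 1)) :
    (⨆ ζ ∈ Metric.ball (0 : EuclideanSpace ℝ (Fin m)) 1,
        ENNReal.ofReal ((1 - ‖ζ‖ ^ 2) * ‖fderiv ℝ f ζ‖)) =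
      ⨆ ζ ∈ Metric.ball (0 : EuclideanSpace ℝ (Fin m)) 1, ⨆ η ∈ Metric.ball (0 : EuclideanSpace ℝ (Fin m)) 1, ⨆ _ : ζ ≠ η,
        ENNReal.ofReal (min (1 - ‖ζ‖ ^ 2) (1 - ‖η‖ ^ 2) * ‖f ζ - f η‖ / ‖ζ - η‖) := by
  have hdiff : ∀ x ∈ Metric.ball (0 : EuclideanSpace ℝ (Fin m)) 1, DifferentiableAt ℝ f x := by
    intro x hx
    exact (hf.contDiffAt (Metric.isOpen_ball.mem_nhds hx)).differentiableAt one_ne_zero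
  have hball : ∀ x ∈ Metric.ball (0 : EuclideanSpace ℝ (Fin m)) 1, ‖x‖ < 1 := by
    intro x hx; simpa using mem_ball_zero_iff.mp hx
  apply le_antisymm
  · refine iSup₂_le fun ζ hζ => ?_
    set A := fderiv ℝ f ζ with hA
    rcases eq_or_lt_of_le (norm_nonneg A) with h0 | h0
    · rw [← h0, mul_zero]; simp
    · have hζ1 : ‖ζ‖ < 1 := hball ζ hζ
      have ha : 0 < 1 - ‖ζ‖^2 := by nlinarith [norm_nonneg ζ]
      refine ENNReal.le_of_forall_nnreal_lt fun r hr => ?_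
      have hr' : (r:ℝ) < (1 - ‖ζ‖^2) * ‖A‖ := by
        rw [← ENNReal.ofReal_coe_nnreal] at hr
        exact (ENNReal.ofReal_lt_ofReal_iff (mul_pos ha h0)).mp hr
      set a := 1 - ‖ζ‖^2 with haa
      obtain ⟨η, hηB, hηne, hterm⟩ :
          ∃ η ∈ Metric.ball (0 : EuclideanSpace ℝ (Fin m)) 1, ζ ≠ η ∧
            (r:ℝ) ≤ min (1 - ‖ζ‖^2) (1 - ‖η‖^2) * ‖f ζ - f η‖ / ‖ζ - η‖ := by
        set ε0 := a * ‖A‖ - (r:ℝ) with hε0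
        have hε0p : 0 < ε0 := by linarith
        set δ := min (ε0 / (2*a + ‖A‖ + 1)) (min (a/2) (‖A‖/4)) with hδ
        have hδp : 0 < δ := by
          refine lt_min (by positivity) (lt_min (by linarith) (by linarith))
        have hδa : δ ≤ a/2 := le_trans (min_le_right _ _) (min_le_left _ _)
        have hδA : δ ≤ ‖A‖/4 := le_trans (min_le_right _ _) (min_le_right _ _)
        have hδε : δ * (2*a + ‖A‖) ≤ ε0 := by
          have h1 : δ ≤ ε0 / (2*a + ‖A‖ + 1) := min_le_left _ _
          have h2 : (0:ℝ) < 2*a + ‖A‖ + 1 := by nlinarith [norm_nonneg A]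
          rw [le_div_iff₀ h2] at h1
          nlinarith
        have hprod : (r:ℝ) ≤ (a - δ) * (‖A‖ - 2*δ) := by nlinarith [sq_nonneg δ]
        obtain ⟨v, hv1, hvA⟩ := A.exists_lt_apply_of_lt_opNorm (show ‖A‖ - δ < ‖A‖ by linarith)
        have hv0 : v ≠ 0 := by
          intro h; rw [h] at hvA; simp at hvA; linarith
        have hvpos : 0 < ‖v‖ := norm_pos_iff.mpr hv0
        have hlo := ((hdiff ζ hζ).hasFDerivAt).isLittleO.def hδp
        have hmem : ∀ᶠ x in nhds ζ, x ∈ Metric.ball (0:EuclideanSpace ℝ (Fin m)) 1 :=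
          Metric.isOpen_ball.eventually_mem hζ
        have hcont : ContinuousAt (fun x : EuclideanSpace ℝ (Fin m) => 1 - ‖x‖^2) ζ := by
          fun_prop
        have hmin : ∀ᶠ x in nhds ζ, a - δ < 1 - ‖x‖^2 :=
          hcont.eventually (eventually_gt_nhds (by linarith))
        obtain ⟨ρ, hρp, hρ⟩ := Metric.eventually_nhds_iff.mp ((hlo.and hmem).and hmin)
        set t := ρ/2 with ht
        have htp : 0 < t := by linarith
        set η := ζ + t • v with hη
        have hdist : dist η ζ < ρ := by
          rw [dist_eq_norm]
          simp only [hη, add_sub_cancel_left]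
          rw [norm_smul, Real.norm_eq_abs, abs_of_pos htp]
          nlinarith
        obtain ⟨⟨hE1, hE2⟩, hE3⟩ := hρ hdist
        have hsub : η - ζ = t • v := by rw [hη]; abel
        have hnsub : ‖η - ζ‖ = t * ‖v‖ := by
          rw [hsub, norm_smul, Real.norm_eq_abs, abs_of_pos htp]
        have hne : ζ ≠ η := by
          intro h
          have : (0:ℝ) = t * ‖v‖ := by rw [← hnsub, ← h]; simp
          nlinarith
        refine ⟨η, hE2, hne, ?_⟩
        have hAv : ‖A (η - ζ)‖ = t * ‖A v‖ := by
          rw [hsub, map_smul, norm_smul, Real.norm_eq_abs, abs_of_pos htp]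
        have key : ‖A (η-ζ)‖ - ‖f η - f ζ - A (η-ζ)‖ ≤ ‖f η - f ζ‖ := by
          have h := norm_sub_norm_le (A (η-ζ)) (A (η-ζ) - (f η - f ζ))
          rw [sub_sub_cancel] at h
          have hrev : ‖A (η-ζ) - (f η - f ζ)‖ = ‖f η - f ζ - A (η-ζ)‖ := norm_sub_rev _ _
          linarith
        have hE1' : ‖f η - f ζ - A (η - ζ)‖ ≤ δ * ‖η - ζ‖ := hE1
        have hlow : t * (‖A‖ - 2*δ) ≤ ‖f ζ - f η‖ := by
          rw [norm_sub_rev]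
          have h1 : ‖f η - f ζ - A (η-ζ)‖ ≤ δ * (t * ‖v‖) := by rwa [hnsub] at hE1'
          have h2 : t * (‖A‖ - δ) ≤ t * ‖A v‖ :=
            mul_le_mul_of_nonneg_left hvA.le htp.le
          have h3 : δ * (t * ‖v‖) ≤ δ * (t * 1) :=
            mul_le_mul_of_nonneg_left
              (mul_le_mul_of_nonneg_left hv1.le htp.le) hδp.le
          have key' : t * ‖A v‖ - ‖f η - f ζ - A (η-ζ)‖ ≤ ‖f η - f ζ‖ := by
            rw [← hAv]; exact key
          nlinarith
        have hmin' : a - δ ≤ min (1-‖ζ‖^2) (1-‖η‖^2) := le_min (by linarith) (le_of_lt hE3)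
        have hζη : ‖ζ - η‖ = t * ‖v‖ := by rw [norm_sub_rev, hnsub]
        rw [hζη, le_div_iff₀ (by positivity)]
        have hfpos : (0:ℝ) ≤ ‖f ζ - f η‖ := norm_nonneg _
        have hAδ : (0:ℝ) ≤ ‖A‖ - 2*δ := by linarith
        have h6 : (a - δ) * (t * (‖A‖ - 2*δ)) ≤
            min (1-‖ζ‖^2) (1-‖η‖^2) * ‖f ζ - f η‖ :=
          mul_le_mul hmin' hlow (mul_nonneg htp.le hAδ) (by linarith)
        have hrt : (r:ℝ) * (t * ‖v‖) ≤ (r:ℝ) * t := by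
          have : t * ‖v‖ ≤ t := by nlinarith
          exact mul_le_mul_of_nonneg_left this r.coe_nonneg
        have h5 : (r:ℝ) * t ≤ ((a - δ) * (‖A‖ - 2*δ)) * t :=
          mul_le_mul_of_nonneg_right hprod htp.le
        nlinarith
      calc (r : ENNReal) = ENNReal.ofReal (r:ℝ) := ENNReal.ofReal_coe_nnreal.symm
        _ ≤ ENNReal.ofReal (min (1 - ‖ζ‖^2) (1 - ‖η‖^2) * ‖f ζ - f η‖ / ‖ζ - η‖) :=
            ENNReal.ofReal_le_ofReal hterm
        _ ≤ _ := by
          refine le_iSup₂_of_le ζ hζ ?_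
          refine le_iSup₂_of_le η hηB ?_
          exact le_iSup_of_le hηne le_rfl
  · refine iSup₂_le fun ζ hζ => iSup₂_le fun η hη => iSup_le fun hne => ?_
    set S := (⨆ ζ ∈ Metric.ball (0 : EuclideanSpace ℝ (Fin m)) 1,
        ENNReal.ofReal ((1 - ‖ζ‖ ^ 2) * ‖fderiv ℝ f ζ‖)) with hS
    by_cases hStop : S = ⊤
    · rw [hStop]; exact le_top
    have hζ1 : ‖ζ‖ < 1 := hball ζ hζ
    have hη1 : ‖η‖ < 1 := hball η hη
    set c := min (1 - ‖ζ‖^2) (1 - ‖η‖^2) with hc_def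
    have hc : 0 < c := lt_min (by nlinarith [norm_nonneg ζ]) (by nlinarith [norm_nonneg η])
    have hseg : segment ℝ ζ η ⊆ Metric.ball (0:EuclideanSpace ℝ (Fin m)) 1 :=
      (convex_ball (0:EuclideanSpace ℝ (Fin m)) 1).segment_subset hζ hη
    have hbound : ∀ ω ∈ segment ℝ ζ η, ‖fderiv ℝ f ω‖ ≤ S.toReal / c := by
      intro ω hω
      have hωB := hseg hω
      have h1 : ENNReal.ofReal ((1 - ‖ω‖ ^ 2) * ‖fderiv ℝ f ω‖) ≤ S :=
        le_iSup₂_of_le ω hωB le_rfl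
      have h2 : (1 - ‖ω‖^2) * ‖fderiv ℝ f ω‖ ≤ S.toReal :=
        (ENNReal.ofReal_le_iff_le_toReal hStop).mp h1
      have h3 : c ≤ 1 - ‖ω‖^2 := by
        obtain ⟨s, u, hs, hu, hsu, rfl⟩ := hω
        have hn : ‖s • ζ + u • η‖ ≤ s*‖ζ‖ + u*‖η‖ := by
          calc ‖s • ζ + u • η‖ ≤ ‖s • ζ‖ + ‖u • η‖ := norm_add_le _ _
            _ = s*‖ζ‖ + u*‖η‖ := by
                rw [norm_smul, norm_smul, Real.norm_eq_abs, Real.norm_eq_abs,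
                  abs_of_nonneg hs, abs_of_nonneg hu]
        rcases le_total ‖ζ‖ ‖η‖ with h | h
        · have hle : ‖s • ζ + u • η‖ ≤ ‖η‖ := by nlinarith
          have := min_le_right (1 - ‖ζ‖^2) (1 - ‖η‖^2)
          nlinarith [norm_nonneg (s • ζ + u • η), norm_nonneg η]
        · have hle : ‖s • ζ + u • η‖ ≤ ‖ζ‖ := by nlinarith
          have := min_le_left (1 - ‖ζ‖^2) (1 - ‖η‖^2)
          nlinarith [norm_nonneg (s • ζ + u • η), norm_nonneg ζ]
      have hω2 : 0 < 1 - ‖ω‖^2 := lt_of_lt_of_le hc h3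
      rw [le_div_iff₀ hc]
      nlinarith [norm_nonneg (fderiv ℝ f ω)]
    have hmvt : ‖f η - f ζ‖ ≤ (S.toReal / c) * ‖η - ζ‖ :=
      Convex.norm_image_sub_le_of_norm_fderiv_le
        (fun x hx => hdiff x (hseg hx)) hbound (convex_segment ζ η)
        (left_mem_segment ℝ ζ η) (right_mem_segment ℝ ζ η)
    have hd : (0:ℝ) < ‖ζ - η‖ := norm_pos_iff.mpr (sub_ne_zero.mpr hne)
    have hterm : c * ‖f ζ - f η‖ / ‖ζ - η‖ ≤ S.toReal := by
      rw [div_le_iff₀ hd]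
      have h1 : ‖f ζ - f η‖ = ‖f η - f ζ‖ := norm_sub_rev _ _
      have h2 : ‖η - ζ‖ = ‖ζ - η‖ := norm_sub_rev _ _
      have hS0 : (0:ℝ) ≤ S.toReal := ENNReal.toReal_nonneg
      rw [h1]
      have h3 : c * ‖f η - f ζ‖ ≤ c * ((S.toReal / c) * ‖η - ζ‖) :=
        mul_le_mul_of_nonneg_left hmvt hc.le
      have h4 : c * ((S.toReal / c) * ‖η - ζ‖) = S.toReal * ‖ζ - η‖ := by
        rw [h2]; field_simp
      linarith
    calc ENNReal.ofReal (c * ‖f ζ - f η‖ / ‖ζ - η‖) ≤ ENNReal.ofReal S.toReal :=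
          ENNReal.ofReal_le_ofReal hterm
      _ = S := ENNReal.ofReal_toReal hStop
end
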